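/- arXiv:2406.06155 — 10 statements merged into one kernel-verified Lean document; each statement's English description precedes it below -/
import Mathlib

section
/- Let α > 0 and ξ > 0, and set η = 1 + (1+ξ)/α. Define f_α(u) = α(1−u)/(α+u) and g(u) = ξ(u−η)/(u+ξ) for u ≥ 0, and Φ(u) = (η+ξ)·f_α(u) + (1+α)·g(u). Then the function u ↦ (Φ(u)+α+1)/u is integrable on (0,∞) and d₊ := (1/α)·∫₀^∞ (Φ(u)+α+1)/u du = ((1+α)²(1+ξ)/α²)·ln(α/ξ). In particular d₊ = 0 when α = ξ, d₊ > 0 when α > ξ, and d₊ < 0 when α < ξ. -/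
open Real MeasureTheory

lemma aux (a b : ℝ) (hb : 0 < b) (hba : b ≤ a) :
    IntegrableOn (fun u => 1/(u+b) - 1/(u+a)) (Set.Ioi 0) ∧
    ∫ u in Set.Ioi (0:ℝ), (1/(u+b) - 1/(u+a)) = Real.log a - Real.log b := by
  have ha : 0 < a := hb.trans_le hba
  set F : ℝ → ℝ := fun u => Real.log (u+b) - Real.log (u+a) with hF
  have hderiv : ∀ x ∈ Set.Ici (0:ℝ), HasDerivAt F (1/(x+b) - 1/(x+a)) x := by
    intro x hx
    have hx0 : (0:ℝ) ≤ x := hx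
    have h1 : HasDerivAt (fun u : ℝ => u + b) 1 x := (hasDerivAt_id x).add_const b
    have h2 : HasDerivAt (fun u : ℝ => u + a) 1 x := (hasDerivAt_id x).add_const a
    have hb' : x + b ≠ 0 := by positivity
    have ha' : x + a ≠ 0 := by positivity
    exact (h1.log hb').sub (h2.log ha')
  have hpos : ∀ x ∈ Set.Ioi (0:ℝ), 0 ≤ 1/(x+b) - 1/(x+a) := by
    intro x hx
    have hx0 : (0:ℝ) < x := hx
    have : 1/(x+a) ≤ 1/(x+b) :=
      one_div_le_one_div_of_le (by positivity) (by linarith)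
    linarith
  have htend : Filter.Tendsto F Filter.atTop (nhds 0) := by
    have h1 : Filter.Tendsto (fun u : ℝ => (u+b)/(u+a)) Filter.atTop (nhds 1) := by
      have h0 : Filter.Tendsto (fun u : ℝ => (b-a)/(u+a)) Filter.atTop (nhds 0) :=
        Filter.Tendsto.div_atTop tendsto_const_nhds
          (Filter.tendsto_atTop_add_const_right _ a Filter.tendsto_id)
      have := h0.const_add 1
      rw [add_zero] at this
      refine this.congr' ?_
      filter_upwards [Filter.eventually_gt_atTop (0:ℝ)] with u hu
      have : u + a ≠ 0 := by positivity
      field_simp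
      ring
    have hlog := (Real.continuousAt_log one_ne_zero).tendsto.comp h1
    rw [Real.log_one] at hlog
    refine hlog.congr' ?_
    filter_upwards [Filter.eventually_gt_atTop (0:ℝ)] with u hu
    simp only [Function.comp]
    rw [Real.log_div (by positivity) (by positivity)]
  have hInt := integrableOn_Ioi_deriv_of_nonneg' hderiv hpos htend
  have hVal := integral_Ioi_of_hasDerivAt_of_nonneg' hderiv hpos htend
  refine ⟨hInt, ?_⟩
  rw [hVal]
  simp [hF]

lemma aux2 (a b : ℝ) (ha : 0 < a) (hb : 0 < b) :
    IntegrableOn (fun u => 1/(u+b) - 1/(u+a)) (Set.Ioi 0) ∧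
    ∫ u in Set.Ioi (0:ℝ), (1/(u+b) - 1/(u+a)) = Real.log a - Real.log b := by
  rcases le_total b a with h | h
  · exact aux a b hb h
  · obtain ⟨hi, he⟩ := aux b a ha h
    have heq : (fun u : ℝ => 1/(u+b) - 1/(u+a)) = fun u => -(1/(u+a) - 1/(u+b)) := by
      ext u; ring
    constructor
    · rw [heq]; exact hi.neg
    · rw [heq, integral_neg, he]; ring

/-- For the explicit example nonlinearities `f_α(u) = α(1-u)/(α+u)` and
`g(u) = ξ(u-η)/(u+ξ)` with `η = 1 + (1+ξ)/α`, the function `u ↦ (Φ(u)+α+1)/u` is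
integrable on `(0,∞)` and `d₊ = ((1+α)²(1+ξ)/α²)·ln(α/ξ)`; in particular `d₊` vanishes
for `α = ξ`, is positive for `α > ξ` and negative for `α < ξ`. -/
theorem stmt_0 (α ξ : ℝ) (hα : 0 < α) (hξ : 0 < ξ)
    (η : ℝ) (hη : η = 1 + (1 + ξ) / α)
    (f g Φ : ℝ → ℝ)
    (hf : ∀ u, f u = α * (1 - u) / (α + u))
    (hg : ∀ u, g u = ξ * (u - η) / (u + ξ))
    (hΦ : ∀ u, Φ u = (η + ξ) * f u + (1 + α) * g u) :
    IntegrableOn (fun u => (Φ u + α + 1) / u) (Set.Ioi 0) ∧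
    (1 / α) * (∫ u in Set.Ioi (0:ℝ), (Φ u + α + 1) / u)
      = ((1 + α) ^ 2 * (1 + ξ) / α ^ 2) * Real.log (α / ξ) ∧
    (α = ξ → (1 / α) * (∫ u in Set.Ioi (0:ℝ), (Φ u + α + 1) / u) = 0) ∧
    (ξ < α → 0 < (1 / α) * (∫ u in Set.Ioi (0:ℝ), (Φ u + α + 1) / u)) ∧
    (α < ξ → (1 / α) * (∫ u in Set.Ioi (0:ℝ), (Φ u + α + 1) / u) < 0) := by
  set D : ℝ := (1 + α) ^ 2 * (1 + ξ) / α with hD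
  have key : ∀ u ∈ Set.Ioi (0:ℝ),
      (Φ u + α + 1) / u = D * (1/(u+ξ) - 1/(u+α)) := by
    intro u hu
    have hu0 : (0:ℝ) < u := hu
    rw [hΦ, hf, hg, hη]
    have hα' : α ≠ 0 := hα.ne'
    have h1 : α + u ≠ 0 := by positivity
    have h2 : u + ξ ≠ 0 := by positivity
    have h3 : u + α ≠ 0 := by positivity
    rw [hD]
    field_simp
    ring
  obtain ⟨hi, he⟩ := aux2 α ξ hα hξ
  have hInt : IntegrableOn (fun u => (Φ u + α + 1) / u) (Set.Ioi 0) := by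
    have h0 : IntegrableOn (fun u => D * (1/(u+ξ) - 1/(u+α))) (Set.Ioi 0) := hi.const_mul D
    exact h0.congr_fun (fun u hu => (key u hu).symm) measurableSet_Ioi
  have hIval : (∫ u in Set.Ioi (0:ℝ), (Φ u + α + 1) / u)
      = D * (Real.log α - Real.log ξ) := by
    rw [setIntegral_congr_fun measurableSet_Ioi key, integral_const_mul, he]
  have hmain : (1 / α) * (∫ u in Set.Ioi (0:ℝ), (Φ u + α + 1) / u)
      = ((1 + α) ^ 2 * (1 + ξ) / α ^ 2) * Real.log (α / ξ) := by
    have hscal : (1/α) * D = (1 + α) ^ 2 * (1 + ξ) / α ^ 2 := by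
      rw [hD]; field_simp
    rw [hIval, ← mul_assoc, hscal, Real.log_div hα.ne' hξ.ne']
  have hCpos : 0 < (1 + α) ^ 2 * (1 + ξ) / α ^ 2 := by positivity
  refine ⟨hInt, hmain, ?_, ?_, ?_⟩
  · intro h; rw [hmain, h, div_self hξ.ne', Real.log_one, mul_zero]
  · intro h; rw [hmain]
    exact mul_pos hCpos (Real.log_pos ((one_lt_div hξ).2 h))
  · intro h; rw [hmain]
    exact mul_neg_of_pos_of_neg hCpos (Real.log_neg (by positivity) ((div_lt_one hξ).2 h))
end

section
/- Let η > 0, ξ > 0, and let g : [0,∞) → ℝ be continuous with |g(u) + η| ≤ C₀·u for all u ∈ [0,1] and |g(u) − ξ| ≤ C₀/u for all u ≥ 1, for some constant C₀ > 0. Define v₁(τ) = (1−η)·τ + ∫_{−∞}^{τ} (g(e^s) + η) ds and d₁ = ∫₀¹ (g(u)+η)/u du + ∫₁^∞ (g(u)−ξ)/u du. Then the integral defining v₁(τ) converges for every real τ, and there exist constants C₁, C₂ > 0 such that |v₁(τ) − (1−η)·τ| ≤ C₁·e^{τ} for all τ ≤ 0, and |v₁(τ) − ((1+ξ)·τ +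 d₁)| ≤ C₂·e^{−τ} for all τ ≥ 0. -/
open Real MeasureTheory Filter Topology

private lemma aux_cont {g : ℝ → ℝ} (hgc : ContinuousOn g (Set.Ici 0)) :
    Continuous fun s : ℝ => g (Real.exp s) := by
  refine continuous_iff_continuousAt.2 fun s => ?_
  exact (hgc.continuousAt (Ici_mem_nhds (exp_pos s))).comp (continuous_exp.continuousAt)

private lemma aux_contOn {g : ℝ → ℝ} (c : ℝ) (hgc : ContinuousOn g (Set.Ici 0)) :
    ContinuousOn (fun u : ℝ => (g u + c) / u) (Set.Ioi 0) := by
  apply ContinuousOn.div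
  · exact ((hgc.mono (Set.Ioi_subset_Ici le_rfl)).add continuousOn_const)
  · exact continuousOn_id
  · intro x hx; exact ne_of_gt hx

/-- change of variables on the left half line -/
private lemma cov_Iic {g : ℝ → ℝ} (η : ℝ) (hgc : ContinuousOn g (Set.Ici 0))
    (hint : IntegrableOn (fun s => g (Real.exp s) + η) (Set.Iic 0))
    (hintG : IntegrableOn (fun u => (g u + η) / u) (Set.Ioc (0:ℝ) 1)) :
    ∫ u in Set.Ioc (0:ℝ) 1, (g u + η) / u = ∫ s in Set.Iic 0, (g (Real.exp s) + η) := by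
  set G : ℝ → ℝ := fun u => (g u + η) / u with hG
  have hGc : ContinuousOn G (Set.Ioi 0) := aux_contOn η hgc
  -- finite interval change of variables
  have step : ∀ n : ℕ, (∫ s in (-(n:ℝ))..0, (g (Real.exp s) + η))
      = ∫ u in Set.Ioc (Real.exp (-(n:ℝ))) 1, G u := by
    intro n
    have h1 : (∫ s in (-(n:ℝ))..0, (g (Real.exp s) + η))
        = ∫ s in (-(n:ℝ))..0, Real.exp s • (G ∘ Real.exp) s := by
      refine intervalIntegral.integral_congr fun x _ => ?_
      simp only [hG, smul_eq_mul, Function.comp]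
      field_simp
    rw [h1]
    rw [intervalIntegral.integral_comp_smul_deriv'
        (fun x _ => Real.hasDerivAt_exp x) continuousOn_exp
        (hGc.mono ?_)]
    · rw [Real.exp_zero]
      rw [intervalIntegral.integral_of_le
        (Real.exp_le_one_iff.mpr (neg_nonpos.mpr (Nat.cast_nonneg n)) : Real.exp (-(n:ℝ)) ≤ 1)]
    · rintro u ⟨x, _, rfl⟩
      exact exp_pos x
  have htend : Filter.Tendsto (fun n : ℕ => -(n:ℝ)) Filter.atTop Filter.atBot := by
    exact Filter.tendsto_neg_atBot_iff.mpr (tendsto_natCast_atTop_atTop)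
  have t1 : Filter.Tendsto (fun n : ℕ => ∫ s in (-(n:ℝ))..0, (g (Real.exp s) + η))
      Filter.atTop (𝓝 (∫ s in Set.Iic 0, (g (Real.exp s) + η))) :=
    intervalIntegral_tendsto_integral_Iic 0 hint htend
  have hUnion : (⋃ n : ℕ, Set.Ioc (Real.exp (-(n:ℝ))) 1) = Set.Ioc (0:ℝ) 1 := by
    ext x
    simp only [Set.mem_iUnion, Set.mem_Ioc]
    constructor
    · rintro ⟨n, h1, h2⟩; exact ⟨lt_trans (exp_pos _) h1, h2⟩
    · rintro ⟨h1, h2⟩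
      obtain ⟨n, hn⟩ := exists_nat_gt (-Real.log x)
      refine ⟨n, ?_, h2⟩
      rw [← Real.exp_log h1]
      exact Real.exp_lt_exp.2 (by linarith)
  have t2 : Filter.Tendsto (fun n : ℕ => ∫ u in Set.Ioc (Real.exp (-(n:ℝ))) 1, G u)
      Filter.atTop (𝓝 (∫ u in Set.Ioc (0:ℝ) 1, G u)) := by
    have := tendsto_setIntegral_of_monotone (μ := volume) (f := G)
      (s := fun n : ℕ => Set.Ioc (Real.exp (-(n:ℝ))) 1)
      (fun n => measurableSet_Ioc)
      (fun m n hmn => Set.Ioc_subset_Ioc (Real.exp_le_exp.2 (by exact_mod_cast neg_le_neg (Nat.cast_le.2 hmn))) le_rfl)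
      (hUnion ▸ hintG)
    rwa [hUnion] at this
  have := t1.congr (fun n => step n)
  exact tendsto_nhds_unique t2 this

/-- change of variables on the right half line -/
private lemma cov_Ioi {g : ℝ → ℝ} (ξ : ℝ) (hgc : ContinuousOn g (Set.Ici 0))
    (hint : IntegrableOn (fun s => g (Real.exp s) - ξ) (Set.Ici 0))
    (hintG : IntegrableOn (fun u => (g u - ξ) / u) (Set.Ioi (1:ℝ))) :
    ∫ u in Set.Ioi (1:ℝ), (g u - ξ) / u = ∫ s in Set.Ioi (0:ℝ), (g (Real.exp s) - ξ) := by
  set G : ℝ → ℝ := fun u => (g u - ξ) / u with hG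
  have hGc : ContinuousOn G (Set.Ioi 0) := by
    have := aux_contOn (-ξ) hgc
    simpa [hG, sub_eq_add_neg] using this
  have himg1 : Real.exp '' Set.Ici (0:ℝ) ⊆ Set.Ici 1 := by
    rintro u ⟨x, hx, rfl⟩; exact Real.one_le_exp hx
  have himg2 : Real.exp '' Set.Ioi (0:ℝ) ⊆ Set.Ioi 0 := by
    rintro u ⟨x, _, rfl⟩; exact exp_pos x
  have key := MeasureTheory.integral_comp_mul_deriv_Ioi (f := Real.exp) (f' := Real.exp)
    (g := G) (a := 0)
    continuousOn_exp Real.tendsto_exp_atTop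
    (fun x _ => (Real.hasDerivAt_exp x).hasDerivWithinAt)
    (hGc.mono himg2)
    (((integrableOn_Ici_iff_integrableOn_Ioi).mpr hintG).mono_set himg1)
    ?_
  · rw [Real.exp_zero] at key
    rw [← key]
    rw [← integral_Ici_eq_integral_Ioi, ← integral_Ici_eq_integral_Ioi]
    refine setIntegral_congr_fun measurableSet_Ici fun x _ => ?_
    simp only [hG, Function.comp]
    field_simp
  · refine (integrableOn_congr_fun (fun x _ => ?_) measurableSet_Ici).mpr hint
    simp only [hG, Function.comp]
    field_simp

/-- asymptotics of the boundary-layer function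
`v₁(τ) = (1-η)τ + ∫_{-∞}^τ (g(eˢ)+η) ds`: the integral converges for every `τ`,
`v₁(τ) = (1-η)τ + O(e^τ)` as `τ → -∞` and `v₁(τ) = (1+ξ)τ + d₁ + O(e^{-τ})` as `τ → +∞`. -/
theorem stmt_2 (η ξ C₀ : ℝ) (hη : 0 < η) (hξ : 0 < ξ) (hC₀ : 0 < C₀)
    (g : ℝ → ℝ) (hgc : ContinuousOn g (Set.Ici 0))
    (hg0 : ∀ u ∈ Set.Icc (0:ℝ) 1, |g u + η| ≤ C₀ * u)
    (hginf : ∀ u : ℝ, 1 ≤ u → |g u - ξ| ≤ C₀ / u) :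
    (∀ τ : ℝ, IntegrableOn (fun s => g (Real.exp s) + η) (Set.Iic τ)) ∧
    ∃ C₁ > (0:ℝ), ∃ C₂ > (0:ℝ),
      (∀ τ : ℝ, τ ≤ 0 →
        |((1 - η) * τ + ∫ s in Set.Iic τ, (g (Real.exp s) + η)) - (1 - η) * τ|
          ≤ C₁ * Real.exp τ) ∧
      (∀ τ : ℝ, 0 ≤ τ →
        |((1 - η) * τ + ∫ s in Set.Iic τ, (g (Real.exp s) + η))
            - ((1 + ξ) * τ + ((∫ u in Set.Ioc (0:ℝ) 1, (g u + η) / u)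
                + ∫ u in Set.Ioi (1:ℝ), (g u - ξ) / u))|
          ≤ C₂ * Real.exp (-τ)) := by
  have hcont : Continuous fun s : ℝ => g (Real.exp s) + η :=
    (aux_cont hgc).add continuous_const
  have hconth : Continuous fun s : ℝ => g (Real.exp s) - ξ :=
    (aux_cont hgc).sub continuous_const
  -- pointwise bounds
  have hfb : ∀ s : ℝ, s ≤ 0 → |g (Real.exp s) + η| ≤ C₀ * Real.exp s := fun s hs =>
    hg0 _ ⟨(exp_pos s).le, Real.exp_le_one_iff.mpr hs⟩
  have hhb : ∀ s : ℝ, 0 ≤ s → |g (Real.exp s) - ξ| ≤ C₀ * Real.exp (-s) := fun s hs => by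
    have := hginf _ (Real.one_le_exp hs)
    rwa [div_eq_mul_inv, ← Real.exp_neg] at this
  -- integrability on Iic 0
  have int_f : IntegrableOn (fun s => g (Real.exp s) + η) (Set.Iic 0) := by
    refine Integrable.mono' (((integrableOn_exp_Iic 0)).const_mul C₀)
      hcont.aestronglyMeasurable.restrict ?_
    refine (ae_restrict_iff' measurableSet_Iic).mpr (Filter.Eventually.of_forall fun s hs => ?_)
    simpa using hfb s hs
  -- integrability of h on Ici 0
  have int_h : IntegrableOn (fun s => g (Real.exp s) - ξ) (Set.Ici 0) := by
    have hb : IntegrableOn (fun s : ℝ => C₀ * Real.exp (-s)) (Set.Ici 0) := by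
      rw [integrableOn_Ici_iff_integrableOn_Ioi]
      have := (exp_neg_integrableOn_Ioi 0 one_pos).const_mul C₀
      simpa [neg_one_mul, IntegrableOn] using this
    refine Integrable.mono' hb hconth.aestronglyMeasurable.restrict ?_
    refine (ae_restrict_iff' measurableSet_Ici).mpr (Filter.Eventually.of_forall fun s hs => ?_)
    simpa using hhb s hs
  have int_h_Ioi : ∀ τ : ℝ, 0 ≤ τ →
      IntegrableOn (fun s => g (Real.exp s) - ξ) (Set.Ioi τ) := fun τ hτ =>
    (int_h.mono_set (Set.Ioi_subset_Ici hτ))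
  -- part 1
  have part1 : ∀ τ : ℝ, IntegrableOn (fun s => g (Real.exp s) + η) (Set.Iic τ) := by
    intro τ
    refine (int_f.union (hcont.integrableOn_Icc (a := 0) (b := τ))).mono_set fun x hx => ?_
    rcases le_or_gt x 0 with h | h
    · exact Or.inl h
    · exact Or.inr ⟨h.le, hx⟩
  refine ⟨part1, C₀, hC₀, C₀, hC₀, ?_, ?_⟩
  · -- bound for τ ≤ 0
    intro τ hτ
    rw [add_sub_cancel_left]
    calc |∫ s in Set.Iic τ, (g (Real.exp s) + η)|
        ≤ ∫ s in Set.Iic τ, |g (Real.exp s) + η| := by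
          simpa [Real.norm_eq_abs] using
            norm_integral_le_integral_norm (μ := volume.restrict (Set.Iic τ))
              (fun s => g (Real.exp s) + η)
      _ ≤ ∫ s in Set.Iic τ, C₀ * Real.exp s := by
          refine setIntegral_mono_on (part1 τ).abs
            (((integrableOn_exp_Iic τ)).const_mul C₀) measurableSet_Iic fun s hs => ?_
          exact hfb s (le_trans hs hτ)
      _ = C₀ * Real.exp τ := by
          rw [MeasureTheory.integral_const_mul, integral_exp_Iic]
  · -- bound for τ ≥ 0
    intro τ hτ
    -- integrability of the u-integrands
    have hintG1 : IntegrableOn (fun u => (g u + η) / u) (Set.Ioc (0:ℝ) 1) := by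
      refine Integrable.mono'
        ((integrableOn_const (hs := measure_Ioc_lt_top.ne)) :
          IntegrableOn (fun _ : ℝ => C₀) (Set.Ioc (0:ℝ) 1) volume)
        (((aux_contOn η hgc).mono Set.Ioc_subset_Ioi_self).aestronglyMeasurable measurableSet_Ioc) ?_
      refine (ae_restrict_iff' measurableSet_Ioc).mpr (Filter.Eventually.of_forall fun u hu => ?_)
      rw [Real.norm_eq_abs, abs_div, abs_of_pos hu.1, div_le_iff₀ hu.1]
      exact le_trans (hg0 u ⟨hu.1.le, hu.2⟩) (by nlinarith [hu.1, hu.2, hC₀])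
    have hintG2 : IntegrableOn (fun u => (g u - ξ) / u) (Set.Ioi (1:ℝ)) := by
      have hb : IntegrableOn (fun u : ℝ => C₀ * u ^ (-2 : ℝ)) (Set.Ioi (1:ℝ)) :=
        (integrableOn_Ioi_rpow_of_lt (by norm_num) one_pos).const_mul C₀
      refine Integrable.mono' hb ?_ ?_
      · have hc : ContinuousOn (fun u : ℝ => (g u - ξ) / u) (Set.Ioi 0) := by
          have := aux_contOn (-ξ) hgc
          simpa [sub_eq_add_neg] using this
        exact ((hc.mono (t := Set.Ioi 1) fun x hx => lt_trans one_pos hx).aestronglyMeasurable measurableSet_Ioi)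
      refine (ae_restrict_iff' measurableSet_Ioi).mpr (Filter.Eventually.of_forall fun u hu => ?_)
      have hu1 : (1:ℝ) ≤ u := le_of_lt hu
      have hu0 : (0:ℝ) < u := lt_of_lt_of_le one_pos hu1
      rw [Real.norm_eq_abs, abs_div, abs_of_pos hu0, div_le_iff₀ hu0]
      have h1 : |g u - ξ| ≤ C₀ / u := hginf u hu1
      have : C₀ * u ^ (-2:ℝ) * u = C₀ / u := by
        rw [Real.rpow_neg hu0.le]
        rw [show ((2:ℝ) = ((2:ℕ):ℝ)) by norm_num, Real.rpow_natCast]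
        field_simp
      rw [this]; exact h1
    -- change of variables identities
    have e4 : ∫ u in Set.Ioc (0:ℝ) 1, (g u + η) / u
        = ∫ s in Set.Iic 0, (g (Real.exp s) + η) := cov_Iic η hgc int_f hintG1
    have e5 : ∫ u in Set.Ioi (1:ℝ), (g u - ξ) / u
        = ∫ s in Set.Ioi (0:ℝ), (g (Real.exp s) - ξ) := cov_Ioi ξ hgc int_h hintG2
    -- decomposition of the s-integral
    have int_h_Ioc : IntegrableOn (fun s => g (Real.exp s) - ξ) (Set.Ioc 0 τ) :=
      int_h.mono_set ((Set.Ioc_subset_Icc_self).trans Set.Icc_subset_Ici_self)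
    have e1 : ∫ s in Set.Iic τ, (g (Real.exp s) + η)
        = (∫ s in Set.Iic 0, (g (Real.exp s) + η)) + ∫ s in Set.Ioc 0 τ, (g (Real.exp s) + η) := by
      rw [← setIntegral_union (Set.Iic_disjoint_Ioc le_rfl) measurableSet_Ioc int_f
        ((part1 τ).mono_set Set.Ioc_subset_Iic_self)]
      rw [Set.Iic_union_Ioc_eq_Iic hτ]
    have e2 : ∫ s in Set.Ioc 0 τ, (g (Real.exp s) + η)
        = (∫ s in Set.Ioc 0 τ, (g (Real.exp s) - ξ)) + (η + ξ) * τ := by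
      have : ∀ s, g (Real.exp s) + η = (g (Real.exp s) - ξ) + (η + ξ) := fun s => by ring
      rw [setIntegral_congr_fun measurableSet_Ioc (fun s _ => this s)]
      rw [integral_add int_h_Ioc (integrableOn_const (μ := volume) (s := Set.Ioc 0 τ) (C := η + ξ) (hs := measure_Ioc_lt_top.ne))]
      rw [setIntegral_const]
      rw [Measure.real, Real.volume_Ioc, ENNReal.toReal_ofReal (by linarith)]
      simp [smul_eq_mul]
      ring
    have e3 : ∫ s in Set.Ioi (0:ℝ), (g (Real.exp s) - ξ)
        = (∫ s in Set.Ioc 0 τ, (g (Real.exp s) - ξ)) + ∫ s in Set.Ioi τ, (g (Real.exp s) - ξ) := by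
      rw [← setIntegral_union (Set.Ioc_disjoint_Ioi le_rfl) measurableSet_Ioi int_h_Ioc
        (int_h_Ioi τ hτ)]
      rw [Set.Ioc_union_Ioi_eq_Ioi hτ]
    -- the difference equals -∫_{Ioi τ} h
    have key : ((1 - η) * τ + ∫ s in Set.Iic τ, (g (Real.exp s) + η))
        - ((1 + ξ) * τ + ((∫ u in Set.Ioc (0:ℝ) 1, (g u + η) / u)
            + ∫ u in Set.Ioi (1:ℝ), (g u - ξ) / u))
        = -∫ s in Set.Ioi τ, (g (Real.exp s) - ξ) := by
      rw [e1, e2, e4, e5, e3]; ring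
    rw [key, abs_neg]
    have hbInt : IntegrableOn (fun s : ℝ => C₀ * Real.exp (-s)) (Set.Ioi τ) := by
      have := (exp_neg_integrableOn_Ioi τ one_pos).const_mul C₀
      simpa [neg_one_mul, IntegrableOn] using this
    calc |∫ s in Set.Ioi τ, (g (Real.exp s) - ξ)|
        ≤ ∫ s in Set.Ioi τ, |g (Real.exp s) - ξ| := by
          simpa [Real.norm_eq_abs] using
            norm_integral_le_integral_norm (μ := volume.restrict (Set.Ioi τ))
              (fun s => g (Real.exp s) - ξ)
      _ ≤ ∫ s in Set.Ioi τ, C₀ * Real.exp (-s) := by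
          refine setIntegral_mono_on (int_h_Ioi τ hτ).abs hbInt measurableSet_Ioi fun s hs => ?_
          exact hhb s (le_trans hτ (le_of_lt hs))
      _ = C₀ * Real.exp (-τ) := by
          rw [MeasureTheory.integral_const_mul, integral_exp_neg_Ioi]
end

section
/- Let η > 0, ξ > 0, α > 0, d₀ ∈ ℝ, and let g : [0,∞) → ℝ be continuous with |g(u) + η| ≤ C₀·u for all u ∈ [0,1] and |g(u) − ξ| ≤ C₀/u for all u ≥ 1, for some constant C₀ > 0. Define v₂(τ) = (1+ξ)·τ + ∫_{−∞}^{τ} (g(e^{−α·s + d₀}) − ξ) ds and d₁ = ∫₀¹ (g(u)+η)/u du + ∫₁^∞ (g(u)−ξ)/u du. Then the integral defining v₂(τ) converges for every real τ, and there exist constants C₁, C₂ > 0 such that |v₂(τ) − (1+ξ)·τ| ≤ C₁·e^{ατ} for all τ ≤ 0, and |v₂(τ) − ((1−η)·τ + ((η+ξ)·d₀ + d₁)/α)| ≤ C₂·e^{−ατ} for all τ ≥ 0. -/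
open Real MeasureTheory
open scoped Topology
open Set Filter intervalIntegral

/-- Pointwise exponential bound for the integrand. -/
lemma stmt3_aux_bound (η ξ α d₀ C₀ : ℝ) (hη : 0 < η) (hξ : 0 < ξ) (hC₀ : 0 < C₀)
    (g : ℝ → ℝ)
    (hg0 : ∀ u ∈ Set.Icc (0:ℝ) 1, |g u + η| ≤ C₀ * u)
    (hginf : ∀ u : ℝ, 1 ≤ u → |g u - ξ| ≤ C₀ / u) (s : ℝ) :
    |g (Real.exp (-α * s + d₀)) - ξ| ≤ (C₀ + η + ξ) * Real.exp (-d₀) * Real.exp (α * s) := by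
  set u : ℝ := Real.exp (-α * s + d₀) with hu
  have hupos : 0 < u := Real.exp_pos _
  have huinv : u⁻¹ = Real.exp (-d₀) * Real.exp (α * s) := by
    rw [hu, ← Real.exp_neg, ← Real.exp_add]; ring_nf
  rcases le_total 1 u with h1 | h1
  · have := hginf u h1
    have hle : C₀ / u ≤ (C₀ + η + ξ) * u⁻¹ := by
      rw [div_eq_mul_inv]
      have : C₀ ≤ C₀ + η + ξ := by linarith
      exact mul_le_mul_of_nonneg_right this (inv_nonneg.mpr hupos.le)
    calc |g u - ξ| ≤ C₀ / u := this
      _ ≤ (C₀ + η + ξ) * u⁻¹ := hle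
      _ = (C₀ + η + ξ) * Real.exp (-d₀) * Real.exp (α * s) := by rw [huinv]; ring
  · have h2 := hg0 u ⟨hupos.le, h1⟩
    have habs : |g u - ξ| ≤ C₀ + η + ξ := by
      have : |g u - ξ| ≤ |g u + η| + |η + ξ| := by
        have : g u - ξ = (g u + η) - (η + ξ) := by ring
        rw [this]; exact abs_sub _ _
      have hηξ : |η + ξ| = η + ξ := abs_of_pos (by linarith)
      have hCu : C₀ * u ≤ C₀ := by nlinarith
      linarith
    have hone : (1:ℝ) ≤ u⁻¹ := (one_le_inv_iff₀.mpr ⟨hupos, h1⟩)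
    calc |g u - ξ| ≤ C₀ + η + ξ := habs
      _ ≤ (C₀ + η + ξ) * u⁻¹ := by nlinarith
      _ = (C₀ + η + ξ) * Real.exp (-d₀) * Real.exp (α * s) := by rw [huinv]; ring

/-- Integrability and value of `∫_{-∞}^τ e^{αs} ds`. -/
lemma stmt3_aux_exp (α : ℝ) (hα : 0 < α) (τ : ℝ) :
    IntegrableOn (fun s => Real.exp (α * s)) (Set.Iic τ) ∧
      (∫ s in Set.Iic τ, Real.exp (α * s)) = Real.exp (α * τ) / α := by
  have hder : ∀ x : ℝ, HasDerivAt (fun x => Real.exp (α * x) / α) (Real.exp (α * x)) x := by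
    intro x
    have h1 : HasDerivAt (fun x : ℝ => α * x) α x := by
      simpa using (hasDerivAt_id x).const_mul α
    have h2 := (h1.exp).div_const α
    simpa [mul_div_assoc, div_self hα.ne'] using h2
  have hcont : Continuous (fun s : ℝ => Real.exp (α * s)) := by fun_prop
  have key : ∀ y : ℝ, (∫ x in y..τ, Real.exp (α * x)) =
      Real.exp (α * τ) / α - Real.exp (α * y) / α := by
    intro y
    exact intervalIntegral.integral_eq_sub_of_hasDerivAt (fun x _ => hder x)
      (hcont.intervalIntegrable _ _)
  have hint : IntegrableOn (fun s => Real.exp (α * s)) (Set.Iic τ) := by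
    refine integrableOn_Iic_of_intervalIntegral_norm_bounded (Real.exp (α * τ) / α) τ
      (fun y => hcont.integrableOn_Ioc) tendsto_id ?_
    filter_upwards [Iic_mem_atBot τ] with y hy
    simp only [id]
    have : (∫ x in y..τ, ‖Real.exp (α * x)‖) = ∫ x in y..τ, Real.exp (α * x) := by
      simp [Real.norm_eq_abs, abs_of_pos (Real.exp_pos _)]
    rw [this, key y]
    have : 0 < Real.exp (α * y) / α := by positivity
    linarith
  refine ⟨hint, ?_⟩
  have T1 := intervalIntegral_tendsto_integral_Iic τ hint tendsto_id
  have hyb : Tendsto (fun y : ℝ => α * y) atBot atBot := tendsto_id.const_mul_atBot hα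
  have T2 : Tendsto (fun y : ℝ => ∫ x in y..τ, Real.exp (α * x)) atBot
      (𝓝 (Real.exp (α * τ) / α)) := by
    simp_rw [key]
    have h0 : Tendsto (fun y : ℝ => Real.exp (α * y)) atBot (𝓝 0) :=
      Real.tendsto_exp_atBot.comp hyb
    simpa using (tendsto_const_nhds.sub (h0.div_const α))
  exact tendsto_nhds_unique T1 T2

/-- Change of variables `u = e^{-αs+d₀}` on finite intervals. -/
lemma stmt3_aux_subst (η ξ α d₀ C₀ : ℝ) (hα : 0 < α)
    (g : ℝ → ℝ) (hgc : ContinuousOn g (Set.Ici 0)) (a b : ℝ) :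
    (∫ s in a..b, (g (Real.exp (-α * s + d₀)) - ξ)) =
      ∫ u in (Real.exp (-α * b + d₀))..(Real.exp (-α * a + d₀)), (g u - ξ) / (α * u) := by
  set φ : ℝ → ℝ := fun s => Real.exp (-α * s + d₀) with hφ
  set G : ℝ → ℝ := fun u => -((g u - ξ) / (α * u)) with hG
  have hφpos : ∀ s, 0 < φ s := fun s => Real.exp_pos _
  have hderiv : ∀ x ∈ Set.uIcc a b, HasDerivAt φ (Real.exp (-α * x + d₀) * (-α)) x := by
    intro x _
    have h1 : HasDerivAt (fun s : ℝ => -α * s + d₀) (-α) x := by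
      simpa using ((hasDerivAt_id x).const_mul (-α)).add_const d₀
    exact h1.exp
  have hcont' : ContinuousOn (fun x => Real.exp (-α * x + d₀) * (-α)) (Set.uIcc a b) :=
    Continuous.continuousOn (by fun_prop)
  have hGcont : ContinuousOn G (Set.Ioi 0) := by
    apply ContinuousOn.neg
    apply ContinuousOn.div
    · exact (hgc.mono (Set.Ioi_subset_Ici le_rfl)).sub continuousOn_const
    · exact Continuous.continuousOn (by fun_prop)
    · intro x hx
      have : (0:ℝ) < x := hx
      positivity
  have himg : φ '' (Set.uIcc a b) ⊆ Set.Ioi 0 := by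
    rintro y ⟨x, -, rfl⟩
    exact hφpos x
  have hsubst := intervalIntegral.integral_comp_smul_deriv' hderiv hcont' (hGcont.mono himg)
  have hLHS : (∫ x in a..b, (Real.exp (-α * x + d₀) * (-α)) • (G ∘ φ) x) =
      ∫ s in a..b, (g (Real.exp (-α * s + d₀)) - ξ) := by
    apply intervalIntegral.integral_congr
    intro x _
    have hx : (0:ℝ) < Real.exp (-α * x + d₀) := Real.exp_pos _
    simp only [Function.comp, hG, hφ, smul_eq_mul]
    field_simp
  have hRHS : (∫ u in (φ a)..(φ b), G u) =
      ∫ u in (Real.exp (-α * b + d₀))..(Real.exp (-α * a + d₀)), (g u - ξ) / (α * u) := by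
    rw [show (∫ u in (φ a)..(φ b), G u) = -∫ u in (φ a)..(φ b), (g u - ξ) / (α * u) by
      simp [hG, intervalIntegral.integral_neg],
      ← intervalIntegral.integral_symm]
  rw [← hLHS, hsubst, hRHS]

/-- asymptotics of the boundary-layer function
`v₂(τ) = (1+ξ)τ + ∫_{-∞}^τ (g(e^{-αs+d₀})-ξ) ds`: the integral converges for every `τ`,
`v₂(τ) = (1+ξ)τ + O(e^{ατ})` as `τ → -∞` and
`v₂(τ) = (1-η)τ + ((η+ξ)d₀+d₁)/α + O(e^{-ατ})` as `τ → +∞`. -/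
theorem stmt_3 (η ξ α d₀ C₀ : ℝ) (hη : 0 < η) (hξ : 0 < ξ) (hα : 0 < α) (hC₀ : 0 < C₀)
    (g : ℝ → ℝ) (hgc : ContinuousOn g (Set.Ici 0))
    (hg0 : ∀ u ∈ Set.Icc (0:ℝ) 1, |g u + η| ≤ C₀ * u)
    (hginf : ∀ u : ℝ, 1 ≤ u → |g u - ξ| ≤ C₀ / u) :
    (∀ τ : ℝ, IntegrableOn (fun s => g (Real.exp (-α * s + d₀)) - ξ) (Set.Iic τ)) ∧
    ∃ C₁ > (0:ℝ), ∃ C₂ > (0:ℝ),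
      (∀ τ : ℝ, τ ≤ 0 →
        |((1 + ξ) * τ + ∫ s in Set.Iic τ, (g (Real.exp (-α * s + d₀)) - ξ)) - (1 + ξ) * τ|
          ≤ C₁ * Real.exp (α * τ)) ∧
      (∀ τ : ℝ, 0 ≤ τ →
        |((1 + ξ) * τ + ∫ s in Set.Iic τ, (g (Real.exp (-α * s + d₀)) - ξ))
            - ((1 - η) * τ + ((η + ξ) * d₀ + ((∫ u in Set.Ioc (0:ℝ) 1, (g u + η) / u)
                + ∫ u in Set.Ioi (1:ℝ), (g u - ξ) / u)) / α)|
          ≤ C₂ * Real.exp (-α * τ)) := by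
  have hα' : α ≠ 0 := hα.ne'
  have hM : (0:ℝ) < C₀ + η + ξ := by positivity
  -- pointwise bound with constant K
  have hb : ∀ s : ℝ, |g (Real.exp (-α * s + d₀)) - ξ| ≤
      ((C₀ + η + ξ) * Real.exp (-d₀)) * Real.exp (α * s) :=
    stmt3_aux_bound η ξ α d₀ C₀ hη hξ hC₀ g hg0 hginf
  -- continuity of the integrand
  have hcont : Continuous (fun s => g (Real.exp (-α * s + d₀)) - ξ) := by
    have hφc : Continuous (fun s : ℝ => Real.exp (-α * s + d₀)) := by fun_prop
    have h1 : Continuous fun s => g (Real.exp (-α * s + d₀)) :=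
      continuous_iff_continuousAt.mpr fun s =>
        ContinuousAt.comp (x := s) (g := g) (f := fun s : ℝ => Real.exp (-α * s + d₀))
          (hgc.continuousAt (Ici_mem_nhds (Real.exp_pos _))) hφc.continuousAt
    exact h1.sub continuous_const
  -- integrability on every Iic τ
  have hInt : ∀ τ : ℝ, IntegrableOn (fun s => g (Real.exp (-α * s + d₀)) - ξ) (Set.Iic τ) := by
    intro τ
    refine Integrable.mono' (((stmt3_aux_exp α hα τ).1).const_mul ((C₀ + η + ξ) * Real.exp (-d₀)))
      hcont.aestronglyMeasurable.restrict (ae_of_all _ fun s => ?_)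
    simpa [Real.norm_eq_abs, mul_assoc] using hb s
  -- first bound
  have hbound1 : ∀ τ : ℝ, |∫ s in Set.Iic τ, (g (Real.exp (-α * s + d₀)) - ξ)| ≤
      ((C₀ + η + ξ) * Real.exp (-d₀) / α) * Real.exp (α * τ) := by
    intro τ
    have h1 : |∫ s in Set.Iic τ, (g (Real.exp (-α * s + d₀)) - ξ)| ≤
        ∫ s in Set.Iic τ, |g (Real.exp (-α * s + d₀)) - ξ| := by
      simpa [Real.norm_eq_abs] using norm_integral_le_integral_norm
        (μ := volume.restrict (Set.Iic τ)) (fun s => g (Real.exp (-α * s + d₀)) - ξ)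
    have h2 : (∫ s in Set.Iic τ, |g (Real.exp (-α * s + d₀)) - ξ|) ≤
        ∫ s in Set.Iic τ, ((C₀ + η + ξ) * Real.exp (-d₀)) * Real.exp (α * s) :=
      setIntegral_mono_on (hInt τ).abs
        (((stmt3_aux_exp α hα τ).1).const_mul ((C₀ + η + ξ) * Real.exp (-d₀)))
        measurableSet_Iic (fun s _ => hb s)
    have h3 : (∫ s in Set.Iic τ, ((C₀ + η + ξ) * Real.exp (-d₀)) * Real.exp (α * s)) =
        ((C₀ + η + ξ) * Real.exp (-d₀)) * (Real.exp (α * τ) / α) := by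
      rw [MeasureTheory.integral_const_mul, (stmt3_aux_exp α hα τ).2]
    calc |∫ s in Set.Iic τ, (g (Real.exp (-α * s + d₀)) - ξ)|
        ≤ ∫ s in Set.Iic τ, ((C₀ + η + ξ) * Real.exp (-d₀)) * Real.exp (α * s) :=
          le_trans h1 h2
      _ = ((C₀ + η + ξ) * Real.exp (-d₀) / α) * Real.exp (α * τ) := by rw [h3]; ring
  -- φ(d₀/α) = 1
  have hφτ₀ : Real.exp (-α * (d₀ / α) + d₀) = 1 := by
    have : -α * (d₀ / α) + d₀ = 0 := by field_simp; ring
    rw [this, Real.exp_zero]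
  -- pointwise rescaling of the substituted integrand
  have hsplitα : ∀ x u : ℝ, x / (α * u) = α⁻¹ * (x / u) := by
    intro x u
    rw [mul_comm, ← div_div, div_eq_inv_mul]
  -- integrability of (g-ξ)/u on (1,∞)
  have hIntA : IntegrableOn (fun u => (g u - ξ) / u) (Set.Ioi 1) := by
    have hmeas : AEStronglyMeasurable (fun u => (g u - ξ) / u)
        (volume.restrict (Set.Ioi 1)) := by
      apply ContinuousOn.aestronglyMeasurable _ measurableSet_Ioi
      apply ContinuousOn.div
      · exact (hgc.mono (fun x hx => Set.mem_Ici.mpr (le_trans zero_le_one (le_of_lt (Set.mem_Ioi.mp hx))))).sub continuousOn_const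
      · exact continuousOn_id
      · exact fun x hx => ne_of_gt (lt_trans one_pos hx)
    refine Integrable.mono'
      ((integrableOn_Ioi_rpow_of_lt (show (-2:ℝ) < -1 by norm_num) one_pos).const_mul C₀)
      hmeas (((ae_restrict_iff' measurableSet_Ioi).mpr (ae_of_all _ fun u hu => ?_)))
    have hu1 : (1:ℝ) < u := hu
    have hu0 : (0:ℝ) < u := lt_trans one_pos hu1
    have hpow : u ^ (-2:ℝ) = (u ^ 2)⁻¹ := by
      rw [show (-2:ℝ) = -((2:ℕ):ℝ) by norm_num, Real.rpow_neg hu0.le, Real.rpow_natCast]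
    rw [Real.norm_eq_abs, abs_div, abs_of_pos hu0, hpow]
    have h4 : |g u - ξ| / u ≤ (C₀ / u) / u := by gcongr; exact hginf u hu1.le
    calc |g u - ξ| / u ≤ (C₀ / u) / u := h4
      _ = C₀ * (u ^ 2)⁻¹ := by rw [div_div, ← sq, div_eq_mul_inv]
  have hIntGα : IntegrableOn (fun u => (g u - ξ) / (α * u)) (Set.Ioi 1) := by
    simp_rw [hsplitα]
    exact hIntA.const_mul α⁻¹
  have hGval : (∫ u in Set.Ioi (1:ℝ), (g u - ξ) / (α * u)) =
      α⁻¹ * ∫ u in Set.Ioi (1:ℝ), (g u - ξ) / u := by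
    simp_rw [hsplitα]
    exact MeasureTheory.integral_const_mul _ _
  -- φ tends to +∞ at -∞
  have hφ_tendsto : Tendsto (fun y : ℝ => Real.exp (-α * y + d₀)) atBot atTop := by
    apply Real.tendsto_exp_atTop.comp
    apply tendsto_atTop_add_const_right
    have h1 : Tendsto (fun y : ℝ => α * -y) atBot atTop :=
      tendsto_neg_atBot_atTop.const_mul_atTop hα
    exact h1.congr fun y => by ring
  -- value of the integral over Iic (d₀/α)
  have hI₀ : (∫ s in Set.Iic (d₀ / α), (g (Real.exp (-α * s + d₀)) - ξ)) =
      α⁻¹ * ∫ u in Set.Ioi (1:ℝ), (g u - ξ) / u := by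
    have T1 := intervalIntegral_tendsto_integral_Iic (d₀ / α) (hInt (d₀ / α)) tendsto_id
    have T2 : Tendsto (fun y : ℝ => ∫ s in y..(d₀ / α), (g (Real.exp (-α * s + d₀)) - ξ)) atBot
        (𝓝 (∫ u in Set.Ioi (1:ℝ), (g u - ξ) / (α * u))) := by
      have h5 := (intervalIntegral_tendsto_integral_Ioi 1 hIntGα tendsto_id).comp hφ_tendsto
      refine h5.congr fun y => ?_
      simp only [Function.comp_apply, id]
      rw [stmt3_aux_subst η ξ α d₀ C₀ hα g hgc y (d₀ / α), hφτ₀]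
    rw [← hGval]
    exact tendsto_nhds_unique T1 T2
  -- splitting Iic τ
  have hsplit : ∀ τ : ℝ, (∫ s in Set.Iic τ, (g (Real.exp (-α * s + d₀)) - ξ)) =
      (∫ s in Set.Iic (d₀ / α), (g (Real.exp (-α * s + d₀)) - ξ)) +
        ∫ s in (d₀ / α)..τ, (g (Real.exp (-α * s + d₀)) - ξ) := by
    intro τ
    have := intervalIntegral.integral_Iic_sub_Iic (hInt (d₀ / α)) (hInt τ)
    linarith
  -- uniform bound for (g u + η)/u on (0,∞)
  have hMb : ∀ u : ℝ, 0 < u → |(g u + η) / u| ≤ C₀ + η + ξ := by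
    intro u hu
    rw [abs_div, abs_of_pos hu, div_le_iff₀ hu]
    rcases le_total u 1 with h1 | h1
    · have := hg0 u ⟨hu.le, h1⟩
      nlinarith
    · have h2 : |g u + η| ≤ |g u - ξ| + |η + ξ| := by
        have h3 : g u + η = (g u - ξ) + (η + ξ) := by ring
        rw [h3]; exact abs_add_le _ _
      have h4 := hginf u h1
      have h5 : C₀ / u ≤ C₀ * u := by
        rw [div_le_iff₀ hu]
        nlinarith [mul_nonneg (mul_nonneg hC₀.le (sub_nonneg.mpr h1))
          (by linarith : (0:ℝ) ≤ u + 1)]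
      have h6 : |η + ξ| = η + ξ := abs_of_pos (by linarith)
      nlinarith
  -- integrability of (g u + η)/u on (0, y]
  have hIntF : ∀ y : ℝ, 0 < y → IntegrableOn (fun u => (g u + η) / u) (Set.Ioc 0 y) := by
    intro y hy
    have hmeas : AEStronglyMeasurable (fun u => (g u + η) / u)
        (volume.restrict (Set.Ioc 0 y)) := by
      apply ContinuousOn.aestronglyMeasurable _ measurableSet_Ioc
      apply ContinuousOn.div
      · exact (hgc.mono (fun x hx => hx.1.le)).add continuousOn_const
      · exact continuousOn_id
      · exact fun x hx => hx.1.ne'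
    have hconst : IntegrableOn (fun _ : ℝ => C₀ + η + ξ) (Set.Ioc 0 y) volume :=
      integrableOn_const measure_Ioc_lt_top.ne
    refine Integrable.mono' hconst
      hmeas (((ae_restrict_iff' measurableSet_Ioc).mpr (ae_of_all _ fun u hu => ?_)))
    rw [Real.norm_eq_abs]
    exact hMb u hu.1
  -- bound on the error integral
  have hE_bound : ∀ τ : ℝ, |∫ u in Set.Ioc (0:ℝ) (Real.exp (-α * τ + d₀)), (g u + η) / u| ≤
      (C₀ + η + ξ) * Real.exp (-α * τ + d₀) := by
    intro τ
    have hx : (0:ℝ) < Real.exp (-α * τ + d₀) := Real.exp_pos _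
    have h1 := norm_setIntegral_le_of_norm_le_const (μ := volume)
      (s := Set.Ioc (0:ℝ) (Real.exp (-α * τ + d₀))) (f := fun u => (g u + η) / u)
      (C := C₀ + η + ξ) measure_Ioc_lt_top
      (fun x hxx => by rw [Real.norm_eq_abs]; exact hMb x hxx.1)
    rw [Real.norm_eq_abs] at h1
    calc |∫ u in Set.Ioc (0:ℝ) (Real.exp (-α * τ + d₀)), (g u + η) / u|
        ≤ (C₀ + η + ξ) * (volume (Set.Ioc (0:ℝ) (Real.exp (-α * τ + d₀)))).toReal := h1
      _ = (C₀ + η + ξ) * Real.exp (-α * τ + d₀) := by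
          rw [Real.volume_Ioc, ENNReal.toReal_ofReal (by linarith), sub_zero]
  -- decomposition of the interval integral of (g+η)/u
  have hBE : ∀ τ : ℝ, (∫ u in (Real.exp (-α * τ + d₀))..1, (g u + η) / u) =
      (∫ u in Set.Ioc (0:ℝ) 1, (g u + η) / u) -
        ∫ u in Set.Ioc (0:ℝ) (Real.exp (-α * τ + d₀)), (g u + η) / u := by
    intro τ
    set x : ℝ := Real.exp (-α * τ + d₀) with hxdef
    have hx : (0:ℝ) < x := Real.exp_pos _
    rcases le_total x 1 with hx1 | hx1
    · rw [intervalIntegral.integral_of_le hx1]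
      have hu := setIntegral_union (μ := volume) (f := fun u => (g u + η) / u)
        (Set.Ioc_disjoint_Ioc_of_le le_rfl) measurableSet_Ioc
        ((hIntF 1 one_pos).mono_set (Set.Ioc_subset_Ioc_right hx1))
        ((hIntF 1 one_pos).mono_set (Set.Ioc_subset_Ioc_left hx.le))
      rw [Set.Ioc_union_Ioc_eq_Ioc hx.le hx1] at hu
      linarith
    · rw [intervalIntegral.integral_symm, intervalIntegral.integral_of_le hx1]
      have hu := setIntegral_union (μ := volume) (f := fun u => (g u + η) / u)
        (Set.Ioc_disjoint_Ioc_of_le le_rfl) measurableSet_Ioc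
        ((hIntF x hx).mono_set (Set.Ioc_subset_Ioc_right hx1))
        ((hIntF x hx).mono_set (Set.Ioc_subset_Ioc_left zero_le_one))
      rw [Set.Ioc_union_Ioc_eq_Ioc zero_le_one hx1] at hu
      linarith
  -- logarithmic integral
  have hlog : ∀ τ : ℝ, (∫ u in (Real.exp (-α * τ + d₀))..1, 1 / u) = α * τ - d₀ := by
    intro τ
    have hx : (0:ℝ) < Real.exp (-α * τ + d₀) := Real.exp_pos _
    have h0 : (0:ℝ) ∉ Set.uIcc (Real.exp (-α * τ + d₀)) 1 := by
      intro hmem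
      rcases Set.mem_uIcc.mp hmem with ⟨h1, h2⟩ | ⟨h1, h2⟩ <;> linarith
    rw [integral_one_div h0, one_div, Real.log_inv, Real.log_exp]
    ring
  -- key identity
  have hkey : ∀ τ : ℝ, (∫ s in Set.Iic τ, (g (Real.exp (-α * s + d₀)) - ξ)) =
      α⁻¹ * (∫ u in Set.Ioi (1:ℝ), (g u - ξ) / u) +
        α⁻¹ * ((∫ u in Set.Ioc (0:ℝ) 1, (g u + η) / u) -
          ∫ u in Set.Ioc (0:ℝ) (Real.exp (-α * τ + d₀)), (g u + η) / u) -
        α⁻¹ * (η + ξ) * (α * τ - d₀) := by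
    intro τ
    have hx : (0:ℝ) < Real.exp (-α * τ + d₀) := Real.exp_pos _
    have hsub : Set.uIcc (Real.exp (-α * τ + d₀)) 1 ⊆ Set.Ioi 0 := by
      intro t ht
      rcases Set.mem_uIcc.mp ht with ⟨h1, h2⟩ | ⟨h1, h2⟩ <;>
        · simp only [Set.mem_Ioi]; linarith
    have hContOn : ContinuousOn (fun u => (g u + η) / u)
        (Set.uIcc (Real.exp (-α * τ + d₀)) 1) := by
      apply ContinuousOn.div
      · exact (hgc.mono (fun t ht => Set.mem_Ici.mpr (le_of_lt (Set.mem_Ioi.mp (hsub ht))))).add continuousOn_const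
      · exact continuousOn_id
      · exact fun t ht => ne_of_gt (hsub ht)
    have hi1 : IntervalIntegrable (fun u => (g u + η) / u) volume
        (Real.exp (-α * τ + d₀)) 1 := hContOn.intervalIntegrable
    have hi2 : IntervalIntegrable (fun u : ℝ => 1 / u) volume
        (Real.exp (-α * τ + d₀)) 1 :=
      intervalIntegral.intervalIntegrable_one_div (fun t ht => ne_of_gt (hsub ht))
        continuousOn_id
    have hfun : ∀ u : ℝ, (g u - ξ) / (α * u) =
        α⁻¹ * ((g u + η) / u) - (α⁻¹ * (η + ξ)) * (1 / u) := by
      intro u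
      rcases eq_or_ne u 0 with rfl | hu
      · simp
      · field_simp
        ring
    have hIdecomp : (∫ u in (Real.exp (-α * τ + d₀))..1, (g u - ξ) / (α * u)) =
        α⁻¹ * (∫ u in (Real.exp (-α * τ + d₀))..1, (g u + η) / u) -
          (α⁻¹ * (η + ξ)) * ∫ u in (Real.exp (-α * τ + d₀))..1, 1 / u := by
      simp_rw [hfun]
      rw [intervalIntegral.integral_sub (hi1.const_mul α⁻¹) (hi2.const_mul (α⁻¹ * (η + ξ))),
        intervalIntegral.integral_const_mul, intervalIntegral.integral_const_mul]
    have hmid : (∫ s in (d₀ / α)..τ, (g (Real.exp (-α * s + d₀)) - ξ)) =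
        ∫ u in (Real.exp (-α * τ + d₀))..1, (g u - ξ) / (α * u) := by
      rw [stmt3_aux_subst η ξ α d₀ C₀ hα g hgc (d₀ / α) τ, hφτ₀]
    rw [hsplit τ, hI₀, hmid, hIdecomp, hBE τ, hlog τ]
    ring
  -- conclusion
  refine ⟨hInt, (C₀ + η + ξ) * Real.exp (-d₀) / α, by positivity,
    (C₀ + η + ξ) * Real.exp d₀ / α, by positivity, ?_, ?_⟩
  · intro τ _
    rw [add_sub_cancel_left]
    exact hbound1 τ
  · intro τ _
    rw [hkey τ]
    have hEb := hE_bound τ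
    set Ai := (∫ u in Set.Ioi (1:ℝ), (g u - ξ) / u) with hAi
    set Bi := (∫ u in Set.Ioc (0:ℝ) 1, (g u + η) / u) with hBi
    set Ei := (∫ u in Set.Ioc (0:ℝ) (Real.exp (-α * τ + d₀)), (g u + η) / u) with hEi
    have hexpand : ((1 + ξ) * τ + (α⁻¹ * Ai + α⁻¹ * (Bi - Ei) - α⁻¹ * (η + ξ) * (α * τ - d₀))) -
        ((1 - η) * τ + ((η + ξ) * d₀ + (Bi + Ai)) / α) = -(α⁻¹ * Ei) := by
      field_simp
      ring
    rw [hexpand, abs_neg, abs_mul, abs_of_pos (inv_pos.mpr hα)]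
    calc α⁻¹ * |Ei|
        ≤ α⁻¹ * ((C₀ + η + ξ) * Real.exp (-α * τ + d₀)) :=
          mul_le_mul_of_nonneg_left hEb (inv_pos.mpr hα).le
      _ = (C₀ + η + ξ) * Real.exp d₀ / α * Real.exp (-α * τ) := by
          rw [Real.exp_add]
          ring
end

section
/- Let β > 0, ξ > 0, d₁ ∈ ℝ, and let f : [0,∞) → ℝ be continuous with |f(u) − 1| ≤ C₀·u for all u ∈ [0,1] and |f(u) + β| ≤ C₀/u for all u ≥ 1, for some constant C₀ > 0. Define w₁(τ) = ∫_{−∞}^{τ} (f(e^{(ξ+1)·θ + d₁}) − 1) dθ, d₂ = ∫₀¹ (f(u)−1)/u du + ∫₁^∞ (f(u)+β)/u du and d₃ = (d₂ − d₁(β+1))/(ξ+1). Then the integral defining w₁(τ) converges for every real τ, and there exist constants C₁, C₂ > 0 such that |w₁(τ)| ≤ C₁·e^{(1+ξ)τ} for all τ ≤ 0, and |w₁(τ) + (β+1)·τ − d₃| ≤ C₂·e^{−(ξ+1)τ} for all τ ≥ 0. -/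
open Real MeasureTheory

open Real MeasureTheory Set Filter Topology

lemma exp_affine_Iic {k : ℝ} (hk : 0 < k) (d τ : ℝ) :
    IntegrableOn (fun θ => Real.exp (k * θ + d)) (Set.Iic τ) ∧
    ∫ θ in Set.Iic τ, Real.exp (k * θ + d) = Real.exp (k * τ + d) / k := by
  have hderiv : ∀ x : ℝ, HasDerivAt (fun x => Real.exp (k * x + d) / k)
      (Real.exp (k * x + d)) x := by
    intro x
    have h1 : HasDerivAt (fun x : ℝ => k * x + d) k x :=
      by simpa using (((hasDerivAt_id x).const_mul k).add_const d)
    have := (h1.exp).div_const k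
    simpa [mul_div_assoc, mul_div_cancel_right₀, hk.ne'] using this
  have hci : ∀ a b : ℝ, IntervalIntegrable (fun θ => Real.exp (k * θ + d)) volume a b :=
    fun a b => (Real.continuous_exp.comp (by continuity)).intervalIntegrable a b
  have hval : ∀ a : ℝ, ∫ x in a..τ, Real.exp (k * x + d)
      = Real.exp (k * τ + d) / k - Real.exp (k * a + d) / k := by
    intro a
    exact intervalIntegral.integral_eq_sub_of_hasDerivAt (fun x _ => hderiv x) (hci a τ)
  have hint : IntegrableOn (fun θ => Real.exp (k * θ + d)) (Set.Iic τ) := by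
    apply integrableOn_Iic_of_intervalIntegral_norm_bounded
      (Real.exp (k * τ + d) / k) τ
      (fun i : ℝ => ((hci i τ).1).mono_set (by simp [Set.Ioc_subset_Ioc_left, min_le_left]))
      tendsto_id
    filter_upwards with a
    have : ∫ x in a..τ, ‖Real.exp (k * x + d)‖ = ∫ x in a..τ, Real.exp (k * x + d) := by
      simp [Real.norm_eq_abs, abs_of_pos (Real.exp_pos _)]
    rw [show (id a : ℝ) = a from rfl, this, hval a]
    have := (Real.exp_pos (k * a + d)).le
    have h2 : 0 < k := hk
    nlinarith [div_nonneg this h2.le]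
  refine ⟨hint, ?_⟩
  have h1 : Tendsto (fun a : ℝ => ∫ x in a..τ, Real.exp (k * x + d)) atBot
      (𝓝 (∫ x in Set.Iic τ, Real.exp (k * x + d))) :=
    intervalIntegral_tendsto_integral_Iic τ hint tendsto_id
  have h2 : Tendsto (fun a : ℝ => ∫ x in a..τ, Real.exp (k * x + d)) atBot
      (𝓝 (Real.exp (k * τ + d) / k)) := by
    simp_rw [hval]
    have h3 : Tendsto (fun a : ℝ => Real.exp (k * a + d) / k) atBot (𝓝 0) := by
      have : Tendsto (fun a : ℝ => k * a + d) atBot atBot := by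
        apply Filter.tendsto_atBot_add_const_right
        exact (tendsto_const_mul_atBot_of_pos hk).2 tendsto_id
      simpa using (Real.tendsto_exp_atBot.comp this).div_const k
    simpa using (tendsto_const_nhds (x := Real.exp (k * τ + d) / k)).sub h3
  exact tendsto_nhds_unique h1 h2

set_option maxHeartbeats 1000000 in
/-- asymptotics of the boundary-layer function
`w₁(τ) = ∫_{-∞}^τ (f(e^{(ξ+1)θ+d₁})-1) dθ`: the integral converges for every `τ`,
`w₁(τ) = O(e^{(1+ξ)τ})` as `τ → -∞` and
`w₁(τ) = -(β+1)τ + d₃ + O(e^{-(ξ+1)τ})` as `τ → +∞`, where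
`d₃ = (d₂ - d₁(β+1))/(ξ+1)`. -/
theorem stmt_4 (β ξ d₁ C₀ : ℝ) (hβ : 0 < β) (hξ : 0 < ξ) (hC₀ : 0 < C₀)
    (f : ℝ → ℝ) (hfc : ContinuousOn f (Set.Ici 0))
    (hf0 : ∀ u ∈ Set.Icc (0:ℝ) 1, |f u - 1| ≤ C₀ * u)
    (hfinf : ∀ u : ℝ, 1 ≤ u → |f u + β| ≤ C₀ / u) :
    (∀ τ : ℝ, IntegrableOn (fun θ => f (Real.exp ((ξ + 1) * θ + d₁)) - 1) (Set.Iic τ)) ∧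
    ∃ C₁ > (0:ℝ), ∃ C₂ > (0:ℝ),
      (∀ τ : ℝ, τ ≤ 0 →
        |∫ θ in Set.Iic τ, (f (Real.exp ((ξ + 1) * θ + d₁)) - 1)|
          ≤ C₁ * Real.exp ((1 + ξ) * τ)) ∧
      (∀ τ : ℝ, 0 ≤ τ →
        |(∫ θ in Set.Iic τ, (f (Real.exp ((ξ + 1) * θ + d₁)) - 1)) + (β + 1) * τ
            - (((∫ u in Set.Ioc (0:ℝ) 1, (f u - 1) / u)
                + ∫ u in Set.Ioi (1:ℝ), (f u + β) / u) - d₁ * (β + 1)) / (ξ + 1)|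
          ≤ C₂ * Real.exp (-(ξ + 1) * τ)) := by
  have hk : (0:ℝ) < ξ + 1 := by linarith
  have hfb : ∀ x : ℝ, 0 < x → |f x - 1| ≤ (C₀ + β + 1) * x := by
    intro x hx
    rcases le_total x 1 with h | h
    · have := hf0 x ⟨hx.le, h⟩; nlinarith [abs_nonneg (f x - 1)]
    · have h1 := hfinf x h
      have h2 : |f x - 1| ≤ |f x + β| + |β + 1| := by
        have h3 : f x - 1 = (f x + β) + (-(β + 1)) := by ring
        rw [h3]
        exact (abs_add_le _ _).trans (by rw [abs_neg])
      have h3 : C₀ / x ≤ C₀ := by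
        rw [div_le_iff₀ hx]; nlinarith
      have hb1 : |β + 1| = β + 1 := abs_of_pos (by linarith)
      nlinarith
  set g : ℝ → ℝ := fun θ => f (Real.exp ((ξ + 1) * θ + d₁)) - 1 with hgdef
  have hgb : ∀ θ, ‖g θ‖ ≤ (C₀ + β + 1) * Real.exp ((ξ+1)*θ + d₁) := fun θ => by
    simpa [hgdef, Real.norm_eq_abs] using hfb _ (Real.exp_pos ((ξ+1)*θ + d₁))
  have hgc : Continuous g := by
    apply Continuous.sub _ continuous_const
    exact hfc.comp_continuous (by continuity) (fun x => (Real.exp_pos _).le)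
  have hexpI := fun τ => exp_affine_Iic hk d₁ τ
  have hInt : ∀ τ, IntegrableOn g (Set.Iic τ) := by
    intro τ
    exact Integrable.mono' (((hexpI τ).1).const_mul (C₀+β+1))
      hgc.aestronglyMeasurable.restrict (ae_of_all _ hgb)
  have hWb : ∀ τ : ℝ, |∫ θ in Set.Iic τ, g θ|
      ≤ ((C₀+β+1) * Real.exp d₁ / (ξ+1)) * Real.exp ((ξ+1)*τ) := by
    intro τ
    have h1 : ‖∫ θ in Set.Iic τ, g θ‖
        ≤ ∫ θ in Set.Iic τ, (C₀+β+1) * Real.exp ((ξ+1)*θ+d₁) :=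
      norm_integral_le_of_norm_le (((hexpI τ).1).const_mul _) (ae_of_all _ hgb)
    rw [integral_const_mul, (hexpI τ).2, Real.norm_eq_abs] at h1
    calc |∫ θ in Set.Iic τ, g θ| ≤ (C₀+β+1) * (Real.exp ((ξ+1)*τ+d₁)/(ξ+1)) := h1
    _ = ((C₀+β+1) * Real.exp d₁ / (ξ+1)) * Real.exp ((ξ+1)*τ) := by
        rw [Real.exp_add]; ring

  -- G-tilde facts
  have hGtc : ContinuousOn (fun u : ℝ => (f u - 1)/u) (Set.Ioi 0) := by
    apply ContinuousOn.div
    · exact (hfc.mono Set.Ioi_subset_Ici_self).sub continuousOn_const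
    · exact continuousOn_id
    · intro x hx; exact ne_of_gt hx
  have hGtb1 : ∀ u : ℝ, u ∈ Set.Ioc (0:ℝ) 1 → ‖(f u - 1)/u‖ ≤ C₀ := by
    intro u hu
    rw [Real.norm_eq_abs, abs_div, abs_of_pos hu.1]
    rw [div_le_iff₀ hu.1]
    calc |f u - 1| ≤ C₀ * u := hf0 u ⟨hu.1.le, hu.2⟩
    _ = C₀ * u := rfl
  have hGt1 : IntegrableOn (fun u : ℝ => (f u - 1)/u) (Set.Ioc 0 1) := by
    apply Integrable.mono' (g := fun _ => C₀)
      (integrableOn_const measure_Ioc_lt_top.ne enorm_ne_top)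
      ((hGtc.mono Set.Ioc_subset_Ioi_self).aestronglyMeasurable measurableSet_Ioc)
    exact (ae_restrict_iff' measurableSet_Ioc).2 (ae_of_all _ hGtb1)
  have hGtb : ∀ b : ℝ, 0 < b → IntegrableOn (fun u : ℝ => (f u - 1)/u) (Set.Ioc 0 b) := by
    intro b hb
    rcases le_total b 1 with h | h
    · exact hGt1.mono_set (Set.Ioc_subset_Ioc_right h)
    · rw [← Set.Ioc_union_Ioc_eq_Ioc zero_le_one h]
      apply IntegrableOn.union hGt1
      exact ((hGtc.mono (fun x hx => lt_of_lt_of_le one_pos hx.1)).integrableOn_compact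
        isCompact_Icc).mono_set Set.Ioc_subset_Icc_self

  -- substitution
  have hφmono : ∀ σ τ : ℝ, σ ≤ τ → Real.exp ((ξ+1)*σ+d₁) ≤ Real.exp ((ξ+1)*τ+d₁) := by
    intro σ τ h
    exact Real.exp_le_exp.2 (by nlinarith)
  have hsub : ∀ σ τ : ℝ, σ ≤ τ → ∫ θ in Set.Ioc σ τ, g θ
      = (ξ+1)⁻¹ * ∫ u in Set.Ioc (Real.exp ((ξ+1)*σ+d₁)) (Real.exp ((ξ+1)*τ+d₁)), (f u - 1)/u := by
    intro σ τ hστ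
    have hderiv : ∀ x ∈ Set.uIcc σ τ, HasDerivAt (fun θ => Real.exp ((ξ+1)*θ+d₁))
        ((ξ+1) * Real.exp ((ξ+1)*x+d₁)) x := by
      intro x _
      have h1 : HasDerivAt (fun θ : ℝ => (ξ+1) * θ + d₁) (ξ+1) x := by
        simpa using (((hasDerivAt_id x).const_mul (ξ+1)).add_const d₁)
      simpa [mul_comm] using h1.exp
    have h' : ContinuousOn (fun x => (ξ+1) * Real.exp ((ξ+1)*x+d₁)) (Set.uIcc σ τ) :=
      (by continuity : Continuous fun x => (ξ+1) * Real.exp ((ξ+1)*x+d₁)).continuousOn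
    have himg : (fun θ => Real.exp ((ξ+1)*θ+d₁)) '' (Set.uIcc σ τ) ⊆ Set.Ioi 0 := by
      rintro - ⟨x, -, rfl⟩; exact Real.exp_pos _
    have hgcont : ContinuousOn (fun u : ℝ => (f u - 1)/((ξ+1)*u))
        ((fun θ => Real.exp ((ξ+1)*θ+d₁)) '' (Set.uIcc σ τ)) := by
      apply ContinuousOn.mono _ himg
      apply ContinuousOn.div
      · exact (hfc.mono Set.Ioi_subset_Ici_self).sub continuousOn_const
      · exact continuousOn_const.mul continuousOn_id
      · intro x hx
        exact mul_ne_zero (ne_of_gt hk) (ne_of_gt hx)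
    have key := intervalIntegral.integral_comp_mul_deriv' hderiv h' hgcont
    have hlhs : ∫ x in σ..τ, ((fun u : ℝ => (f u - 1)/((ξ+1)*u)) ∘
          (fun θ => Real.exp ((ξ+1)*θ+d₁))) x * ((ξ+1) * Real.exp ((ξ+1)*x+d₁))
        = ∫ x in σ..τ, g x := by
      apply intervalIntegral.integral_congr
      intro x _
      simp only [Function.comp_apply, hgdef]
      rw [div_mul_cancel₀]
      exact mul_ne_zero (ne_of_gt hk) (ne_of_gt (Real.exp_pos _))
    rw [hlhs] at key
    rw [← intervalIntegral.integral_of_le hστ, key,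
      intervalIntegral.integral_of_le (hφmono σ τ hστ)]
    rw [← integral_const_mul]
    apply setIntegral_congr_fun measurableSet_Ioc
    intro u hu
    have hu0 : u ≠ 0 := ne_of_gt (lt_trans (Real.exp_pos _) hu.1)
    field_simp

  -- key identity
  have hkey : ∀ τ : ℝ, ∫ θ in Set.Iic τ, g θ
      = (ξ+1)⁻¹ * ∫ u in Set.Ioc (0:ℝ) (Real.exp ((ξ+1)*τ+d₁)), (f u - 1)/u := by
    have hdiff : ∀ σ τ : ℝ, σ ≤ τ →
        (∫ θ in Set.Iic τ, g θ) - (∫ θ in Set.Iic σ, g θ)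
        = ((ξ+1)⁻¹ * ∫ u in Set.Ioc (0:ℝ) (Real.exp ((ξ+1)*τ+d₁)), (f u - 1)/u)
          - ((ξ+1)⁻¹ * ∫ u in Set.Ioc (0:ℝ) (Real.exp ((ξ+1)*σ+d₁)), (f u - 1)/u) := by
      intro σ τ hστ
      have hW : ∫ θ in Set.Iic τ, g θ
          = (∫ θ in Set.Iic σ, g θ) + ∫ θ in Set.Ioc σ τ, g θ := by
        rw [← Set.Iic_union_Ioc_eq_Iic hστ,
          setIntegral_union (Set.Iic_disjoint_Ioc le_rfl) measurableSet_Ioc (hInt σ)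
            ((hInt τ).mono_set Set.Ioc_subset_Iic_self)]
      have hJ : ∫ u in Set.Ioc (0:ℝ) (Real.exp ((ξ+1)*τ+d₁)), (f u - 1)/u
          = (∫ u in Set.Ioc (0:ℝ) (Real.exp ((ξ+1)*σ+d₁)), (f u - 1)/u)
            + ∫ u in Set.Ioc (Real.exp ((ξ+1)*σ+d₁)) (Real.exp ((ξ+1)*τ+d₁)), (f u - 1)/u := by
        rw [← Set.Ioc_union_Ioc_eq_Ioc (Real.exp_pos _).le (hφmono σ τ hστ),
          setIntegral_union ((Set.Ioc_disjoint_Ioc_of_le le_rfl)) measurableSet_Ioc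
            (hGtb _ (Real.exp_pos _))
            ((hGtb _ (Real.exp_pos _)).mono_set (Set.Ioc_subset_Ioc_left (Real.exp_pos _).le))]
      rw [hW, hJ, mul_add, hsub σ τ hστ]
      ring
    have hJb : ∀ τ : ℝ, (ξ+1)*τ + d₁ ≤ 0 →
        |(ξ+1)⁻¹ * ∫ u in Set.Ioc (0:ℝ) (Real.exp ((ξ+1)*τ+d₁)), (f u - 1)/u|
          ≤ (ξ+1)⁻¹ * (C₀ * Real.exp ((ξ+1)*τ+d₁)) := by
      intro τ hτ
      rw [abs_mul, abs_of_pos (inv_pos.2 hk)]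
      apply mul_le_mul_of_nonneg_left _ (inv_pos.2 hk).le
      have hb : ∀ u ∈ Set.Ioc (0:ℝ) (Real.exp ((ξ+1)*τ+d₁)), ‖(f u - 1)/u‖ ≤ C₀ := by
        intro u hu
        exact hGtb1 u ⟨hu.1, le_trans hu.2 (Real.exp_le_one_iff.2 hτ)⟩
      have := norm_setIntegral_le_of_norm_le_const (C := C₀)
        (s := Set.Ioc (0:ℝ) (Real.exp ((ξ+1)*τ+d₁))) (μ := volume)
        measure_Ioc_lt_top hb
      rw [Real.volume_real_Ioc_of_le (Real.exp_pos _).le, sub_zero] at this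
      rw [← Real.norm_eq_abs]
      exact this
    intro τ
    have hconst : ∀ σ : ℝ, σ ≤ τ → (∫ θ in Set.Iic τ, g θ)
        - ((ξ+1)⁻¹ * ∫ u in Set.Ioc (0:ℝ) (Real.exp ((ξ+1)*τ+d₁)), (f u - 1)/u)
        = (∫ θ in Set.Iic σ, g θ)
          - ((ξ+1)⁻¹ * ∫ u in Set.Ioc (0:ℝ) (Real.exp ((ξ+1)*σ+d₁)), (f u - 1)/u) := by
      intro σ hστ
      have h1 := hdiff σ τ hστ
      linarith
    have hcb : ∀ σ : ℝ, σ ≤ min τ ((-d₁)/(ξ+1)) →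
        |(∫ θ in Set.Iic τ, g θ)
          - ((ξ+1)⁻¹ * ∫ u in Set.Ioc (0:ℝ) (Real.exp ((ξ+1)*τ+d₁)), (f u - 1)/u)|
          ≤ ((C₀+β+1) * Real.exp d₁ / (ξ+1)) * Real.exp ((ξ+1)*σ)
          + (ξ+1)⁻¹ * (C₀ * Real.exp ((ξ+1)*σ+d₁)) := by
      intro σ hσ
      rw [hconst σ (le_trans hσ (min_le_left _ _))]
      have h2 : (ξ+1)*σ + d₁ ≤ 0 := by
        have := le_trans hσ (min_le_right _ _)
        rw [le_div_iff₀ hk] at this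
        nlinarith
      calc |_| ≤ |∫ θ in Set.Iic σ, g θ|
            + |(ξ+1)⁻¹ * ∫ u in Set.Ioc (0:ℝ) (Real.exp ((ξ+1)*σ+d₁)), (f u - 1)/u| :=
          abs_sub _ _
        _ ≤ _ := add_le_add (hWb σ) (hJb σ h2)
    have htend : Tendsto (fun σ : ℝ => ((C₀+β+1) * Real.exp d₁ / (ξ+1)) * Real.exp ((ξ+1)*σ)
        + (ξ+1)⁻¹ * (C₀ * Real.exp ((ξ+1)*σ+d₁))) atBot (𝓝 0) := by
      have h0 : Tendsto (fun σ : ℝ => Real.exp ((ξ+1)*σ)) atBot (𝓝 0) := by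
        apply Real.tendsto_exp_atBot.comp
        exact (tendsto_const_mul_atBot_of_pos hk).2 tendsto_id
      have h1 : Tendsto (fun σ : ℝ => Real.exp ((ξ+1)*σ+d₁)) atBot (𝓝 0) := by
        apply Real.tendsto_exp_atBot.comp
        apply Filter.tendsto_atBot_add_const_right
        exact (tendsto_const_mul_atBot_of_pos hk).2 tendsto_id
      have := (h0.const_mul ((C₀+β+1) * Real.exp d₁ / (ξ+1))).add
        ((h1.const_mul C₀).const_mul (ξ+1)⁻¹)
      simpa using this
    have hle : |(∫ θ in Set.Iic τ, g θ)
        - ((ξ+1)⁻¹ * ∫ u in Set.Ioc (0:ℝ) (Real.exp ((ξ+1)*τ+d₁)), (f u - 1)/u)| ≤ 0 := by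
      apply ge_of_tendsto htend
      filter_upwards [Filter.eventually_le_atBot (min τ ((-d₁)/(ξ+1)))] with σ hσ
      exact hcb σ hσ
    have h0 := abs_eq_zero.1 (le_antisymm hle (abs_nonneg _))
    linarith [h0]

  -- I-infinity facts
  have hfβc : ContinuousOn (fun u : ℝ => (f u + β)/u) (Set.Ioi 0) := by
    apply ContinuousOn.div
    · exact (hfc.mono Set.Ioi_subset_Ici_self).add continuousOn_const
    · exact continuousOn_id
    · intro x hx; exact ne_of_gt hx
  have hrpow : ∀ u : ℝ, 0 < u → u ^ (-2:ℝ) = (u*u)⁻¹ := by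
    intro u hu
    rw [show (-2:ℝ) = -((2:ℕ):ℝ) by norm_num, Real.rpow_neg hu.le, Real.rpow_natCast]
    norm_num [pow_two]
  have hfβb : ∀ u : ℝ, 1 ≤ u → ‖(f u + β)/u‖ ≤ C₀ * u ^ (-2:ℝ) := by
    intro u hu
    have hu0 : (0:ℝ) < u := lt_of_lt_of_le one_pos hu
    rw [Real.norm_eq_abs, abs_div, abs_of_pos hu0, hrpow u hu0, div_le_iff₀ hu0]
    have h1 := hfinf u hu
    have h2 : C₀ / u = C₀ * (u*u)⁻¹ * u := by
      field_simp
    linarith [h2 ▸ h1]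
  have hIinf : IntegrableOn (fun u : ℝ => (f u + β)/u) (Set.Ioi 1) := by
    apply Integrable.mono' ((integrableOn_Ioi_rpow_of_lt (a := (-2:ℝ)) (by norm_num) one_pos).const_mul C₀)
      ((hfβc.mono (Set.Ioi_subset_Ioi zero_le_one)).aestronglyMeasurable measurableSet_Ioi)
    exact (ae_restrict_iff' measurableSet_Ioi).2 (ae_of_all _ fun u hu => hfβb u hu.le)
  have hIinfb : ∀ b : ℝ, 1 ≤ b → |∫ u in Set.Ioi b, (f u + β)/u| ≤ C₀ / b := by
    intro b hb
    have hb0 : (0:ℝ) < b := lt_of_lt_of_le one_pos hb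
    rw [← Real.norm_eq_abs]
    have h1 : ‖∫ u in Set.Ioi b, (f u + β)/u‖ ≤ ∫ u in Set.Ioi b, C₀ * u ^ (-2:ℝ) :=
      norm_integral_le_of_norm_le ((integrableOn_Ioi_rpow_of_lt (a := (-2:ℝ)) (by norm_num) hb0).const_mul C₀)
        ((ae_restrict_iff' measurableSet_Ioi).2
          (ae_of_all _ fun u hu => hfβb u (le_trans hb hu.le)))
    rw [integral_const_mul, integral_Ioi_rpow_of_lt (by norm_num) hb0] at h1
    calc ‖∫ u in Set.Ioi b, (f u + β)/u‖ ≤ C₀ * (-b ^ ((-2:ℝ)+1)/((-2:ℝ)+1)) := h1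
    _ = C₀ / b := by
        rw [show (-2:ℝ)+1 = -1 by norm_num, Real.rpow_neg_one]
        field_simp
  have hIoc1 : ∀ b : ℝ, 1 ≤ b → IntegrableOn (fun u : ℝ => (f u + β)/u) (Set.Ioc 1 b) :=
    fun b _ => hIinf.mono_set Set.Ioc_subset_Ioi_self
  have hinv : ∀ b : ℝ, 1 ≤ b → IntegrableOn (fun u : ℝ => (β+1)/u) (Set.Ioc 1 b) := by
    intro b hb
    apply IntegrableOn.mono_set _ (Set.Ioc_subset_Icc_self)
    apply ContinuousOn.integrableOn_compact isCompact_Icc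
    apply ContinuousOn.div continuousOn_const continuousOn_id
    intro x hx; exact ne_of_gt (lt_of_lt_of_le one_pos hx.1)
  have hlog : ∀ b : ℝ, 1 ≤ b → ∫ u in Set.Ioc (1:ℝ) b, (β+1)/u = (β+1) * Real.log b := by
    intro b hb
    have h1 : ∫ u in Set.Ioc (1:ℝ) b, (β+1)/u = ∫ u in Set.Ioc (1:ℝ) b, (β+1) * (1/u) := by
      apply setIntegral_congr_fun measurableSet_Ioc
      intro u _; show (β + 1) / u = (β + 1) * (1 / u); rw [mul_one_div]
    rw [h1, integral_const_mul, ← intervalIntegral.integral_of_le hb, integral_one_div, div_one]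
    intro h0
    have h1b : (1:ℝ) ⊓ b ≤ 0 := h0.1
    have h2b : (1:ℝ) ≤ 1 ⊓ b := le_inf le_rfl hb
    linarith

  -- conclusion
  refine ⟨hInt, (C₀+β+1) * Real.exp d₁ / (ξ+1), by positivity,
    ((ξ+1)⁻¹ * (3*C₀ + (β+1)*|d₁|) + 1) * Real.exp (-d₁), by positivity, ?_, ?_⟩
  · intro τ _
    rw [show (1+ξ) = ξ+1 from add_comm 1 ξ]
    exact hWb τ
  · intro τ hτ
    have hφpos : (0:ℝ) < Real.exp ((ξ+1)*τ + d₁) := Real.exp_pos _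
    have hC2b : (0:ℝ) < ((ξ+1)⁻¹ * (3*C₀ + (β+1)*|d₁|) + 1) := by positivity
    rcases le_or_gt 1 (Real.exp ((ξ+1)*τ+d₁)) with hA | hA
    · -- case exp((ξ+1)τ+d₁) ≥ 1
      have hsplit1 : ∫ u in Set.Ioc (0:ℝ) (Real.exp ((ξ+1)*τ+d₁)), (f u - 1)/u
          = (∫ u in Set.Ioc (0:ℝ) 1, (f u - 1)/u)
            + ∫ u in Set.Ioc (1:ℝ) (Real.exp ((ξ+1)*τ+d₁)), (f u - 1)/u := by
        rw [← Set.Ioc_union_Ioc_eq_Ioc zero_le_one hA,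
          setIntegral_union (Set.Ioc_disjoint_Ioc_of_le le_rfl) measurableSet_Ioc hGt1
            ((hGtb _ hφpos).mono_set (Set.Ioc_subset_Ioc_left zero_le_one))]
      have hGtIoc1 : IntegrableOn (fun u : ℝ => (f u - 1)/u)
          (Set.Ioc 1 (Real.exp ((ξ+1)*τ+d₁))) :=
        (hGtb _ hφpos).mono_set (Set.Ioc_subset_Ioc_left zero_le_one)
      have hsplit2 : ∫ u in Set.Ioc (1:ℝ) (Real.exp ((ξ+1)*τ+d₁)), (f u - 1)/u
          = (∫ u in Set.Ioc (1:ℝ) (Real.exp ((ξ+1)*τ+d₁)), (f u + β)/u)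
            - (β+1)*((ξ+1)*τ+d₁) := by
        have hptw : ∀ u ∈ Set.Ioc (1:ℝ) (Real.exp ((ξ+1)*τ+d₁)),
            (f u - 1)/u = (fun v : ℝ => (f v + β)/v - (β+1)/v) u := by
          intro u _
          show (f u - 1)/u = (f u + β)/u - (β+1)/u
          rw [div_sub_div_same]
          congr 1
          ring
        rw [setIntegral_congr_fun measurableSet_Ioc hptw,
          integral_sub (hIoc1 _ hA) (hinv _ hA), hlog _ hA, Real.log_exp]
      have hsplit3 : ∫ u in Set.Ioc (1:ℝ) (Real.exp ((ξ+1)*τ+d₁)), (f u + β)/u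
          = (∫ u in Set.Ioi (1:ℝ), (f u + β)/u)
            - ∫ u in Set.Ioi (Real.exp ((ξ+1)*τ+d₁)), (f u + β)/u := by
        rw [← Set.Ioc_union_Ioi_eq_Ioi hA,
          setIntegral_union (Set.Ioc_disjoint_Ioi le_rfl) measurableSet_Ioi
            (hIinf.mono_set Set.Ioc_subset_Ioi_self)
            (hIinf.mono_set (Set.Ioi_subset_Ioi hA))]
        ring
      have hR := hIinfb _ hA
      rw [hkey τ, hsplit1, hsplit2, hsplit3]
      have hiden : (ξ+1)⁻¹ * ((∫ u in Set.Ioc (0:ℝ) 1, (f u - 1)/u)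
            + (((∫ u in Set.Ioi (1:ℝ), (f u + β)/u)
              - ∫ u in Set.Ioi (Real.exp ((ξ+1)*τ+d₁)), (f u + β)/u)
              - (β+1)*((ξ+1)*τ+d₁)))
          + (β + 1) * τ
          - (((∫ u in Set.Ioc (0:ℝ) 1, (f u - 1) / u)
              + ∫ u in Set.Ioi (1:ℝ), (f u + β) / u) - d₁ * (β + 1)) / (ξ + 1)
          = -((ξ+1)⁻¹ * ∫ u in Set.Ioi (Real.exp ((ξ+1)*τ+d₁)), (f u + β)/u) := by
        field_simp
        ring
      rw [hiden, abs_neg, abs_mul, abs_of_pos (inv_pos.2 hk)]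
      have hAeq : C₀ / Real.exp ((ξ+1)*τ+d₁) = C₀ * Real.exp (-d₁) * Real.exp (-(ξ+1)*τ) := by
        rw [mul_assoc, ← Real.exp_add, div_eq_mul_inv, ← Real.exp_neg]
        congr 1
        ring
      calc (ξ+1)⁻¹ * |∫ u in Set.Ioi (Real.exp ((ξ+1)*τ+d₁)), (f u + β)/u|
          ≤ (ξ+1)⁻¹ * (C₀ / Real.exp ((ξ+1)*τ+d₁)) :=
            mul_le_mul_of_nonneg_left hR (inv_pos.2 hk).le
        _ = ((ξ+1)⁻¹ * C₀ * Real.exp (-d₁)) * Real.exp (-(ξ+1)*τ) := by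
            rw [hAeq]; ring
        _ ≤ (((ξ+1)⁻¹ * (3*C₀ + (β+1)*|d₁|) + 1) * Real.exp (-d₁)) * Real.exp (-(ξ+1)*τ) := by
            apply mul_le_mul_of_nonneg_right _ (Real.exp_pos _).le
            apply mul_le_mul_of_nonneg_right _ (Real.exp_pos _).le
            have h1 : (0:ℝ) < (ξ+1)⁻¹ := inv_pos.2 hk
            nlinarith [mul_nonneg h1.le (show (0:ℝ) ≤ 2*C₀+(β+1)*|d₁| by positivity)]
    · -- case exp((ξ+1)τ+d₁) < 1
      have hlt : (ξ+1)*τ + d₁ < 0 := by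
        by_contra h
        push_neg at h
        exact absurd (Real.one_le_exp h) (not_le.2 hA)
      have hsplitB : (∫ u in Set.Ioc (0:ℝ) 1, (f u - 1)/u)
          = (∫ u in Set.Ioc (0:ℝ) (Real.exp ((ξ+1)*τ+d₁)), (f u - 1)/u)
            + ∫ u in Set.Ioc (Real.exp ((ξ+1)*τ+d₁)) 1, (f u - 1)/u := by
        rw [← Set.Ioc_union_Ioc_eq_Ioc hφpos.le hA.le,
          setIntegral_union (Set.Ioc_disjoint_Ioc_of_le le_rfl) measurableSet_Ioc
            (hGtb _ hφpos) (hGt1.mono_set (Set.Ioc_subset_Ioc_left hφpos.le))]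
      have hS : |∫ u in Set.Ioc (Real.exp ((ξ+1)*τ+d₁)) 1, (f u - 1)/u| ≤ C₀ := by
        rw [← Real.norm_eq_abs]
        have hbd : ∀ u ∈ Set.Ioc (Real.exp ((ξ+1)*τ+d₁)) 1, ‖(f u - 1)/u‖ ≤ C₀ := by
          intro u hu
          exact hGtb1 u ⟨lt_of_le_of_lt hφpos.le hu.1, hu.2⟩
        have h1 := norm_setIntegral_le_of_norm_le_const (C := C₀)
          (s := Set.Ioc (Real.exp ((ξ+1)*τ+d₁)) 1) (μ := volume)
          measure_Ioc_lt_top hbd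
        rw [Real.volume_real_Ioc_of_le hA.le] at h1
        calc ‖∫ u in Set.Ioc (Real.exp ((ξ+1)*τ+d₁)) 1, (f u - 1)/u‖
            ≤ C₀ * (1 - Real.exp ((ξ+1)*τ+d₁)) := h1
          _ ≤ C₀ := by nlinarith
      have hIinfb1 : |∫ u in Set.Ioi (1:ℝ), (f u + β)/u| ≤ C₀ := by
        have := hIinfb 1 le_rfl
        simpa using this
      rw [hkey τ, show (∫ u in Set.Ioc (0:ℝ) (Real.exp ((ξ+1)*τ+d₁)), (f u - 1)/u)
          = (∫ u in Set.Ioc (0:ℝ) 1, (f u - 1)/u)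
            - ∫ u in Set.Ioc (Real.exp ((ξ+1)*τ+d₁)) 1, (f u - 1)/u from by
            rw [hsplitB]; ring]
      have hiden : (ξ+1)⁻¹ * ((∫ u in Set.Ioc (0:ℝ) 1, (f u - 1)/u)
            - ∫ u in Set.Ioc (Real.exp ((ξ+1)*τ+d₁)) 1, (f u - 1)/u)
          + (β + 1) * τ
          - (((∫ u in Set.Ioc (0:ℝ) 1, (f u - 1) / u)
              + ∫ u in Set.Ioi (1:ℝ), (f u + β) / u) - d₁ * (β + 1)) / (ξ + 1)
          = (ξ+1)⁻¹ * (-(∫ u in Set.Ioc (Real.exp ((ξ+1)*τ+d₁)) 1, (f u - 1)/u)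
              - (∫ u in Set.Ioi (1:ℝ), (f u + β)/u) + (β+1)*((ξ+1)*τ+d₁)) := by
        field_simp
        ring
      rw [hiden, abs_mul, abs_of_pos (inv_pos.2 hk)]
      have hX : |(ξ+1)*τ + d₁| ≤ |d₁| := by
        have h1 : 0 ≤ (ξ+1)*τ := by positivity
        rw [abs_of_neg hlt]
        nlinarith [neg_abs_le d₁]
      have hbound : |-(∫ u in Set.Ioc (Real.exp ((ξ+1)*τ+d₁)) 1, (f u - 1)/u)
            - (∫ u in Set.Ioi (1:ℝ), (f u + β)/u) + (β+1)*((ξ+1)*τ+d₁)|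
          ≤ 2*C₀ + (β+1)*|d₁| := by
        have h1 : |(β+1)*((ξ+1)*τ+d₁)| ≤ (β+1)*|d₁| := by
          rw [abs_mul, abs_of_pos (by linarith : (0:ℝ) < β+1)]
          exact mul_le_mul_of_nonneg_left hX (by linarith)
        calc |-(∫ u in Set.Ioc (Real.exp ((ξ+1)*τ+d₁)) 1, (f u - 1)/u)
              - (∫ u in Set.Ioi (1:ℝ), (f u + β)/u) + (β+1)*((ξ+1)*τ+d₁)|
            ≤ |-(∫ u in Set.Ioc (Real.exp ((ξ+1)*τ+d₁)) 1, (f u - 1)/u)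
              - (∫ u in Set.Ioi (1:ℝ), (f u + β)/u)| + |(β+1)*((ξ+1)*τ+d₁)| := abs_add_le _ _
          _ ≤ (|∫ u in Set.Ioc (Real.exp ((ξ+1)*τ+d₁)) 1, (f u - 1)/u|
              + |∫ u in Set.Ioi (1:ℝ), (f u + β)/u|) + |(β+1)*((ξ+1)*τ+d₁)| := by
              gcongr
              calc |-(∫ u in Set.Ioc (Real.exp ((ξ+1)*τ+d₁)) 1, (f u - 1)/u)
                  - (∫ u in Set.Ioi (1:ℝ), (f u + β)/u)|
                  ≤ |-(∫ u in Set.Ioc (Real.exp ((ξ+1)*τ+d₁)) 1, (f u - 1)/u)|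
                    + |∫ u in Set.Ioi (1:ℝ), (f u + β)/u| := abs_sub _ _
                _ = _ := by rw [abs_neg]
          _ ≤ 2*C₀ + (β+1)*|d₁| := by linarith
      have hexp : Real.exp d₁ ≤ Real.exp (-(ξ+1)*τ) := by
        apply Real.exp_le_exp.2
        nlinarith
      calc (ξ+1)⁻¹ * |-(∫ u in Set.Ioc (Real.exp ((ξ+1)*τ+d₁)) 1, (f u - 1)/u)
            - (∫ u in Set.Ioi (1:ℝ), (f u + β)/u) + (β+1)*((ξ+1)*τ+d₁)|
          ≤ (ξ+1)⁻¹ * (2*C₀ + (β+1)*|d₁|) :=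
            mul_le_mul_of_nonneg_left hbound (inv_pos.2 hk).le
        _ = ((ξ+1)⁻¹ * (2*C₀ + (β+1)*|d₁|)) * (Real.exp (-d₁) * Real.exp d₁) := by
            rw [← Real.exp_add]; simp
        _ ≤ (((ξ+1)⁻¹ * (3*C₀ + (β+1)*|d₁|) + 1) * Real.exp (-d₁)) * Real.exp (-(ξ+1)*τ) := by
            rw [← mul_assoc]
            apply mul_le_mul _ hexp (Real.exp_pos _).le (by positivity)
            apply mul_le_mul_of_nonneg_right _ (Real.exp_pos _).le
            have h1 : (0:ℝ) < (ξ+1)⁻¹ := inv_pos.2 hk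
            nlinarith [abs_nonneg d₁]
end

section
/- Let β > 0, η > 1, d₊ ∈ ℝ, and let f : [0,∞) → ℝ be continuous with |f(u) − 1| ≤ C₀·u for all u ∈ [0,1] and |f(u) + β| ≤ C₀/u for all u ≥ 1, for some constant C₀ > 0. Define w₂(τ) = −(β+1)·τ + ∫_{−∞}^{τ} (f(e^{(1−η)·θ + d₊}) + β) dθ, d₂ = ∫₀¹ (f(u)−1)/u du + ∫₁^∞ (f(u)+β)/u du and d₄ = (d₂ − d₊(β+1))/(η−1). Then the integral defining w₂(τ) converges for every real τ, and there exist constants C₁, C₂ > 0 such that |w₂(τ) + (β+1)·τ| ≤ C₁·e^{(η−1)τ} for all τ ≤ 0, and |w₂(τ) − d₄| ≤ C₂·e^{(1−η)τ} for all τ ≥ 0. -/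
open Real MeasureTheory
open scoped Real

lemma expmul_hasDerivAt (c x : ℝ) (hc : c ≠ 0) :
    HasDerivAt (fun θ => Real.exp (c * θ) / c) (Real.exp (c * x)) x := by
  have h := ((Real.hasDerivAt_exp (c * x)).comp x ((hasDerivAt_id x).const_mul c))
  have h2 := h.div_const c
  have h3 : Real.exp (c * x) * (c * 1) / c = Real.exp (c * x) := by field_simp
  rw [h3] at h2
  exact h2

lemma exp_mul_integrableOn_Iic {c : ℝ} (hc : 0 < c) (τ : ℝ) :
    IntegrableOn (fun θ => Real.exp (c * θ)) (Set.Iic τ) := by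
  refine integrableOn_Iic_of_intervalIntegral_norm_bounded (Real.exp (c * τ) / c) τ
    (fun i : ℝ => ((Real.continuous_exp.comp (continuous_const.mul continuous_id)).integrableOn_Ioc))
    Filter.tendsto_id ?_
  filter_upwards [Filter.Iic_mem_atBot τ] with i (hi : i ≤ τ)
  have : (∫ x in i..τ, ‖Real.exp (c * x)‖) = ∫ x in i..τ, Real.exp (c * x) := by
    congr 1; ext x; exact Real.norm_of_nonneg (Real.exp_pos _).le
  simp only [id]
  rw [this, intervalIntegral.integral_eq_sub_of_hasDerivAt
      (fun x _ => expmul_hasDerivAt c x hc.ne') ((Real.continuous_exp.comp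
        (continuous_const.mul continuous_id)).intervalIntegrable _ _)]
  have : 0 < Real.exp (c * i) / c := by positivity
  linarith

/-- asymptotics of the boundary-layer function
`w₂(τ) = -(β+1)τ + ∫_{-∞}^τ (f(e^{(1-η)θ+d₊})+β) dθ`: the integral converges for every `τ`,
`w₂(τ) = -(β+1)τ + O(e^{(η-1)τ})` as `τ → -∞` and
`w₂(τ) = d₄ + O(e^{(1-η)τ})` as `τ → +∞`, where `d₄ = (d₂ - d₊(β+1))/(η-1)`. -/
theorem stmt_5 (β η dstar C₀ : ℝ) (hβ : 0 < β) (hη : 1 < η) (hC₀ : 0 < C₀)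
    (f : ℝ → ℝ) (hfc : ContinuousOn f (Set.Ici 0))
    (hf0 : ∀ u ∈ Set.Icc (0:ℝ) 1, |f u - 1| ≤ C₀ * u)
    (hfinf : ∀ u : ℝ, 1 ≤ u → |f u + β| ≤ C₀ / u) :
    (∀ τ : ℝ, IntegrableOn (fun θ => f (Real.exp ((1 - η) * θ + dstar)) + β) (Set.Iic τ)) ∧
    ∃ C₁ > (0:ℝ), ∃ C₂ > (0:ℝ),
      (∀ τ : ℝ, τ ≤ 0 →
        |(-(β + 1) * τ + ∫ θ in Set.Iic τ, (f (Real.exp ((1 - η) * θ + dstar)) + β))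
            + (β + 1) * τ|
          ≤ C₁ * Real.exp ((η - 1) * τ)) ∧
      (∀ τ : ℝ, 0 ≤ τ →
        |(-(β + 1) * τ + ∫ θ in Set.Iic τ, (f (Real.exp ((1 - η) * θ + dstar)) + β))
            - (((∫ u in Set.Ioc (0:ℝ) 1, (f u - 1) / u)
                + ∫ u in Set.Ioi (1:ℝ), (f u + β) / u) - dstar * (β + 1)) / (η - 1)|
          ≤ C₂ * Real.exp ((1 - η) * τ)) := by
  have hη1 : (0:ℝ) < η - 1 := by linarith
  set φ : ℝ → ℝ := fun θ => Real.exp ((1 - η) * θ + dstar) with hφdef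
  set g : ℝ → ℝ := fun θ => f (φ θ) + β with hgdef
  have hφpos : ∀ θ, 0 < φ θ := fun θ => Real.exp_pos _
  have hφc : Continuous φ := by
    exact Real.continuous_exp.comp (by continuity)
  have hgc : Continuous g :=
    (hfc.comp_continuous hφc fun θ => (hφpos θ).le).add continuous_const
  have hCb : (0:ℝ) < C₀ + 1 + β := by linarith
  set K : ℝ := (C₀ + 1 + β) * Real.exp (-dstar) with hKdef
  have hKpos : 0 < K := mul_pos hCb (Real.exp_pos _)
  -- pointwise bound on g
  have hbound : ∀ θ : ℝ, |g θ| ≤ K * Real.exp ((η - 1) * θ) := by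
    intro θ
    have hKexp : K * Real.exp ((η - 1) * θ)
        = (C₀ + 1 + β) * Real.exp (-dstar + (η - 1) * θ) := by
      rw [hKdef, Real.exp_add]; ring
    rcases le_or_gt 1 (φ θ) with h | h
    · have h1 := hfinf (φ θ) h
      have e1 : C₀ / φ θ = C₀ * Real.exp (-((1 - η) * θ + dstar)) := by
        rw [hφdef, Real.exp_neg, div_eq_mul_inv]
      have e2 : -((1 - η) * θ + dstar) = -dstar + (η - 1) * θ := by ring
      rw [e1, e2] at h1
      have hep : (0:ℝ) < Real.exp (-dstar + (η - 1) * θ) := Real.exp_pos _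
      rw [hKexp]
      calc |g θ| ≤ C₀ * Real.exp (-dstar + (η - 1) * θ) := h1
        _ ≤ (C₀ + 1 + β) * Real.exp (-dstar + (η - 1) * θ) := by nlinarith
    · have hu : φ θ ∈ Set.Icc (0:ℝ) 1 := ⟨(hφpos θ).le, h.le⟩
      have h1 := hf0 (φ θ) hu
      have h2 : |g θ| ≤ C₀ + 1 + β := by
        have : g θ = (f (φ θ) - 1) + (1 + β) := by rw [hgdef]; ring
        rw [this]
        calc |(f (φ θ) - 1) + (1 + β)| ≤ |f (φ θ) - 1| + |1 + β| := abs_add_le _ _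
          _ ≤ C₀ * φ θ + (1 + β) := by
              rw [abs_of_pos (by linarith : (0:ℝ) < 1 + β)]; linarith
          _ ≤ C₀ + 1 + β := by nlinarith [hu.2, (hφpos θ).le]
      have h3 : (1:ℝ) ≤ Real.exp (-dstar + (η - 1) * θ) := by
        apply Real.one_le_exp
        have h4 : (1 - η) * θ + dstar < 0 := by
          have h5 := h
          simp only [hφdef] at h5
          exact Real.exp_lt_one_iff.mp h5
        linarith
      rw [hKexp]
      nlinarith
  -- integrability of g on Iic τ
  have hgint : ∀ τ : ℝ, IntegrableOn g (Set.Iic τ) := by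
    intro τ
    refine Integrable.mono' (((exp_mul_integrableOn_Iic hη1 τ)).const_mul K)
      hgc.aestronglyMeasurable.restrict (ae_of_all _ fun θ => ?_)
    simpa [Real.norm_eq_abs] using hbound θ
  -- bound on the integral of g
  have hintbound : ∀ τ : ℝ, |∫ θ in Set.Iic τ, g θ| ≤ K / (η - 1) * Real.exp ((η - 1) * τ) := by
    intro τ
    have h1 : ‖∫ θ in Set.Iic τ, g θ‖ ≤ ∫ θ in Set.Iic τ, K * Real.exp ((η - 1) * θ) := by
      refine norm_integral_le_of_norm_le ((exp_mul_integrableOn_Iic hη1 τ).const_mul K)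
        (ae_of_all _ fun θ => ?_)
      simpa [Real.norm_eq_abs] using hbound θ
    rw [Real.norm_eq_abs] at h1
    calc |∫ θ in Set.Iic τ, g θ| ≤ ∫ θ in Set.Iic τ, K * Real.exp ((η - 1) * θ) := h1
      _ = K * (Real.exp ((η - 1) * τ) / (η - 1)) := by
          rw [integral_const_mul, integral_exp_mul_Iic hη1]
      _ = K / (η - 1) * Real.exp ((η - 1) * τ) := by ring
  -- derivative / injectivity / image of φ
  have hderivφ : ∀ θ : ℝ, HasDerivAt φ ((1 - η) * φ θ) θ := by
    intro θ
    have h := (Real.hasDerivAt_exp ((1 - η) * θ + dstar)).comp θ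
      (((hasDerivAt_id θ).const_mul (1 - η)).add_const dstar)
    simp only [hφdef, Function.comp_def, id, mul_one] at h ⊢
    rw [mul_comm (1 - η) (Real.exp ((1 - η) * θ + dstar))]
    exact h
  have hφanti : StrictAnti φ := by
    intro a b hab
    simp only [hφdef]
    apply Real.exp_lt_exp.mpr
    nlinarith
  have hinj : Function.Injective φ := hφanti.injective
  have hφval : ∀ c : ℝ, 0 < c → φ ((Real.log c - dstar) / (1 - η)) = c := by
    intro c hc
    simp only [hφdef]
    have hne : (1:ℝ) - η ≠ 0 := by linarith
    have h1 : (1 - η) * ((Real.log c - dstar) / (1 - η)) + dstar = Real.log c := by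
      field_simp
      ring
    rw [h1, Real.exp_log hc]
  have himg : ∀ τ : ℝ, φ '' Set.Iic τ = Set.Ici (φ τ) := by
    intro τ
    ext u
    constructor
    · rintro ⟨θ, hθ, rfl⟩
      exact hφanti.antitone hθ
    · intro hu
      have hupos : 0 < u := lt_of_lt_of_le (hφpos τ) hu
      refine ⟨(Real.log u - dstar) / (1 - η), ?_, hφval u hupos⟩
      have hlog : (1 - η) * τ + dstar ≤ Real.log u := by
        have h2 := Real.log_le_log (hφpos τ) hu
        simp only [hφdef, Real.log_exp] at h2
        exact h2
      rw [Set.mem_Iic, div_le_iff_of_neg (by linarith : (1:ℝ) - η < 0)]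
      linarith
  -- pointwise identity for the change of variables
  have hptwise : ∀ θ : ℝ, |(1 - η) * φ θ| • ((f (φ θ) + β) / φ θ) = (η - 1) * g θ := by
    intro θ
    have h0 : φ θ ≠ 0 := (hφpos θ).ne'
    have habs : |(1 - η) * φ θ| = (η - 1) * φ θ := by
      rw [abs_mul, abs_of_neg (by linarith : (1:ℝ) - η < 0), abs_of_pos (hφpos θ)]
      ring
    rw [smul_eq_mul, habs, hgdef]
    field_simp
  -- change of variables: θ ↦ u = φ θ
  have hcov : ∀ τ : ℝ, (∫ u in Set.Ici (φ τ), (f u + β) / u)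
      = (η - 1) * ∫ θ in Set.Iic τ, g θ := by
    intro τ
    rw [← himg τ, integral_image_eq_integral_abs_deriv_smul measurableSet_Iic
      (fun θ _ => (hderivφ θ).hasDerivWithinAt) (hinj.injOn) (fun u => (f u + β) / u)]
    rw [← integral_const_mul]
    exact setIntegral_congr_fun measurableSet_Iic fun θ _ => hptwise θ
  have hFint : ∀ τ : ℝ, IntegrableOn (fun u => (f u + β) / u) (Set.Ici (φ τ)) := by
    intro τ
    rw [← himg τ, integrableOn_image_iff_integrableOn_abs_deriv_smul measurableSet_Iic
      (fun θ _ => (hderivφ θ).hasDerivWithinAt) (hinj.injOn)]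
    exact (((hgint τ).const_mul (η - 1))).congr (ae_of_all _ fun θ => (hptwise θ).symm)
  have hFIoi : ∀ c : ℝ, 0 < c → IntegrableOn (fun u => (f u + β) / u) (Set.Ioi c) := by
    intro c hc
    have := (hFint ((Real.log c - dstar) / (1 - η))).mono_set Set.Ioi_subset_Ici_self
    rwa [hφval c hc] at this
  -- continuity and bounds for q(u) = (f u - 1)/u
  have hqcont : ContinuousOn (fun u => (f u - 1) / u) (Set.Ioi (0:ℝ)) := by
    apply ContinuousOn.div
    · exact (hfc.mono (Set.Ioi_subset_Ici le_rfl)).sub continuousOn_const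
    · exact continuousOn_id
    · exact fun x hx => ne_of_gt hx
  have hqbd : ∀ u ∈ Set.Ioc (0:ℝ) 1, |(f u - 1) / u| ≤ C₀ := by
    intro u hu
    rw [abs_div, abs_of_pos hu.1, div_le_iff₀ hu.1]
    exact hf0 u ⟨hu.1.le, hu.2⟩
  have hqint01 : IntegrableOn (fun u => (f u - 1) / u) (Set.Ioc (0:ℝ) 1) := by
    refine Integrable.mono'
      (show IntegrableOn (fun _ : ℝ => C₀) (Set.Ioc (0:ℝ) 1) volume from
        integrableOn_const measure_Ioc_lt_top.ne)
      ((hqcont.mono Set.Ioc_subset_Ioi_self).aestronglyMeasurable measurableSet_Ioc) ?_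
    exact (ae_restrict_iff' measurableSet_Ioc).mpr (ae_of_all _ fun u hu => by
      rw [Real.norm_eq_abs]; exact hqbd u hu)
  have hqsmall : ∀ a : ℝ, 0 < a → a ≤ 1 → |∫ u in Set.Ioc (0:ℝ) a, (f u - 1) / u| ≤ C₀ * a := by
    intro a ha ha1
    have h1 : ‖∫ u in Set.Ioc (0:ℝ) a, (f u - 1) / u‖
        ≤ C₀ * (volume (Set.Ioc (0:ℝ) a)).toReal := by
      apply norm_setIntegral_le_of_norm_le_const measure_Ioc_lt_top
      intro x hx
      have hx' : x ∈ Set.Ioc (0:ℝ) 1 := ⟨hx.1, hx.2.trans ha1⟩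
      rw [Real.norm_eq_abs]; exact hqbd x hx'
    rw [Real.volume_Ioc, ENNReal.toReal_ofReal (by linarith)] at h1
    rw [Real.norm_eq_abs] at h1
    simpa using h1
  have hqbd2 : ∀ u : ℝ, 1 ≤ u → |(f u - 1) / u| ≤ C₀ + 1 + β := by
    intro u hu
    have hupos : (0:ℝ) < u := by linarith
    have h1 : |f u - 1| ≤ C₀ / u + (1 + β) := by
      have he : f u - 1 = (f u + β) + -(1 + β) := by ring
      rw [he]
      calc |(f u + β) + -(1 + β)| ≤ |f u + β| + |-(1 + β)| := abs_add_le _ _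
        _ ≤ C₀ / u + (1 + β) := by
            rw [abs_neg, abs_of_pos (by linarith : (0:ℝ) < 1 + β)]
            exact add_le_add_left (hfinf u hu) _
    have h2 : C₀ / u ≤ C₀ := by
      rw [div_le_iff₀ hupos]; nlinarith
    rw [abs_div, abs_of_pos hupos, div_le_iff₀ hupos]
    nlinarith [abs_nonneg (f u - 1), mul_nonneg hCb.le (by linarith : (0:ℝ) ≤ u - 1)]
  -- interval integrability
  have huIcc : ∀ a : ℝ, 0 < a → Set.uIcc a 1 ⊆ Set.Ioi (0:ℝ) := by
    intro a ha x hx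
    exact lt_of_lt_of_le (lt_min ha one_pos) hx.1
  have hqII : ∀ a : ℝ, 0 < a → IntervalIntegrable (fun u => (f u - 1) / u) volume a 1 :=
    fun a ha => (hqcont.mono (huIcc a ha)).intervalIntegrable
  have hinvII : ∀ a : ℝ, 0 < a → IntervalIntegrable (fun u : ℝ => u⁻¹) volume a 1 := by
    intro a ha
    exact ContinuousOn.intervalIntegrable
      (fun x hx => (continuousAt_inv₀ (ne_of_gt (huIcc a ha hx))).continuousWithinAt)
  -- decompose the interval integral of F
  have hFq : ∀ a : ℝ, 0 < a → (∫ u in a..1, (f u + β) / u)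
      = (∫ u in a..1, (f u - 1) / u) + (1 + β) * (- Real.log a) := by
    intro a ha
    have hcg : Set.EqOn (fun u => (f u + β) / u)
        (fun u => (f u - 1) / u + (1 + β) * u⁻¹) (Set.uIcc a 1) := by
      intro u hu
      have h0 : u ≠ 0 := ne_of_gt (huIcc a ha hu)
      field_simp
      ring
    rw [intervalIntegral.integral_congr hcg,
      intervalIntegral.integral_add (hqII a ha) ((hinvII a ha).const_mul _)]
    congr 1
    rw [intervalIntegral.integral_const_mul,
      integral_inv (fun h => lt_irrefl (0:ℝ) (huIcc a ha h))]
    rw [one_div, Real.log_inv]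
  -- split the integral over Ioi a at 1
  have hsplit : ∀ a : ℝ, 0 < a → (∫ u in Set.Ioi a, (f u + β) / u)
      = (∫ u in a..1, (f u + β) / u) + ∫ u in Set.Ioi (1:ℝ), (f u + β) / u := by
    intro a ha
    rcases le_or_gt a 1 with ha1 | ha1
    · rw [← Set.Ioc_union_Ioi_eq_Ioi ha1,
        setIntegral_union Set.Ioc_disjoint_Ioi_same measurableSet_Ioi
          ((hFIoi a ha).mono_set Set.Ioc_subset_Ioi_self) (hFIoi 1 one_pos),
        intervalIntegral.integral_of_le ha1]
    · have h2 : (∫ u in Set.Ioi (1:ℝ), (f u + β) / u)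
          = (∫ u in Set.Ioc 1 a, (f u + β) / u) + ∫ u in Set.Ioi a, (f u + β) / u := by
        rw [← setIntegral_union Set.Ioc_disjoint_Ioi_same measurableSet_Ioi
          ((hFIoi 1 one_pos).mono_set Set.Ioc_subset_Ioi_self) (hFIoi a ha),
          Set.Ioc_union_Ioi_eq_Ioi ha1.le]
      have h3 : (∫ u in a..1, (f u + β) / u) = - ∫ u in Set.Ioc 1 a, (f u + β) / u := by
        rw [intervalIntegral.integral_symm, intervalIntegral.integral_of_le ha1.le]
      linarith
  -- difference of the q-integral from its limit
  have hqdiff : ∀ a : ℝ, 0 < a →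
      |(∫ u in a..1, (f u - 1) / u) - ∫ u in Set.Ioc (0:ℝ) 1, (f u - 1) / u|
        ≤ (2 * C₀ + 1 + β) * a := by
    intro a ha
    rcases le_or_gt a 1 with ha1 | ha1
    · have hA : (∫ u in Set.Ioc (0:ℝ) 1, (f u - 1) / u)
          = (∫ u in Set.Ioc (0:ℝ) a, (f u - 1) / u) + ∫ u in Set.Ioc a 1, (f u - 1) / u := by
        rw [← setIntegral_union (Set.Ioc_disjoint_Ioc_of_le le_rfl) measurableSet_Ioc
          (hqint01.mono_set (Set.Ioc_subset_Ioc_right ha1))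
          (hqint01.mono_set (Set.Ioc_subset_Ioc_left ha.le)),
          Set.Ioc_union_Ioc_eq_Ioc ha.le ha1]
      rw [intervalIntegral.integral_of_le ha1, hA]
      have heq : (∫ u in Set.Ioc a 1, (f u - 1) / u)
          - ((∫ u in Set.Ioc (0:ℝ) a, (f u - 1) / u) + ∫ u in Set.Ioc a 1, (f u - 1) / u)
          = -(∫ u in Set.Ioc (0:ℝ) a, (f u - 1) / u) := by ring
      rw [heq, abs_neg]
      nlinarith [hqsmall a ha ha1]
    · have h3 : (∫ u in a..1, (f u - 1) / u) = - ∫ u in Set.Ioc 1 a, (f u - 1) / u := by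
        rw [intervalIntegral.integral_symm, intervalIntegral.integral_of_le ha1.le]
      have hbd : |∫ u in Set.Ioc (1:ℝ) a, (f u - 1) / u| ≤ (C₀ + 1 + β) * (a - 1) := by
        have h4 := norm_setIntegral_le_of_norm_le_const (μ := volume)
          (s := Set.Ioc (1:ℝ) a) (f := fun u => (f u - 1) / u) (C := C₀ + 1 + β)
          measure_Ioc_lt_top
          (fun x hx => by rw [Real.norm_eq_abs]; exact hqbd2 x hx.1.le)
        rw [Real.volume_real_Ioc_of_le ha1.le] at h4
        rw [Real.norm_eq_abs] at h4
        exact h4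
      have hbdA : |∫ u in Set.Ioc (0:ℝ) 1, (f u - 1) / u| ≤ C₀ * 1 :=
        hqsmall 1 one_pos le_rfl
      rw [h3]
      have heq : -(∫ u in Set.Ioc (1:ℝ) a, (f u - 1) / u)
          - (∫ u in Set.Ioc (0:ℝ) 1, (f u - 1) / u)
          = -((∫ u in Set.Ioc (1:ℝ) a, (f u - 1) / u)
            + ∫ u in Set.Ioc (0:ℝ) 1, (f u - 1) / u) := by ring
      rw [heq, abs_neg]
      calc |(∫ u in Set.Ioc (1:ℝ) a, (f u - 1) / u) + ∫ u in Set.Ioc (0:ℝ) 1, (f u - 1) / u|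
          ≤ |∫ u in Set.Ioc (1:ℝ) a, (f u - 1) / u|
            + |∫ u in Set.Ioc (0:ℝ) 1, (f u - 1) / u| := abs_add_le _ _
        _ ≤ (C₀ + 1 + β) * (a - 1) + C₀ * 1 := add_le_add hbd hbdA
        _ ≤ (2 * C₀ + 1 + β) * a := by nlinarith [mul_pos hC₀ (lt_trans one_pos ha1)]
  -- final assembly
  refine ⟨fun τ => hgint τ, K / (η - 1), div_pos hKpos hη1,
    (2 * C₀ + 1 + β) * Real.exp dstar / (η - 1),
    div_pos (mul_pos (by linarith) (Real.exp_pos _)) hη1, ?_, ?_⟩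
  · intro τ _
    have heq : (-(β + 1) * τ + ∫ θ in Set.Iic τ, g θ) + (β + 1) * τ
        = ∫ θ in Set.Iic τ, g θ := by ring
    rw [heq]
    exact hintbound τ
  · intro τ _
    have hapos : 0 < φ τ := hφpos τ
    have hloga : Real.log (φ τ) = (1 - η) * τ + dstar := by
      simp only [hφdef, Real.log_exp]
    have hkey : (η - 1) * (∫ θ in Set.Iic τ, g θ)
        = ((∫ u in (φ τ)..1, (f u - 1) / u) + (1 + β) * (-((1 - η) * τ + dstar)))
          + ∫ u in Set.Ioi (1:ℝ), (f u + β) / u := by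
      rw [← hcov τ, integral_Ici_eq_integral_Ioi, hsplit (φ τ) hapos, hFq (φ τ) hapos, hloga]
    have hηne : η - 1 ≠ 0 := ne_of_gt hη1
    have hE : (-(β + 1) * τ + ∫ θ in Set.Iic τ, g θ)
        - (((∫ u in Set.Ioc (0:ℝ) 1, (f u - 1) / u)
            + ∫ u in Set.Ioi (1:ℝ), (f u + β) / u) - dstar * (β + 1)) / (η - 1)
        = ((∫ u in (φ τ)..1, (f u - 1) / u)
            - ∫ u in Set.Ioc (0:ℝ) 1, (f u - 1) / u) / (η - 1) := by
      field_simp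
      linarith [hkey]
    rw [hE, abs_div, abs_of_pos hη1, div_le_iff₀ hη1]
    have haval : φ τ = Real.exp dstar * Real.exp ((1 - η) * τ) := by
      simp only [hφdef, ← Real.exp_add]
      ring_nf
    calc |(∫ u in (φ τ)..1, (f u - 1) / u) - ∫ u in Set.Ioc (0:ℝ) 1, (f u - 1) / u|
        ≤ (2 * C₀ + 1 + β) * φ τ := hqdiff (φ τ) hapos
      _ = (2 * C₀ + 1 + β) * Real.exp dstar / (η - 1) * Real.exp ((1 - η) * τ) * (η - 1) := by
          rw [haval]; field_simp
end

section
/- Let β > 0, a > 0, L ∈ ℝ, and let f : [0,∞) → ℝ be continuous with |f(u) − 1| ≤ C₀·u for all u ∈ [0,1] and |f(u) + β| ≤ C₀/u for all u ≥ 1, for some constant C₀ > 0. Define W(τ) = ∫_{−∞}^{τ} (f(e^{a·θ + L}) − 1) dθ, d₂ = ∫₀¹ (f(u)−1)/u du + ∫₁^∞ (f(u)+β)/u du and D₃ = (d₂ − (β+1)·L)/a. Then the integral defining W(τ) converges for every real τ, and there exist constants C₁, C₂ > 0 such that |W(τ)| ≤ C₁·e^{aτ} for all τ ≤ 0, and |W(τ)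 + (β+1)·τ − D₃| ≤ C₂·e^{−aτ} for all τ ≥ 0. -/
open Real MeasureTheory Set

lemma aux_exp_Ioi {b : ℝ} (hb : 0 < b) (d : ℝ) :
    ∫ x in Set.Ioi d, Real.exp (-(b*x)) = Real.exp (-(b*d))/b := by
  have h := MeasureTheory.integral_comp_mul_left_Ioi (fun y : ℝ => Real.exp (-y)) d hb
  rw [h, integral_exp_neg_Ioi, smul_eq_mul]
  ring

lemma aux_intOn_exp_Ioi {b : ℝ} (hb : 0 < b) (d : ℝ) :
    IntegrableOn (fun x : ℝ => Real.exp (-(b*x))) (Set.Ioi d) := by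
  simpa [neg_mul] using exp_neg_integrableOn_Ioi d hb

lemma aux_intOn_exp_Iic {b : ℝ} (hb : 0 < b) (c : ℝ) :
    IntegrableOn (fun x : ℝ => Real.exp (b*x)) (Set.Iic c) := by
  rw [integrableOn_Iic_iff_integrableOn_Iio]
  have h1 := aux_intOn_exp_Ioi hb (-c)
  have h2 : Integrable ((Set.Ioi (-c)).indicator fun x : ℝ => Real.exp (-(b*x))) :=
    (integrable_indicator_iff measurableSet_Ioi).2 h1
  have h3 := h2.comp_neg
  have h4 : (fun x : ℝ => (Set.Ioi (-c)).indicator (fun y : ℝ => Real.exp (-(b*y))) (-x))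
      = (Set.Iio c).indicator (fun x : ℝ => Real.exp (b*x)) := by
    ext x
    by_cases hx : x < c
    · rw [Set.indicator_of_mem (by simpa using hx), Set.indicator_of_mem (by simpa using hx)]
      ring_nf
    · rw [Set.indicator_of_notMem (by simpa using hx), Set.indicator_of_notMem (by simpa using hx)]
  rw [h4] at h3
  exact (integrable_indicator_iff measurableSet_Iio).1 h3

lemma aux_exp_Iic {b : ℝ} (hb : 0 < b) (c : ℝ) :
    ∫ x in Set.Iic c, Real.exp (b*x) = Real.exp (b*c)/b := by
  have h := integral_comp_neg_Iic c (fun x : ℝ => Real.exp (-(b*x)))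
  simp only [neg_neg, mul_neg] at h
  rw [h, aux_exp_Ioi hb, mul_neg, neg_neg]

set_option maxHeartbeats 2000000 in
/-- asymptotics of the boundary-layer function
`W(τ) = ∫_{-∞}^τ (f(e^{aθ+L})-1) dθ` (the paper's `W_{l,k}` with slope `a = ẏ*(l_k) > 0`):
the integral converges for every `τ`, `W(τ) = O(e^{aτ})` as `τ → -∞` and
`W(τ) = -(β+1)τ + D₃ + O(e^{-aτ})` as `τ → +∞`, where `D₃ = (d₂ - (β+1)L)/a`. -/
theorem stmt_6 (β a L C₀ : ℝ) (hβ : 0 < β) (ha : 0 < a) (hC₀ : 0 < C₀)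
    (f : ℝ → ℝ) (hfc : ContinuousOn f (Set.Ici 0))
    (hf0 : ∀ u ∈ Set.Icc (0:ℝ) 1, |f u - 1| ≤ C₀ * u)
    (hfinf : ∀ u : ℝ, 1 ≤ u → |f u + β| ≤ C₀ / u) :
    (∀ τ : ℝ, IntegrableOn (fun θ => f (Real.exp (a * θ + L)) - 1) (Set.Iic τ)) ∧
    ∃ C₁ > (0:ℝ), ∃ C₂ > (0:ℝ),
      (∀ τ : ℝ, τ ≤ 0 →
        |∫ θ in Set.Iic τ, (f (Real.exp (a * θ + L)) - 1)| ≤ C₁ * Real.exp (a * τ)) ∧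
      (∀ τ : ℝ, 0 ≤ τ →
        |(∫ θ in Set.Iic τ, (f (Real.exp (a * θ + L)) - 1)) + (β + 1) * τ
            - (((∫ u in Set.Ioc (0:ℝ) 1, (f u - 1) / u)
                + ∫ u in Set.Ioi (1:ℝ), (f u + β) / u) - (β + 1) * L) / a|
          ≤ C₂ * Real.exp (-a * τ)) := by
  set g : ℝ → ℝ := fun θ => f (Real.exp (a * θ + L)) - 1 with hg_def
  set h : ℝ → ℝ := fun θ => f (Real.exp (a * θ + L)) + β with hh_def
  set τ₀ : ℝ := -L / a with hτ₀_def
  have hτ₀ : a * τ₀ + L = 0 := by rw [hτ₀_def, mul_div_assoc', mul_neg, neg_div, mul_div_cancel_left₀ L ha.ne']; ring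
  -- continuity
  have hfe : Continuous fun θ : ℝ => f (Real.exp (a * θ + L)) := by
    rw [continuous_iff_continuousAt]
    intro θ
    have hin : Continuous fun θ : ℝ => Real.exp (a * θ + L) := by fun_prop
    exact ContinuousAt.comp (g := f) (hfc.continuousAt (Ici_mem_nhds (exp_pos _))) hin.continuousAt
  have hgc : Continuous g := hfe.sub continuous_const
  have hhc : Continuous h := hfe.add continuous_const
  -- pointwise bounds
  have hexp_le : ∀ θ : ℝ, θ ≤ τ₀ → Real.exp (a * θ + L) ≤ 1 := by
    intro θ hθ
    rw [show (1:ℝ) = Real.exp 0 by simp]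
    apply Real.exp_le_exp.2
    nlinarith [mul_le_mul_of_nonneg_left hθ ha.le]
  have hexp_ge : ∀ θ : ℝ, τ₀ ≤ θ → 1 ≤ Real.exp (a * θ + L) := by
    intro θ hθ
    rw [show (1:ℝ) = Real.exp 0 by simp]
    apply Real.exp_le_exp.2
    nlinarith [mul_le_mul_of_nonneg_left hθ ha.le]
  have bound_g_low : ∀ θ : ℝ, θ ≤ τ₀ → |g θ| ≤ C₀ * Real.exp L * Real.exp (a * θ) := by
    intro θ hθ
    have := hf0 (Real.exp (a * θ + L)) ⟨(exp_pos _).le, hexp_le θ hθ⟩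
    calc |g θ| ≤ C₀ * Real.exp (a * θ + L) := this
      _ = C₀ * Real.exp L * Real.exp (a * θ) := by rw [Real.exp_add]; ring
  have bound_h_hi : ∀ θ : ℝ, τ₀ ≤ θ → |h θ| ≤ C₀ * Real.exp (-L) * Real.exp (-(a * θ)) := by
    intro θ hθ
    have := hfinf (Real.exp (a * θ + L)) (hexp_ge θ hθ)
    calc |h θ| ≤ C₀ / Real.exp (a * θ + L) := this
      _ = C₀ * Real.exp (-L) * Real.exp (-(a * θ)) := by
          rw [div_eq_mul_inv, ← Real.exp_neg, neg_add, Real.exp_add]; ring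
  have bound_g_hi : ∀ θ : ℝ, τ₀ ≤ θ → |g θ| ≤ C₀ + β + 1 := by
    intro θ hθ
    have h1 := hfinf (Real.exp (a * θ + L)) (hexp_ge θ hθ)
    have h2 : C₀ / Real.exp (a * θ + L) ≤ C₀ := by
      rw [div_le_iff₀ (exp_pos _)]
      nlinarith [hexp_ge θ hθ]
    have : |g θ| = |h θ - (β + 1)| := by
      congr 1; simp only [hg_def, hh_def]; ring
    rw [this]
    calc |h θ - (β + 1)| ≤ |h θ| + |β + 1| := abs_sub _ _
      _ ≤ C₀ + (β + 1) := by
          have : |β + 1| = β + 1 := abs_of_pos (by linarith)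
          rw [this]; gcongr; exact h1.trans h2
      _ = C₀ + β + 1 := by ring
  have bound_h_low : ∀ θ : ℝ, θ ≤ τ₀ → |h θ| ≤ C₀ + β + 1 := by
    intro θ hθ
    have h1 := hf0 (Real.exp (a * θ + L)) ⟨(exp_pos _).le, hexp_le θ hθ⟩
    have h2 : C₀ * Real.exp (a * θ + L) ≤ C₀ := by nlinarith [hexp_le θ hθ, (exp_pos (a*θ+L)).le]
    have : |h θ| = |g θ + (β + 1)| := by
      congr 1; simp only [hg_def, hh_def]; ring
    rw [this]
    calc |g θ + (β + 1)| ≤ |g θ| + |β + 1| := abs_add_le _ _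
      _ ≤ C₀ + (β + 1) := by
          have : |β + 1| = β + 1 := abs_of_pos (by linarith)
          rw [this]; gcongr; exact h1.trans h2
      _ = C₀ + β + 1 := by ring
  clear_value g h τ₀
  -- integrability of dominating exponentials
  have hEl : ∀ c : ℝ, IntegrableOn (fun θ : ℝ => C₀ * Real.exp L * Real.exp (a * θ)) (Iic c) :=
    fun c => (aux_intOn_exp_Iic ha c).const_mul _
  have hEr : ∀ c : ℝ, IntegrableOn (fun θ : ℝ => C₀ * Real.exp (-L) * Real.exp (-(a * θ))) (Ioi c) :=
    fun c => (aux_intOn_exp_Ioi ha c).const_mul _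
  -- integrability of g on Iic, h on Ioi
  have Ig0 : IntegrableOn g (Iic τ₀) := by
    refine Integrable.mono' (hEl τ₀) hgc.aestronglyMeasurable ?_
    refine (ae_restrict_iff' measurableSet_Iic).2 (ae_of_all _ fun θ hθ => ?_)
    rw [Real.norm_eq_abs]
    exact bound_g_low θ hθ
  have Ih0 : IntegrableOn h (Ioi τ₀) := by
    refine Integrable.mono' (hEr τ₀) hhc.aestronglyMeasurable ?_
    refine (ae_restrict_iff' measurableSet_Ioi).2 (ae_of_all _ fun θ hθ => ?_)
    rw [Real.norm_eq_abs]
    exact bound_h_hi θ (le_of_lt hθ)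
  have Ig : ∀ τ : ℝ, IntegrableOn g (Iic τ) := by
    intro τ
    rcases le_total τ τ₀ with hc | hc
    · exact Ig0.mono_set (Iic_subset_Iic.2 hc)
    · rw [← Iic_union_Ioc_eq_Iic hc]
      exact Ig0.union hgc.integrableOn_Ioc
  have Ih : ∀ τ : ℝ, IntegrableOn h (Ioi τ) := by
    intro τ
    rcases le_total τ τ₀ with hc | hc
    · rw [← Ioc_union_Ioi_eq_Ioi hc]
      exact hhc.integrableOn_Ioc.union Ih0
    · exact Ih0.mono_set (Ioi_subset_Ioi hc)
  -- tail bounds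
  have Wlow : ∀ τ : ℝ, τ ≤ τ₀ → |∫ θ in Iic τ, g θ| ≤ C₀ * Real.exp L / a * Real.exp (a * τ) := by
    intro τ hτ
    have h1 : |∫ θ in Iic τ, g θ| ≤ ∫ θ in Iic τ, C₀ * Real.exp L * Real.exp (a * θ) := by
      rw [← Real.norm_eq_abs]
      refine norm_integral_le_of_norm_le (hEl τ) ?_
      refine (ae_restrict_iff' measurableSet_Iic).2 (ae_of_all _ fun θ hθ => ?_)
      rw [Real.norm_eq_abs]
      exact bound_g_low θ (le_trans hθ hτ)
    have h2 : (∫ θ in Iic τ, C₀ * Real.exp L * Real.exp (a * θ))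
        = C₀ * Real.exp L / a * Real.exp (a * τ) := by
      rw [MeasureTheory.integral_const_mul, aux_exp_Iic ha]
      ring
    linarith
  have Hhi : ∀ τ : ℝ, τ₀ ≤ τ → |∫ θ in Ioi τ, h θ| ≤ C₀ * Real.exp (-L) / a * Real.exp (-(a * τ)) := by
    intro τ hτ
    have h1 : |∫ θ in Ioi τ, h θ| ≤ ∫ θ in Ioi τ, C₀ * Real.exp (-L) * Real.exp (-(a * θ)) := by
      rw [← Real.norm_eq_abs]
      refine norm_integral_le_of_norm_le (hEr τ) ?_
      refine (ae_restrict_iff' measurableSet_Ioi).2 (ae_of_all _ fun θ hθ => ?_)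
      rw [Real.norm_eq_abs]
      exact bound_h_hi θ (le_trans hτ (le_of_lt hθ))
    have h2 : (∫ θ in Ioi τ, C₀ * Real.exp (-L) * Real.exp (-(a * θ)))
        = C₀ * Real.exp (-L) / a * Real.exp (-(a * τ)) := by
      rw [MeasureTheory.integral_const_mul, aux_exp_Ioi ha]
      ring
    linarith
  -- change of variables
  have hd : ∀ θ : ℝ, HasDerivAt (fun t : ℝ => Real.exp (a * t + L)) (a * Real.exp (a * θ + L)) θ := by
    intro θ
    have h1 : HasDerivAt (fun t : ℝ => a * t + L) a θ := by
      simpa using ((hasDerivAt_id θ).const_mul a).add_const L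
    simpa [mul_comm] using h1.exp
  have hmono : StrictMono fun t : ℝ => Real.exp (a * t + L) := by
    intro x y hxy
    exact Real.exp_lt_exp.2 (by nlinarith)
  have himg1 : (fun t : ℝ => Real.exp (a * t + L)) '' Iic τ₀ = Ioc (0:ℝ) 1 := by
    ext u
    simp only [mem_image, mem_Iic, mem_Ioc]
    constructor
    · rintro ⟨θ, hθ, rfl⟩
      exact ⟨exp_pos _, hexp_le θ hθ⟩
    · rintro ⟨hu0, hu1⟩
      refine ⟨(Real.log u - L) / a, ?_, ?_⟩
      · rw [hτ₀_def, div_le_div_iff₀ ha ha]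
        nlinarith [Real.log_nonpos hu0.le hu1]
      · have hlog : a * ((Real.log u - L) / a) + L = Real.log u := by field_simp; ring
        rw [hlog, Real.exp_log hu0]
  have himg2 : (fun t : ℝ => Real.exp (a * t + L)) '' Ioi τ₀ = Ioi (1:ℝ) := by
    ext u
    simp only [mem_image, mem_Ioi]
    constructor
    · rintro ⟨θ, hθ, rfl⟩
      have hpos : 0 < a * θ + L := by nlinarith [(mul_lt_mul_iff_right₀ ha).2 hθ]
      calc (1:ℝ) = Real.exp 0 := by simp
        _ < _ := Real.exp_lt_exp.2 hpos
    · intro hu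
      have hu0 : (0:ℝ) < u := by linarith
      refine ⟨(Real.log u - L) / a, ?_, ?_⟩
      · rw [hτ₀_def, div_lt_div_iff₀ ha ha]
        nlinarith [Real.log_pos hu]
      · have hlog : a * ((Real.log u - L) / a) + L = Real.log u := by field_simp; ring
        rw [hlog, Real.exp_log hu0]
  have sub1 : (∫ u in Ioc (0:ℝ) 1, (f u - 1) / u) = a * ∫ θ in Iic τ₀, g θ := by
    rw [← himg1, integral_image_eq_integral_abs_deriv_smul measurableSet_Iic
      (fun θ _ => (hd θ).hasDerivWithinAt) hmono.injective.injOn (fun u => (f u - 1) / u)]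
    have hpt : ∀ θ : ℝ, |a * Real.exp (a * θ + L)| •
        ((f (Real.exp (a * θ + L)) - 1) / Real.exp (a * θ + L)) = a * g θ := by
      intro θ
      have hne := (Real.exp_pos (a * θ + L)).ne'
      rw [smul_eq_mul, abs_of_pos (mul_pos ha (Real.exp_pos _))]
      simp only [hg_def]
      field_simp
    simp_rw [hpt]
    exact MeasureTheory.integral_const_mul a g
  have sub2 : (∫ u in Ioi (1:ℝ), (f u + β) / u) = a * ∫ θ in Ioi τ₀, h θ := by
    rw [← himg2, integral_image_eq_integral_abs_deriv_smul measurableSet_Ioi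
      (fun θ _ => (hd θ).hasDerivWithinAt) hmono.injective.injOn (fun u => (f u + β) / u)]
    have hpt : ∀ θ : ℝ, |a * Real.exp (a * θ + L)| •
        ((f (Real.exp (a * θ + L)) + β) / Real.exp (a * θ + L)) = a * h θ := by
      intro θ
      have hne := (Real.exp_pos (a * θ + L)).ne'
      rw [smul_eq_mul, abs_of_pos (mul_pos ha (Real.exp_pos _))]
      simp only [hh_def]
      field_simp
    simp_rw [hpt]
    exact MeasureTheory.integral_const_mul a h
  -- key identity
  have hconst : ∀ s t : ℝ, IntegrableOn (fun _ : ℝ => (β + 1 : ℝ)) (Ioc s t) :=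
    fun s t => integrableOn_const measure_Ioc_lt_top.ne
  have hpt : ∀ θ : ℝ, g θ = h θ - (β + 1) := by
    intro θ; simp only [hg_def, hh_def]; ring
  have key : ∀ τ : ℝ, (∫ θ in Iic τ, g θ)
      = (∫ θ in Iic τ₀, g θ) + (∫ θ in Ioi τ₀, h θ) + (β + 1) * (τ₀ - τ) - ∫ θ in Ioi τ, h θ := by
    intro τ
    rcases le_total τ₀ τ with hc | hc
    · have e1 : (∫ θ in Iic τ, g θ) = (∫ θ in Iic τ₀, g θ) + ∫ θ in Ioc τ₀ τ, g θ := by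
        rw [← Iic_union_Ioc_eq_Iic hc]
        exact setIntegral_union (Iic_disjoint_Ioc le_rfl) measurableSet_Ioc Ig0 hgc.integrableOn_Ioc
      have e2 : (∫ θ in Ioi τ₀, h θ) = (∫ θ in Ioc τ₀ τ, h θ) + ∫ θ in Ioi τ, h θ := by
        rw [← Ioc_union_Ioi_eq_Ioi hc]
        exact setIntegral_union (Ioc_disjoint_Ioi le_rfl) measurableSet_Ioi
          hhc.integrableOn_Ioc (Ih τ)
      have e3 : (∫ θ in Ioc τ₀ τ, g θ) = (∫ θ in Ioc τ₀ τ, h θ) - (β + 1) * (τ - τ₀) := by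
        simp_rw [hpt]
        rw [integral_sub hhc.integrableOn_Ioc (hconst _ _), setIntegral_const, Real.volume_real_Ioc_of_le (by linarith), smul_eq_mul]
        ring
      linarith
    · have e1 : (∫ θ in Iic τ₀, g θ) = (∫ θ in Iic τ, g θ) + ∫ θ in Ioc τ τ₀, g θ := by
        rw [← Iic_union_Ioc_eq_Iic hc]
        exact setIntegral_union (Iic_disjoint_Ioc le_rfl) measurableSet_Ioc (Ig τ)
          hgc.integrableOn_Ioc
      have e2 : (∫ θ in Ioi τ, h θ) = (∫ θ in Ioc τ τ₀, h θ) + ∫ θ in Ioi τ₀, h θ := by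
        rw [← Ioc_union_Ioi_eq_Ioi hc]
        exact setIntegral_union (Ioc_disjoint_Ioi le_rfl) measurableSet_Ioi
          hhc.integrableOn_Ioc Ih0
      have e3 : (∫ θ in Ioc τ τ₀, g θ) = (∫ θ in Ioc τ τ₀, h θ) - (β + 1) * (τ₀ - τ) := by
        simp_rw [hpt]
        rw [integral_sub hhc.integrableOn_Ioc (hconst _ _), setIntegral_const, Real.volume_real_Ioc_of_le (by linarith), smul_eq_mul]
        ring
      linarith
  -- assembly
  refine ⟨Ig, ?_⟩
  set Mneg : ℝ := (C₀ + β + 1) * max (-τ₀) 0 + C₀ * Real.exp L / a with hMneg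
  set Mpos : ℝ := (C₀ + β + 1) * max τ₀ 0 + C₀ * Real.exp (-L) / a with hMpos
  clear_value Mneg Mpos
  have hMneg0 : 0 ≤ Mneg := by
    rw [hMneg]
    have h1 : 0 ≤ (C₀ + β + 1) * max (-τ₀) 0 := mul_nonneg (by linarith) (le_max_right _ _)
    have h2 : 0 < C₀ * Real.exp L / a := by positivity
    linarith
  have hMpos0 : 0 ≤ Mpos := by
    rw [hMpos]
    have h1 : 0 ≤ (C₀ + β + 1) * max τ₀ 0 := mul_nonneg (by linarith) (le_max_right _ _)
    have h2 : 0 < C₀ * Real.exp (-L) / a := by positivity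
    linarith
  refine ⟨(Mneg + 1) * Real.exp (a * max (-τ₀) 0),
    mul_pos (by linarith) (Real.exp_pos _),
    (Mpos + 1) * Real.exp (a * max τ₀ 0),
    mul_pos (by linarith) (Real.exp_pos _), ?_, ?_⟩
  · -- τ ≤ 0
    intro τ hτ
    rcases le_total τ τ₀ with hc | hc
    · have h1 := Wlow τ hc
      have e1 : 1 ≤ Real.exp (a * max (-τ₀) 0) :=
        Real.one_le_exp (mul_nonneg ha.le (le_max_right _ _))
      have h2 : C₀ * Real.exp L / a ≤ (Mneg + 1) * Real.exp (a * max (-τ₀) 0) := by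
        have h3 : 0 ≤ (C₀ + β + 1) * max (-τ₀) 0 := mul_nonneg (by linarith) (le_max_right _ _)
        have hle : C₀ * Real.exp L / a ≤ Mneg := by rw [hMneg]; linarith
        have h4 := mul_le_mul_of_nonneg_left e1 (show (0:ℝ) ≤ Mneg + 1 by linarith)
        rw [mul_one] at h4
        linarith
      calc |∫ θ in Iic τ, g θ| ≤ C₀ * Real.exp L / a * Real.exp (a * τ) := h1
        _ ≤ (Mneg + 1) * Real.exp (a * max (-τ₀) 0) * Real.exp (a * τ) :=
            mul_le_mul_of_nonneg_right h2 (Real.exp_pos _).le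
    · have hτ₀neg : τ₀ ≤ 0 := le_trans hc hτ
      have hmax : max (-τ₀) 0 = -τ₀ := max_eq_left (by linarith)
      have e1 : (∫ θ in Iic τ, g θ) = (∫ θ in Iic τ₀, g θ) + ∫ θ in Ioc τ₀ τ, g θ := by
        rw [← Iic_union_Ioc_eq_Iic hc]
        exact setIntegral_union (Iic_disjoint_Ioc le_rfl) measurableSet_Ioc Ig0 hgc.integrableOn_Ioc
      have b1 : |∫ θ in Iic τ₀, g θ| ≤ C₀ * Real.exp L / a := by
        have h1 := Wlow τ₀ le_rfl
        have he : Real.exp (a * τ₀) ≤ 1 := by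
          rw [show (1:ℝ) = Real.exp 0 by simp]
          exact Real.exp_le_exp.2 (by nlinarith [mul_nonneg ha.le (neg_nonneg.2 hτ₀neg)])
        nlinarith [Real.exp_pos (a * τ₀), abs_nonneg (∫ θ in Iic τ₀, g θ),
          mul_pos (mul_pos hC₀ (Real.exp_pos L)) (inv_pos.2 ha)]
      have b2 : |∫ θ in Ioc τ₀ τ, g θ| ≤ (C₀ + β + 1) * (τ - τ₀) := by
        rw [← Real.norm_eq_abs]
        have hb := norm_setIntegral_le_of_norm_le_const (μ := volume) (s := Ioc τ₀ τ)
          (C := C₀ + β + 1) measure_Ioc_lt_top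
          (fun θ hθ => by rw [Real.norm_eq_abs]; exact bound_g_hi θ hθ.1.le)
        rwa [Real.volume_real_Ioc_of_le (by linarith)] at hb
      have hE : 1 ≤ Real.exp (a * -τ₀) * Real.exp (a * τ) := by
        rw [← Real.exp_add]
        apply Real.one_le_exp
        linarith [mul_le_mul_of_nonneg_left hc ha.le]
      rw [e1, hmax]
      calc |(∫ θ in Iic τ₀, g θ) + ∫ θ in Ioc τ₀ τ, g θ|
          ≤ |∫ θ in Iic τ₀, g θ| + |∫ θ in Ioc τ₀ τ, g θ| := abs_add_le _ _
        _ ≤ Mneg := by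
            rw [hMneg, hmax]
            nlinarith [b1, b2, mul_nonneg (show (0:ℝ) ≤ C₀ + β + 1 by linarith) (neg_nonneg.2 hτ)]
        _ ≤ (Mneg + 1) * (Real.exp (a * -τ₀) * Real.exp (a * τ)) := by
            have h4 := mul_le_mul_of_nonneg_left hE (show (0:ℝ) ≤ Mneg + 1 by linarith)
            rw [mul_one] at h4
            linarith
        _ = (Mneg + 1) * Real.exp (a * -τ₀) * Real.exp (a * τ) := by ring
  · -- τ ≥ 0
    intro τ hτ
    have hD : (((∫ u in Ioc (0:ℝ) 1, (f u - 1) / u) + ∫ u in Ioi (1:ℝ), (f u + β) / u)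
        - (β + 1) * L) / a
        = (∫ θ in Iic τ₀, g θ) + (∫ θ in Ioi τ₀, h θ) + (β + 1) * τ₀ := by
      rw [sub1, sub2, hτ₀_def]
      field_simp
      ring
    rw [hD, neg_mul]
    have hkey := key τ
    have hrw : (∫ θ in Iic τ, g θ) + (β + 1) * τ
        - ((∫ θ in Iic τ₀, g θ) + (∫ θ in Ioi τ₀, h θ) + (β + 1) * τ₀)
        = -∫ θ in Ioi τ, h θ := by
      rw [hkey]; ring
    rw [hrw, abs_neg]
    rcases le_total τ₀ τ with hc | hc
    · have h1 := Hhi τ hc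
      have e1 : 1 ≤ Real.exp (a * max τ₀ 0) :=
        Real.one_le_exp (mul_nonneg ha.le (le_max_right _ _))
      have h2 : C₀ * Real.exp (-L) / a ≤ (Mpos + 1) * Real.exp (a * max τ₀ 0) := by
        have h3 : 0 ≤ (C₀ + β + 1) * max τ₀ 0 := mul_nonneg (by linarith) (le_max_right _ _)
        have hle : C₀ * Real.exp (-L) / a ≤ Mpos := by rw [hMpos]; linarith
        have h4 := mul_le_mul_of_nonneg_left e1 (show (0:ℝ) ≤ Mpos + 1 by linarith)
        rw [mul_one] at h4
        linarith
      calc |∫ θ in Ioi τ, h θ| ≤ C₀ * Real.exp (-L) / a * Real.exp (-(a * τ)) := h1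
        _ ≤ (Mpos + 1) * Real.exp (a * max τ₀ 0) * Real.exp (-(a * τ)) :=
            mul_le_mul_of_nonneg_right h2 (Real.exp_pos _).le
    · have hτ₀pos : 0 ≤ τ₀ := le_trans hτ hc
      have hmax : max τ₀ 0 = τ₀ := max_eq_left hτ₀pos
      have e2 : (∫ θ in Ioi τ, h θ) = (∫ θ in Ioc τ τ₀, h θ) + ∫ θ in Ioi τ₀, h θ := by
        rw [← Ioc_union_Ioi_eq_Ioi hc]
        exact setIntegral_union (Ioc_disjoint_Ioi le_rfl) measurableSet_Ioi
          hhc.integrableOn_Ioc Ih0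
      have b1 : |∫ θ in Ioc τ τ₀, h θ| ≤ (C₀ + β + 1) * (τ₀ - τ) := by
        rw [← Real.norm_eq_abs]
        have hb := norm_setIntegral_le_of_norm_le_const (μ := volume) (s := Ioc τ τ₀)
          (C := C₀ + β + 1) measure_Ioc_lt_top
          (fun θ hθ => by rw [Real.norm_eq_abs]; exact bound_h_low θ hθ.2)
        rwa [Real.volume_real_Ioc_of_le (by linarith)] at hb
      have b2 : |∫ θ in Ioi τ₀, h θ| ≤ C₀ * Real.exp (-L) / a := by
        have h1 := Hhi τ₀ le_rfl
        have he : Real.exp (-(a * τ₀)) ≤ 1 := by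
          rw [show (1:ℝ) = Real.exp 0 by simp]
          exact Real.exp_le_exp.2 (by nlinarith [mul_nonneg ha.le hτ₀pos])
        nlinarith [Real.exp_pos (-(a * τ₀)), abs_nonneg (∫ θ in Ioi τ₀, h θ),
          mul_pos (mul_pos hC₀ (Real.exp_pos (-L))) (inv_pos.2 ha)]
      have hE : 1 ≤ Real.exp (a * τ₀) * Real.exp (-(a * τ)) := by
        rw [← Real.exp_add]
        apply Real.one_le_exp
        linarith [mul_le_mul_of_nonneg_left hc ha.le]
      rw [e2, hmax]
      calc |(∫ θ in Ioc τ τ₀, h θ) + ∫ θ in Ioi τ₀, h θ|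
          ≤ |∫ θ in Ioc τ τ₀, h θ| + |∫ θ in Ioi τ₀, h θ| := abs_add_le _ _
        _ ≤ Mpos := by
            rw [hMpos, hmax]
            nlinarith [b1, b2, mul_nonneg (show (0:ℝ) ≤ C₀ + β + 1 by linarith) hτ]
        _ ≤ (Mpos + 1) * (Real.exp (a * τ₀) * Real.exp (-(a * τ))) := by
            have h4 := mul_le_mul_of_nonneg_left hE (show (0:ℝ) ≤ Mpos + 1 by linarith)
            rw [mul_one] at h4
            linarith
        _ = (Mpos + 1) * Real.exp (a * τ₀) * Real.exp (-(a * τ)) := by ring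
end

section
/- Let β > 0, b > 0, R ∈ ℝ, and let f : [0,∞) → ℝ be continuous with |f(u) − 1| ≤ C₀·u for all u ∈ [0,1] and |f(u) + β| ≤ C₀/u for all u ≥ 1, for some constant C₀ > 0. Define W(τ) = −(β+1)·τ + ∫_{−∞}^{τ} (f(e^{−b·θ + R}) + β) dθ, d₂ = ∫₀¹ (f(u)−1)/u du + ∫₁^∞ (f(u)+β)/u du and D₄ = (d₂ − (β+1)·R)/b. Then the integral defining W(τ) converges for every real τ, and there exist constants C₁, C₂ > 0 such that |W(τ) + (β+1)·τ| ≤ C₁·e^{bτ} for all τ ≤ 0, and |W(τ) − D₄| ≤ C₂·e^{−bτ} for all τ ≥ 0. -/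
open Real MeasureTheory

open Set Filter Topology

section AuxStmt7
variable {β b R C₀ : ℝ} {f : ℝ → ℝ}

lemma aux_exp_int {b : ℝ} (hb : 0 < b) (m : ℝ) :
    IntegrableOn (fun θ => Real.exp (b * θ)) (Set.Iic m) := by
  have hc : Continuous (fun θ : ℝ => Real.exp (b * θ)) := by continuity
  apply integrableOn_Iic_of_intervalIntegral_norm_bounded (b⁻¹ * Real.exp (b * m)) m
    (l := atBot) (a := id) (fun y => hc.integrableOn_Ioc) tendsto_id
  filter_upwards with y
  have : (∫ x in (id y : ℝ)..m, ‖Real.exp (b * x)‖) = ∫ x in (y:ℝ)..m, Real.exp (b * x) := by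
    simp [Real.norm_eq_abs, abs_of_pos (Real.exp_pos _)]
  rw [this, intervalIntegral.integral_comp_mul_left (fun x => Real.exp x) hb.ne', integral_exp,
    smul_eq_mul]
  have h1 : Real.exp (b * y) > 0 := Real.exp_pos _
  have h2 : (0:ℝ) < b⁻¹ := inv_pos.2 hb
  nlinarith [Real.exp_pos (b*m)]


lemma aux_g_cont (hfc : ContinuousOn f (Set.Ici 0)) (b R β : ℝ) :
    Continuous (fun θ : ℝ => f (Real.exp (-b * θ + R)) + β) := by
  have : Continuous (fun θ : ℝ => f (Real.exp (-b * θ + R))) :=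
    hfc.comp_continuous (by continuity) (fun θ => (Real.exp_pos _).le)
  exact this.add continuous_const

lemma aux_h_cont (hfc : ContinuousOn f (Set.Ici 0)) (β : ℝ) :
    ContinuousOn (fun u : ℝ => (f u + β) / u) (Set.Ioi 0) := by
  apply ContinuousOn.div
  · exact (hfc.mono Ioi_subset_Ici_self).add continuousOn_const
  · exact continuousOn_id
  · exact fun x hx => ne_of_gt hx

lemma aux_h1_cont (hfc : ContinuousOn f (Set.Ici 0)) :
    ContinuousOn (fun u : ℝ => (f u - 1) / u) (Set.Ioi 0) := by
  apply ContinuousOn.div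
  · exact (hfc.mono Ioi_subset_Ici_self).sub continuousOn_const
  · exact continuousOn_id
  · exact fun x hx => ne_of_gt hx

-- integrability of h on Ioi 1
lemma aux_hI1 (hβ : 0 < β) (hC₀ : 0 < C₀) (hfc : ContinuousOn f (Set.Ici 0))
    (hfinf : ∀ u : ℝ, 1 ≤ u → |f u + β| ≤ C₀ / u) :
    IntegrableOn (fun u : ℝ => (f u + β) / u) (Set.Ioi 1) := by
  have hmaj : IntegrableOn (fun x : ℝ => C₀ * x ^ (-2 : ℝ)) (Set.Ioi 1) :=
    (integrableOn_Ioi_rpow_of_lt (by norm_num) one_pos).const_mul C₀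
  refine hmaj.mono' ((aux_h_cont hfc β).aestronglyMeasurable measurableSet_Ioi |>.mono_set
    (Set.Ioi_subset_Ioi zero_le_one)) ?_
  · rw [ae_restrict_iff' measurableSet_Ioi]
    filter_upwards with x hx
    have hx0 : (0:ℝ) < x := lt_trans one_pos hx
    have : x ^ (-2 : ℝ) = (x * x)⁻¹ := by
      rw [show (-2:ℝ) = -(2:ℕ) by norm_num, Real.rpow_neg hx0.le, Real.rpow_natCast, sq]
    rw [Real.norm_eq_abs, abs_div, abs_of_pos hx0, this]
    calc |f x + β| / x ≤ (C₀ / x) / x := by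
          gcongr; exact hfinf x hx.le
      _ = C₀ * (x * x)⁻¹ := by field_simp


lemma aux_hIoc (hfc : ContinuousOn f (Set.Ici 0)) (β : ℝ) {ε c : ℝ} (hε : 0 < ε) :
    IntegrableOn (fun u : ℝ => (f u + β) / u) (Set.Ioc ε c) := by
  rcases le_or_gt ε c with h | h
  · refine (((aux_h_cont hfc β).mono ?_).integrableOn_Icc).mono_set Ioc_subset_Icc_self
    intro x hx; exact lt_of_lt_of_le hε hx.1
  · simp [Set.Ioc_eq_empty (not_lt.mpr h.le)]

lemma aux_hIε (hβ : 0 < β) (hC₀ : 0 < C₀) (hfc : ContinuousOn f (Set.Ici 0))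
    (hfinf : ∀ u : ℝ, 1 ≤ u → |f u + β| ≤ C₀ / u) {ε : ℝ} (hε : 0 < ε) :
    IntegrableOn (fun u : ℝ => (f u + β) / u) (Set.Ioi ε) := by
  refine ((aux_hIoc hfc β hε (c := 1)).union (aux_hI1 hβ hC₀ hfc hfinf)).mono_set ?_
  intro x hx
  rcases le_or_gt x 1 with h | h
  · exact Or.inl ⟨hx, h⟩
  · exact Or.inr h

-- |∫_{Ioi ε} h| ≤ C₀/ε for ε ≥ 1
lemma aux_tail_bound (hβ : 0 < β) (hC₀ : 0 < C₀) (hfc : ContinuousOn f (Set.Ici 0))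
    (hfinf : ∀ u : ℝ, 1 ≤ u → |f u + β| ≤ C₀ / u) {ε : ℝ} (hε : 1 ≤ ε) :
    |∫ u in Set.Ioi ε, (f u + β) / u| ≤ C₀ / ε := by
  have hε0 : (0:ℝ) < ε := lt_of_lt_of_le one_pos hε
  have hint : IntegrableOn (fun u : ℝ => (f u + β) / u) (Set.Ioi ε) :=
    aux_hIε hβ hC₀ hfc hfinf hε0
  have hmaj : IntegrableOn (fun x : ℝ => C₀ * x ^ (-2 : ℝ)) (Set.Ioi ε) :=
    (integrableOn_Ioi_rpow_of_lt (by norm_num) hε0).const_mul C₀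
  have hbnd : ∀ x ∈ Set.Ioi ε, |(f x + β) / x| ≤ C₀ * x ^ (-2:ℝ) := by
    intro x hx
    have hx1 : (1:ℝ) ≤ x := hε.trans hx.le
    have hx0 : (0:ℝ) < x := lt_of_lt_of_le one_pos hx1
    have h2 : x ^ (-2 : ℝ) = (x * x)⁻¹ := by
      rw [show (-2:ℝ) = -(2:ℕ) by norm_num, Real.rpow_neg hx0.le, Real.rpow_natCast, sq]
    rw [abs_div, abs_of_pos hx0, h2]
    calc |f x + β| / x ≤ (C₀ / x) / x := by gcongr; exact hfinf x hx1
      _ = C₀ * (x * x)⁻¹ := by field_simp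
  calc |∫ u in Set.Ioi ε, (f u + β) / u| ≤ ∫ u in Set.Ioi ε, |(f u + β) / u| := by
        simp only [abs_div]
        simpa [Real.norm_eq_abs, abs_div] using norm_integral_le_integral_norm
          (μ := volume.restrict (Set.Ioi ε)) (fun u : ℝ => (f u + β) / u)
    _ ≤ ∫ u in Set.Ioi ε, C₀ * u ^ (-2:ℝ) :=
        setIntegral_mono_on hint.abs hmaj measurableSet_Ioi hbnd
    _ = C₀ * ∫ u in Set.Ioi ε, u ^ (-2:ℝ) := by rw [MeasureTheory.integral_const_mul]
    _ = C₀ / ε := by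
        rw [integral_Ioi_rpow_of_lt (by norm_num) hε0]
        rw [show (-2 : ℝ) + 1 = -1 by norm_num]
        rw [Real.rpow_neg_one]
        field_simp


lemma aux_gI (hβ : 0 < β) (hb : 0 < b) (hC₀ : 0 < C₀)
    (hfc : ContinuousOn f (Set.Ici 0))
    (hfinf : ∀ u : ℝ, 1 ≤ u → |f u + β| ≤ C₀ / u) (R τ : ℝ) :
    IntegrableOn (fun θ => f (Real.exp (-b * θ + R)) + β) (Set.Iic τ) := by
  set m : ℝ := min τ (R / b) with hm
  have hgc := aux_g_cont hfc b R β
  have h1 : IntegrableOn (fun θ => f (Real.exp (-b * θ + R)) + β) (Set.Iic m) := by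
    have hmaj : IntegrableOn (fun θ : ℝ => C₀ * Real.exp (-R) * Real.exp (b * θ)) (Set.Iic m) :=
      (aux_exp_int hb m).const_mul _
    refine hmaj.mono' (hgc.aestronglyMeasurable.restrict) ?_
    rw [ae_restrict_iff' measurableSet_Iic]
    filter_upwards with θ hθ
    have hθR : b * θ ≤ R := by
      have : θ ≤ R / b := le_trans hθ (min_le_right _ _)
      calc b * θ ≤ b * (R / b) := by gcongr
        _ = R := by field_simp
    have hu1 : (1:ℝ) ≤ Real.exp (-b * θ + R) := by
      rw [← Real.exp_zero]; apply Real.exp_le_exp.2; linarith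
    have := hfinf _ hu1
    rw [Real.norm_eq_abs]
    calc |f (Real.exp (-b * θ + R)) + β| ≤ C₀ / Real.exp (-b * θ + R) := this
      _ = C₀ * Real.exp (-R) * Real.exp (b * θ) := by
          rw [div_eq_mul_inv, ← Real.exp_neg, mul_assoc, ← Real.exp_add]
          ring_nf
  have h2 : IntegrableOn (fun θ => f (Real.exp (-b * θ + R)) + β) (Set.Icc m τ) :=
    hgc.integrableOn_Icc
  refine (h1.union h2).mono_set ?_
  intro x hx
  rcases le_or_gt x m with h | h
  · exact Or.inl h
  · exact Or.inr ⟨h.le, hx⟩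

lemma aux_subst (hβ : 0 < β) (hb : 0 < b) (hC₀ : 0 < C₀)
    (hfc : ContinuousOn f (Set.Ici 0))
    (hfinf : ∀ u : ℝ, 1 ≤ u → |f u + β| ≤ C₀ / u) (R τ : ℝ) :
    (∫ θ in Set.Iic τ, (f (Real.exp (-b * θ + R)) + β))
      = b⁻¹ * ∫ u in Set.Ioi (Real.exp (-b * τ + R)), (f u + β) / u := by
  set φ : ℝ → ℝ := fun θ => Real.exp (-b * θ + R) with hφ
  have hφpos : ∀ θ, 0 < φ θ := fun θ => Real.exp_pos _
  have hφd : ∀ θ : ℝ, HasDerivAt φ (-b * φ θ) θ := by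
    intro θ
    have h1 : HasDerivAt (fun θ : ℝ => -b * θ + R) (-b) θ := by
      simpa using ((hasDerivAt_id θ).const_mul (-b)).add_const R
    have h2 := h1.exp
    simp only [hφ]
    convert h2 using 1
    ring
  set G : ℝ → ℝ := fun u => -(b⁻¹) * ((f u + β) / u) with hG
  have key : ∀ a : ℝ, (∫ θ in a..τ, (f (φ θ) + β)) = ∫ u in φ a..φ τ, G u := by
    intro a
    have hcongr : ∀ θ : ℝ, f (φ θ) + β = (-b * φ θ) • (G ∘ φ) θ := by
      intro θ
      have := (hφpos θ).ne'
      simp only [hG, Function.comp_apply, smul_eq_mul]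
      field_simp
    rw [intervalIntegral.integral_congr (g := fun θ => (-b * φ θ) • (G ∘ φ) θ)
      (fun θ _ => hcongr θ)]
    apply intervalIntegral.integral_comp_smul_deriv' (fun θ _ => hφd θ)
    · exact (continuous_const.mul (Real.continuous_exp.comp (by continuity))).continuousOn
    · refine ((aux_h_cont hfc β).const_smul (-(b⁻¹))).mono ?_
      intro x hx
      rcases hx with ⟨θ, _, rfl⟩
      exact hφpos θ
  have hIg := aux_gI hβ hb hC₀ hfc hfinf R τ
  have hlim1 : Tendsto (fun a : ℝ => ∫ θ in a..τ, (f (φ θ) + β)) atBot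
      (𝓝 (∫ θ in Set.Iic τ, (f (φ θ) + β))) :=
    intervalIntegral_tendsto_integral_Iic τ hIg tendsto_id
  have hφtop : Tendsto φ atBot atTop := by
    apply Real.tendsto_exp_atTop.comp
    apply Filter.tendsto_atTop_add_const_right
    exact (tendsto_const_mul_atTop_of_neg (by linarith : -b < 0)).2 tendsto_id
  have hεpos : 0 < φ τ := hφpos τ
  have hIh := aux_hIε hβ hC₀ hfc hfinf hεpos
  have hlim2 : Tendsto (fun a : ℝ => ∫ u in φ τ..φ a, (f u + β) / u) atBot
      (𝓝 (∫ u in Set.Ioi (φ τ), (f u + β) / u)) :=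
    intervalIntegral_tendsto_integral_Ioi (φ τ) hIh hφtop
  have hkey2 : ∀ a : ℝ, (∫ θ in a..τ, (f (φ θ) + β))
      = b⁻¹ * ∫ u in φ τ..φ a, (f u + β) / u := by
    intro a
    rw [key a, hG]
    rw [intervalIntegral.integral_const_mul]
    rw [intervalIntegral.integral_symm (φ a) (φ τ)]
    ring
  have hlim1' : Tendsto (fun a : ℝ => ∫ θ in a..τ, (f (φ θ) + β)) atBot
      (𝓝 (b⁻¹ * ∫ u in Set.Ioi (φ τ), (f u + β) / u)) := by
    have := hlim2.const_mul (b⁻¹)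
    refine this.congr (fun a => (hkey2 a).symm)
  exact tendsto_nhds_unique hlim1 hlim1'


-- integrability of (f-1)/u on Ioc 0 1
lemma aux_AI (hC₀ : 0 < C₀) (hfc : ContinuousOn f (Set.Ici 0))
    (hf0 : ∀ u ∈ Set.Icc (0:ℝ) 1, |f u - 1| ≤ C₀ * u) :
    IntegrableOn (fun u : ℝ => (f u - 1) / u) (Set.Ioc 0 1) := by
  have hmaj : IntegrableOn (fun _ : ℝ => C₀) (Set.Ioc (0:ℝ) 1) :=
    integrableOn_const measure_Ioc_lt_top.ne
  refine hmaj.mono' ((aux_h1_cont hfc).aestronglyMeasurable measurableSet_Ioi |>.mono_set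
    (fun x hx => hx.1)) ?_
  rw [ae_restrict_iff' measurableSet_Ioc]
  filter_upwards with u hu
  rw [Real.norm_eq_abs, abs_div, abs_of_pos hu.1]
  calc |f u - 1| / u ≤ C₀ * u / u := by
        have := hf0 u ⟨hu.1.le, hu.2⟩
        gcongr
        exact hu.1.le
    _ = C₀ := by field_simp [hu.1.ne']

-- |∫_{Ioc 0 c} (f-1)/u| ≤ C₀ * c for 0 ≤ c ≤ 1
lemma aux_A_bound (hC₀ : 0 < C₀) (hfc : ContinuousOn f (Set.Ici 0))
    (hf0 : ∀ u ∈ Set.Icc (0:ℝ) 1, |f u - 1| ≤ C₀ * u) {c : ℝ} (hc0 : 0 ≤ c) (hc1 : c ≤ 1) :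
    |∫ u in Set.Ioc (0:ℝ) c, (f u - 1) / u| ≤ C₀ * c := by
  have h := norm_setIntegral_le_of_norm_le_const (μ := volume) (s := Set.Ioc (0:ℝ) c)
    (f := fun u : ℝ => (f u - 1) / u) (C := C₀) measure_Ioc_lt_top ?_
  · rw [Real.volume_real_Ioc_of_le hc0] at h
    simpa [Real.norm_eq_abs, ENNReal.toReal_ofReal hc0] using h
  · intro u hu
    rw [Real.norm_eq_abs, abs_div, abs_of_pos hu.1]
    calc |f u - 1| / u ≤ C₀ * u / u := by
          have := hf0 u ⟨hu.1.le, hu.2.trans hc1⟩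
          gcongr
          exact hu.1.le
      _ = C₀ := by field_simp [hu.1.ne']

-- |∫_{Ioc 1 ε} h| ≤ C₀ * ε for ε ≥ 1
lemma aux_mid_bound (hβ : 0 < β) (hC₀ : 0 < C₀)
    (hfinf : ∀ u : ℝ, 1 ≤ u → |f u + β| ≤ C₀ / u) {ε : ℝ} (hε : 1 ≤ ε) :
    |∫ u in Set.Ioc (1:ℝ) ε, (f u + β) / u| ≤ C₀ * ε := by
  have h := norm_setIntegral_le_of_norm_le_const (μ := volume) (s := Set.Ioc (1:ℝ) ε)
    (f := fun u : ℝ => (f u + β) / u) (C := C₀) measure_Ioc_lt_top ?_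
  · rw [Real.volume_real_Ioc_of_le hε] at h
    rw [Real.norm_eq_abs] at h
    refine h.trans ?_
    nlinarith
  · intro u hu
    have hu1 : (1:ℝ) ≤ u := hu.1.le
    have hu0 : (0:ℝ) < u := lt_of_lt_of_le one_pos hu1
    rw [Real.norm_eq_abs, abs_div, abs_of_pos hu0]
    calc |f u + β| / u ≤ (C₀ / u) / u := by gcongr; exact hfinf u hu1
      _ ≤ (C₀ / 1) / 1 := by gcongr
      _ = C₀ := by norm_num

-- decomposition for ε ≤ 1
lemma aux_decomp_le (hβ : 0 < β) (hC₀ : 0 < C₀) (hfc : ContinuousOn f (Set.Ici 0))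
    (hf0 : ∀ u ∈ Set.Icc (0:ℝ) 1, |f u - 1| ≤ C₀ * u)
    (hfinf : ∀ u : ℝ, 1 ≤ u → |f u + β| ≤ C₀ / u) {ε : ℝ} (hε : 0 < ε) (hε1 : ε ≤ 1) :
    (∫ u in Set.Ioi ε, (f u + β) / u)
      = ((∫ u in Set.Ioc (0:ℝ) 1, (f u - 1) / u) - ∫ u in Set.Ioc (0:ℝ) ε, (f u - 1) / u)
        + (β + 1) * (-Real.log ε) + ∫ u in Set.Ioi (1:ℝ), (f u + β) / u := by
  have hAI := aux_AI hC₀ hfc hf0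
  have hA1 : IntegrableOn (fun u : ℝ => (f u - 1) / u) (Set.Ioc 0 ε) :=
    hAI.mono_set (Set.Ioc_subset_Ioc_right hε1)
  have hA2 : IntegrableOn (fun u : ℝ => (f u - 1) / u) (Set.Ioc ε 1) :=
    hAI.mono_set (Set.Ioc_subset_Ioc_left hε.le)
  -- split Ioi ε
  have hsplit : (∫ u in Set.Ioi ε, (f u + β) / u)
      = (∫ u in Set.Ioc ε 1, (f u + β) / u) + ∫ u in Set.Ioi (1:ℝ), (f u + β) / u := by
    rw [← Set.Ioc_union_Ioi_eq_Ioi hε1]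
    exact setIntegral_union (Set.Ioc_disjoint_Ioi le_rfl) measurableSet_Ioi
      (aux_hIoc hfc β hε) (aux_hI1 hβ hC₀ hfc hfinf)
  -- middle piece
  have hinv : IntegrableOn (fun u : ℝ => (β + 1) * u⁻¹) (Set.Ioc ε 1) := by
    have hc : ContinuousOn (fun u : ℝ => (β + 1) * u⁻¹) (Set.Icc ε 1) := by
      refine continuousOn_const.mul (continuousOn_inv₀.mono ?_)
      intro x hx
      exact Set.mem_compl_singleton_iff.mpr (ne_of_gt (lt_of_lt_of_le hε hx.1))
    exact hc.integrableOn_Icc.mono_set Set.Ioc_subset_Icc_self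
  have hmid : (∫ u in Set.Ioc ε 1, (f u + β) / u)
      = (∫ u in Set.Ioc ε 1, (f u - 1) / u) + (β + 1) * (-Real.log ε) := by
    have hcongr : (∫ u in Set.Ioc ε 1, (f u + β) / u)
        = ∫ u in Set.Ioc ε 1, ((f u - 1) / u + (β + 1) * u⁻¹) := by
      refine setIntegral_congr_fun measurableSet_Ioc (fun u hu => ?_)
      have : u ≠ 0 := (lt_trans hε hu.1).ne'
      field_simp
      ring
    rw [hcongr, integral_add hA2 hinv]
    congr 1
    rw [← intervalIntegral.integral_of_le hε1, intervalIntegral.integral_const_mul,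
      integral_inv (by rw [Set.uIcc_of_le hε1]; rintro ⟨h1, h2⟩; linarith)]
    rw [Real.log_div one_ne_zero hε.ne', Real.log_one]
    ring
  -- A split
  have hAsplit : (∫ u in Set.Ioc (0:ℝ) 1, (f u - 1) / u)
      = (∫ u in Set.Ioc (0:ℝ) ε, (f u - 1) / u) + ∫ u in Set.Ioc ε 1, (f u - 1) / u := by
    rw [← Set.Ioc_union_Ioc_eq_Ioc hε.le hε1]
    exact setIntegral_union (Set.Ioc_disjoint_Ioc_of_le le_rfl) measurableSet_Ioc hA1 hA2
  rw [hsplit, hmid]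
  rw [hAsplit]
  ring

-- decomposition for ε ≥ 1
lemma aux_decomp_ge (hβ : 0 < β) (hC₀ : 0 < C₀) (hfc : ContinuousOn f (Set.Ici 0))
    (hfinf : ∀ u : ℝ, 1 ≤ u → |f u + β| ≤ C₀ / u) {ε : ℝ} (hε : 1 ≤ ε) :
    (∫ u in Set.Ioi ε, (f u + β) / u)
      = (∫ u in Set.Ioi (1:ℝ), (f u + β) / u) - ∫ u in Set.Ioc (1:ℝ) ε, (f u + β) / u := by
  have : (∫ u in Set.Ioi (1:ℝ), (f u + β) / u)
      = (∫ u in Set.Ioc (1:ℝ) ε, (f u + β) / u) + ∫ u in Set.Ioi ε, (f u + β) / u := by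
    rw [← Set.Ioc_union_Ioi_eq_Ioi hε]
    exact setIntegral_union (Set.Ioc_disjoint_Ioi le_rfl) measurableSet_Ioi
      (aux_hIoc hfc β one_pos)
      ((aux_hI1 hβ hC₀ hfc hfinf).mono_set (Set.Ioi_subset_Ioi hε))
  linarith

end AuxStmt7

/-- asymptotics of the boundary-layer function
`W(τ) = -(β+1)τ + ∫_{-∞}^τ (f(e^{-bθ+R})+β) dθ` (the paper's `W_{r,k}` with slope
`-b = ẏ*(r_k) < 0`): the integral converges for every `τ`,
`W(τ) = -(β+1)τ + O(e^{bτ})` as `τ → -∞` and `W(τ) = D₄ + O(e^{-bτ})` as `τ → +∞`,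
where `D₄ = (d₂ - (β+1)R)/b`. -/
theorem stmt_7 (β b R C₀ : ℝ) (hβ : 0 < β) (hb : 0 < b) (hC₀ : 0 < C₀)
    (f : ℝ → ℝ) (hfc : ContinuousOn f (Set.Ici 0))
    (hf0 : ∀ u ∈ Set.Icc (0:ℝ) 1, |f u - 1| ≤ C₀ * u)
    (hfinf : ∀ u : ℝ, 1 ≤ u → |f u + β| ≤ C₀ / u) :
    (∀ τ : ℝ, IntegrableOn (fun θ => f (Real.exp (-b * θ + R)) + β) (Set.Iic τ)) ∧
    ∃ C₁ > (0:ℝ), ∃ C₂ > (0:ℝ),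
      (∀ τ : ℝ, τ ≤ 0 →
        |(-(β + 1) * τ + ∫ θ in Set.Iic τ, (f (Real.exp (-b * θ + R)) + β)) + (β + 1) * τ|
          ≤ C₁ * Real.exp (b * τ)) ∧
      (∀ τ : ℝ, 0 ≤ τ →
        |(-(β + 1) * τ + ∫ θ in Set.Iic τ, (f (Real.exp (-b * θ + R)) + β))
            - (((∫ u in Set.Ioc (0:ℝ) 1, (f u - 1) / u)
                + ∫ u in Set.Ioi (1:ℝ), (f u + β) / u) - (β + 1) * R) / b|
          ≤ C₂ * Real.exp (-b * τ)) := by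
  refine ⟨aux_gI hβ hb hC₀ hfc hfinf R, ?_⟩
  have hA : |∫ u in Set.Ioc (0:ℝ) 1, (f u - 1) / u| ≤ C₀ := by
    simpa using aux_A_bound hC₀ hfc hf0 zero_le_one le_rfl
  have hB : |∫ u in Set.Ioi (1:ℝ), (f u + β) / u| ≤ C₀ := by
    simpa using aux_tail_bound hβ hC₀ hfc hfinf le_rfl
  refine ⟨(3*C₀ + (β+1)*(|R|+1)) * Real.exp (-R) / b, by positivity,
          (2*C₀ + β + 1) * Real.exp R / b, by positivity, ?_, ?_⟩
  · -- τ ≤ 0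
    intro τ hτ
    have h0 : (-(β + 1) * τ + ∫ θ in Set.Iic τ, (f (Real.exp (-b * θ + R)) + β)) + (β + 1) * τ
        = ∫ θ in Set.Iic τ, (f (Real.exp (-b * θ + R)) + β) := by ring
    rw [h0, aux_subst hβ hb hC₀ hfc hfinf R τ]
    set ε : ℝ := Real.exp (-b * τ + R) with hεdef
    have hε0 : 0 < ε := Real.exp_pos _
    rw [abs_mul, abs_of_pos (inv_pos.2 hb)]
    have hexp : Real.exp (b * τ) * Real.exp (-R) = ε⁻¹ := by
      rw [← Real.exp_add, hεdef, ← Real.exp_neg]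
      congr 1; ring
    rcases le_or_gt 1 ε with hε1 | hε1
    · -- ε ≥ 1
      have htail := aux_tail_bound hβ hC₀ hfc hfinf hε1
      have hfin : b⁻¹ * (C₀ / ε) ≤ (3*C₀ + (β+1)*(|R|+1)) * Real.exp (-R) / b
          * Real.exp (b * τ) := by
        have h2 : (3*C₀ + (β+1)*(|R|+1)) * Real.exp (-R) / b * Real.exp (b * τ)
            = b⁻¹ * ((3*C₀ + (β+1)*(|R|+1)) * ε⁻¹) := by
          rw [← hexp]; ring
        rw [h2]
        have h3 : C₀ ≤ 3*C₀ + (β+1)*(|R|+1) := by nlinarith [abs_nonneg R]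
        rw [div_eq_mul_inv C₀ ε]
        gcongr
      exact le_trans (by gcongr) hfin
    · -- ε < 1
      have hd := aux_decomp_le hβ hC₀ hfc hf0 hfinf hε0 hε1.le
      have hlog : Real.log ε = -b * τ + R := Real.log_exp _
      have hAε : |∫ u in Set.Ioc (0:ℝ) ε, (f u - 1) / u| ≤ C₀ * ε :=
        aux_A_bound hC₀ hfc hf0 hε0.le hε1.le
      have hlogbd : 0 ≤ b * τ - R ∧ b * τ - R ≤ |R| := by
        constructor
        · have : Real.log ε < 0 := Real.log_neg hε0 hε1
          rw [hlog] at this; linarith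
        · have h1 : b * τ ≤ 0 := by nlinarith
          have := neg_abs_le R
          linarith
      have hJ : |∫ u in Set.Ioi ε, (f u + β) / u| ≤ 3*C₀ + (β+1)*|R| := by
        rw [hd, hlog]
        have h1 := abs_le.mp hA
        have h2 := abs_le.mp hAε
        have h3 := abs_le.mp hB
        rw [abs_le]
        constructor <;> nlinarith [hlogbd.1, hlogbd.2, hε0.le, hε1.le]
      have hone : 1 ≤ Real.exp (b * τ) * Real.exp (-R) := by
        rw [hexp]
        rw [le_inv_comm₀]
        · simpa using hε1.le
        · norm_num
        · exact hε0
      calc b⁻¹ * |∫ u in Set.Ioi ε, (f u + β) / u| ≤ b⁻¹ * (3*C₀ + (β+1)*|R|) := by gcongr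
        _ ≤ b⁻¹ * ((3*C₀ + (β+1)*(|R|+1)) * (Real.exp (b * τ) * Real.exp (-R))) := by
            have h4 : (3*C₀ + (β+1)*|R|) * 1 ≤ (3*C₀ + (β+1)*(|R|+1)) * (Real.exp (b * τ) * Real.exp (-R)) := by
              apply mul_le_mul (by nlinarith [abs_nonneg R]) hone one_pos.le
              nlinarith [abs_nonneg R]
            rw [mul_one] at h4
            gcongr
        _ = (3*C₀ + (β+1)*(|R|+1)) * Real.exp (-R) / b * Real.exp (b * τ) := by ring
  · -- τ ≥ 0
    intro τ hτ
    rw [aux_subst hβ hb hC₀ hfc hfinf R τ]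
    have hε0 : 0 < Real.exp (-b * τ + R) := Real.exp_pos _
    have hεeq : Real.exp (-b * τ + R) = Real.exp R * Real.exp (-b * τ) := by
      rw [← Real.exp_add]; congr 1; ring
    rcases le_or_gt (Real.exp (-b * τ + R)) 1 with hε1 | hε1
    · -- ε ≤ 1
      have hd := aux_decomp_le hβ hC₀ hfc hf0 hfinf hε0 hε1
      rw [hd, Real.log_exp]
      have hAε := aux_A_bound hC₀ hfc hf0 hε0.le hε1
      set ε : ℝ := Real.exp (-b * τ + R) with hεdef
      set a1 : ℝ := ∫ u in Set.Ioc (0:ℝ) 1, (f u - 1) / u with ha1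
      set a2 : ℝ := ∫ u in Set.Ioc (0:ℝ) ε, (f u - 1) / u with ha2
      set a3 : ℝ := ∫ u in Set.Ioi (1:ℝ), (f u + β) / u with ha3
      have hkey : (-(β + 1) * τ + b⁻¹ * ((a1 - a2) + (β + 1) * -(-b * τ + R) + a3))
          - ((a1 + a3) - (β + 1) * R) / b = -(a2 / b) := by
        field_simp
        ring
      rw [hkey, abs_neg, abs_div, abs_of_pos hb]
      have h1 : |a2| / b ≤ (C₀ * ε) / b := by gcongr
      refine h1.trans ?_
      rw [hεeq]
      have h2 : C₀ * (Real.exp R * Real.exp (-b * τ)) / b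
          = (C₀ * Real.exp R / b) * Real.exp (-b * τ) := by ring
      rw [h2]
      gcongr
      linarith
    · -- ε > 1
      have hd := aux_decomp_ge hβ hC₀ hfc hfinf hε1.le
      rw [hd]
      have hM := aux_mid_bound hβ hC₀ hfinf hε1.le
      have hlogε : R - b * τ ≤ Real.exp (-b * τ + R) := by
        have h1 := Real.log_le_sub_one_of_pos hε0
        rw [Real.log_exp] at h1
        linarith
      have hlogpos : 0 ≤ R - b * τ := by
        have h1 := Real.log_pos hε1
        rw [Real.log_exp] at h1
        linarith
      set ε : ℝ := Real.exp (-b * τ + R) with hεdef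
      set a1 : ℝ := ∫ u in Set.Ioc (0:ℝ) 1, (f u - 1) / u with ha1
      set a3 : ℝ := ∫ u in Set.Ioi (1:ℝ), (f u + β) / u with ha3
      set M : ℝ := ∫ u in Set.Ioc (1:ℝ) ε, (f u + β) / u with hMdef
      have hkey : (-(β + 1) * τ + b⁻¹ * (a3 - M)) - ((a1 + a3) - (β + 1) * R) / b
          = ((β + 1) * (R - b * τ) - M - a1) / b := by
        field_simp
        ring
      rw [hkey, abs_div, abs_of_pos hb]
      have hnum : |(β + 1) * (R - b * τ) - M - a1| ≤ (2*C₀ + β + 1) * ε := by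
        have h1 := abs_le.mp hM
        have h2 := abs_le.mp hA
        have h3 : (β + 1) * (R - b * τ) ≤ (β + 1) * ε :=
          mul_le_mul_of_nonneg_left hlogε (by linarith)
        have h4 : C₀ ≤ C₀ * ε := le_mul_of_one_le_right hC₀.le hε1.le
        have h5 : 0 ≤ (β + 1) * ε := by positivity
        have h6 : 0 ≤ (β + 1) * (R - b * τ) := mul_nonneg (by linarith) hlogpos
        rw [abs_le]
        constructor <;> linarith
      calc |(β + 1) * (R - b * τ) - M - a1| / b ≤ ((2*C₀ + β + 1) * ε) / b := by gcongr
        _ = (2*C₀ + β + 1) * Real.exp R / b * Real.exp (-b * τ) := by rw [hεeq]; ring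
end

section
/- Let α > 0, ξ > 0, let n ≥ 1 be a natural number, set t* = (α+1)/α and T* = (α+1)²/α, let 0 < d < (1+ξ)·t*, and suppose β > max{(1+ξ)/(n(1+α)) − 1, 0}. Define l_k = d/(1+ξ) + (k−1)·T* and r_k = k·T* − α·d/(1+ξ) for k = 1, …, n, and c_n = (1+β)·∑_{i=1}^{n} (r_i − l_i). Then c_n > (1+ξ)·t* − d. -/
open Real Finset

/-- with `l_k = d/(1+ξ) + (k-1)T*`, `r_k = kT* - αd/(1+ξ)` and
`β > max{(1+ξ)/(n(1+α)) - 1, 0}`, the accumulated decrease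
`c_n = (1+β)∑_{i=1}^n (r_i - l_i)` exceeds `(1+ξ)t* - d`. -/
theorem stmt_12 (α ξ d β : ℝ) (n : ℕ) (hn : 1 ≤ n)
    (hα : 0 < α) (hξ : 0 < ξ)
    (tstar Tstar : ℝ) (htstar : tstar = (α + 1) / α) (hTstar : Tstar = (α + 1) ^ 2 / α)
    (hd : 0 < d) (hd' : d < (1 + ξ) * tstar)
    (hβ : β > max ((1 + ξ) / (n * (1 + α)) - 1) 0)
    (l r : ℕ → ℝ)
    (hl : ∀ k, l k = d / (1 + ξ) + ((k : ℝ) - 1) * Tstar)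
    (hr : ∀ k, r k = (k : ℝ) * Tstar - α * d / (1 + ξ)) :
    (1 + β) * ∑ i ∈ Finset.Icc 1 n, (r i - l i) > (1 + ξ) * tstar - d := by
  have h1ξ : (0:ℝ) < 1 + ξ := by linarith
  have hnR : (0:ℝ) < (n : ℝ) := by exact_mod_cast hn
  have hN : (0:ℝ) < (n : ℝ) * (1 + α) := by positivity
  have hβ1 : (1 + ξ) / ((n : ℝ) * (1 + α)) - 1 < β := lt_of_le_of_lt (le_max_left _ _) hβ
  have hkey : 1 + ξ < (1 + β) * ((n : ℝ) * (1 + α)) := by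
    have := (div_lt_iff₀ hN).mp (by linarith : (1 + ξ) / ((n : ℝ) * (1 + α)) < 1 + β)
    linarith
  have hu : 0 < tstar - d / (1 + ξ) := by
    have : d / (1 + ξ) < tstar := (div_lt_iff₀' h1ξ).mpr hd'
    linarith
  have hterm : ∀ i ∈ Finset.Icc 1 n, r i - l i = Tstar - (α + 1) * (d / (1 + ξ)) := by
    intro i _
    rw [hr, hl]
    field_simp
    ring
  have hsum : ∑ i ∈ Finset.Icc 1 n, (r i - l i)
      = (n : ℝ) * (Tstar - (α + 1) * (d / (1 + ξ))) := by
    rw [Finset.sum_congr rfl hterm, Finset.sum_const, Nat.card_Icc]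
    simp [nsmul_eq_mul]
  have hT : Tstar = (α + 1) * tstar := by
    rw [hTstar, htstar]; field_simp
  have hd2 : (1 + ξ) * tstar - d = (1 + ξ) * (tstar - d / (1 + ξ)) := by
    field_simp
  rw [hsum, hT, hd2]
  have : (1 + ξ) * (tstar - d / (1 + ξ))
      < ((1 + β) * ((n : ℝ) * (1 + α))) * (tstar - d / (1 + ξ)) :=
    mul_lt_mul_of_pos_right hkey hu
  nlinarith [this]
end

section
/- Let η > 0, ξ > 0, and let g : [0,∞) → ℝ be continuous, differentiable on (0,∞), and let C₀ > 0 satisfy |g(u) + η| ≤ C₀·u for u ∈ (0,1], |g(u) − ξ| ≤ C₀/u for u ≥ 1, and |g'(u)| ≤ C₀/(1+u²) for u > 0. Define v₁(τ) = (1−η)·τ + ∫_{−∞}^{τ} (g(e^s)+η) ds. Let d ∈ ℝ, σ > 0, 0 < μ ≤ σ, and C₁ > 0. Then there exist constants C₂ > 0 and λ₀ > 0 such that for every λ ≥ λ₀ and every measurable function x : [−σ, σ] → ℝ with |x(t) − t| ≤ C₁·e^{−μλ} for all t ∈ [−σ,σ], the function p(t) = −d − (1−η)·σ + ∫_{−σ}^{t}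 (1 + g(e^{λ·x(s)})) ds satisfies |p(t) − (−d + v₁(λt)/λ)| ≤ C₂·λ·e^{−μλ} for all t ∈ [−σ, σ]. -/
open Real MeasureTheory intervalIntegral

/-- Change of variables `s ↦ lam * s` on `Iic`. -/
lemma integral_comp_mul_left_Iic' (h : ℝ → ℝ) (t : ℝ) {lam : ℝ} (hl : 0 < lam) :
    ∫ s in Set.Iic t, h (lam * s) = lam⁻¹ * ∫ s in Set.Iic (lam * t), h s := by
  have s1 : (∫ s in Set.Iic t, h (lam * s)) = ∫ y in Set.Ioi (-t), h (-(lam * y)) := by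
    have := integral_comp_neg_Iic t (fun y => h (-(lam * y)))
    simp only [mul_neg, neg_neg] at this
    exact this
  have s2 : (∫ y in Set.Ioi (-t), h (-(lam * y)))
      = lam⁻¹ * ∫ z in Set.Ioi (lam * -t), h (-z) := by
    have := MeasureTheory.integral_comp_mul_left_Ioi (fun z => h (-z)) (-t) hl
    rw [smul_eq_mul] at this
    exact this
  have s3 : (∫ z in Set.Ioi (lam * -t), h (-z)) = ∫ z in Set.Iic (lam * t), h z := by
    have := integral_comp_neg_Ioi (lam * -t) h
    rw [show -(lam * -t) = lam * t by ring] at this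
    exact this
  rw [s1, s2, s3]

lemma integral_exp_mul_Iic' (a : ℝ) {lam : ℝ} (hl : 0 < lam) :
    ∫ s in Set.Iic a, Real.exp (lam * s) = lam⁻¹ * Real.exp (lam * a) := by
  rw [integral_comp_mul_left_Iic' Real.exp a hl, integral_exp_Iic]

lemma integrableOn_exp_mul_Iic' {lam : ℝ} (a : ℝ) (hl : 1 ≤ lam) :
    IntegrableOn (fun s => Real.exp (lam * s)) (Set.Iic a) := by
  refine ((integrableOn_exp_Iic a).const_mul (Real.exp ((lam - 1) * a))).mono'
    ((Real.continuous_exp.comp (continuous_const.mul continuous_id)).aestronglyMeasurable) ?_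
  filter_upwards [ae_restrict_mem measurableSet_Iic] with s hs
  rw [Real.norm_eq_abs, abs_of_pos (Real.exp_pos _), ← Real.exp_add]
  apply Real.exp_le_exp.2
  have hs' : s ≤ a := hs
  nlinarith

set_option maxHeartbeats 1600000 in
/-- first boundary-layer step for `p*_λ`: if `x(t) = t + O(e^{-μλ})` on
`[-σ,σ]`, then `p(t) = -d - (1-η)σ + ∫_{-σ}^t (1 + g(e^{λx(s)})) ds` satisfies
`p(t) = -d + v₁(λt)/λ + O(λe^{-μλ})` uniformly on `[-σ,σ]`, where
`v₁(τ) = (1-η)τ + ∫_{-∞}^τ (g(eˢ)+η) ds`. -/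
theorem stmt_13 (η ξ C₀ : ℝ) (hη : 0 < η) (hξ : 0 < ξ) (hC₀ : 0 < C₀)
    (g : ℝ → ℝ) (hgc : ContinuousOn g (Set.Ici 0))
    (hgd : ∀ u : ℝ, 0 < u → DifferentiableAt ℝ g u)
    (hg0 : ∀ u ∈ Set.Ioc (0:ℝ) 1, |g u + η| ≤ C₀ * u)
    (hginf : ∀ u : ℝ, 1 ≤ u → |g u - ξ| ≤ C₀ / u)
    (hg' : ∀ u : ℝ, 0 < u → |deriv g u| ≤ C₀ / (1 + u ^ 2))
    (d σ μ C₁ : ℝ) (hσ : 0 < σ) (hμ : 0 < μ) (hμσ : μ ≤ σ) (hC₁ : 0 < C₁) :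
    ∃ C₂ > (0:ℝ), ∃ lam₀ > (0:ℝ), ∀ lam : ℝ, lam₀ ≤ lam →
      ∀ x : ℝ → ℝ, Measurable x →
        (∀ t ∈ Set.Icc (-σ) σ, |x t - t| ≤ C₁ * Real.exp (-μ * lam)) →
        ∀ t ∈ Set.Icc (-σ) σ,
          |(-d - (1 - η) * σ + ∫ s in (-σ)..t, (1 + g (Real.exp (lam * x s))))
              - (-d + ((1 - η) * (lam * t)
                  + ∫ s in Set.Iic (lam * t), (g (Real.exp s) + η)) / lam)|
            ≤ C₂ * lam * Real.exp (-μ * lam) := by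
  -- the boundary-layer function `G a = g (e^a)` and its properties
  set G : ℝ → ℝ := fun a => g (Real.exp a) with hGdef
  have hGd : ∀ a : ℝ, HasDerivAt G (deriv g (Real.exp a) * Real.exp a) a := by
    intro a
    exact ((hgd _ (Real.exp_pos a)).hasDerivAt).comp a (Real.hasDerivAt_exp a)
  have hGd_bd : ∀ a : ℝ, ‖deriv g (Real.exp a) * Real.exp a‖ ≤ C₀ / 2 := by
    intro a
    have h1 := hg' (Real.exp a) (Real.exp_pos a)
    have h2 : (0:ℝ) < Real.exp a := Real.exp_pos a
    have h3 : (0:ℝ) < 1 + (Real.exp a) ^ 2 := by positivity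
    rw [Real.norm_eq_abs, abs_mul, abs_of_pos h2]
    have h4 : |deriv g (Real.exp a)| * Real.exp a ≤ (C₀ / (1 + (Real.exp a) ^ 2)) * Real.exp a :=
      mul_le_mul_of_nonneg_right h1 h2.le
    refine h4.trans ?_
    rw [div_mul_eq_mul_div, div_le_div_iff₀ h3 two_pos]
    nlinarith [sq_nonneg (Real.exp a - 1)]
  have hGlip : ∀ a b : ℝ, |G a - G b| ≤ C₀ / 2 * |a - b| := by
    intro a b
    have := Convex.norm_image_sub_le_of_norm_hasDerivWithin_le
      (f := G) (f' := fun a => deriv g (Real.exp a) * Real.exp a) (s := Set.univ)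
      (fun z _ => (hGd z).hasDerivWithinAt) (fun z _ => hGd_bd z) convex_univ
      (Set.mem_univ b) (Set.mem_univ a)
    simpa [Real.norm_eq_abs] using this
  have hGcont : Continuous G := by
    have : Differentiable ℝ G := fun a => (hGd a).differentiableAt
    exact this.continuous
  have hGbd : ∀ a : ℝ, |G a| ≤ η + ξ + C₀ := by
    intro a
    have hu : (0:ℝ) < Real.exp a := Real.exp_pos a
    by_cases h : Real.exp a ≤ 1
    · have h1 := hg0 (Real.exp a) ⟨hu, h⟩
      have : |G a| ≤ |g (Real.exp a) + η| + η := by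
        have : G a = (g (Real.exp a) + η) + (-η) := by simp [hGdef]
        rw [this]
        calc |(g (Real.exp a) + η) + (-η)| ≤ |g (Real.exp a) + η| + |(-η)| := abs_add_le _ _
        _ = |g (Real.exp a) + η| + η := by rw [abs_neg, abs_of_pos hη]
      refine this.trans ?_
      have : C₀ * Real.exp a ≤ C₀ := by nlinarith
      nlinarith
    · push_neg at h
      have h1 := hginf (Real.exp a) h.le
      have h2 : C₀ / Real.exp a ≤ C₀ := by
        rw [div_le_iff₀ hu]; nlinarith
      have : |G a| ≤ |g (Real.exp a) - ξ| + ξ := by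
        have : G a = (g (Real.exp a) - ξ) + ξ := by simp [hGdef]
        rw [this]
        calc |(g (Real.exp a) - ξ) + ξ| ≤ |g (Real.exp a) - ξ| + |ξ| := abs_add_le _ _
        _ = |g (Real.exp a) - ξ| + ξ := by rw [abs_of_pos hξ]
      nlinarith
  refine ⟨σ * C₀ * C₁ + C₀, by positivity, 1, one_pos, ?_⟩
  intro lam hlam x hx hxb t ht
  obtain ⟨ht1, ht2⟩ := ht
  have hlam0 : (0:ℝ) < lam := lt_of_lt_of_le one_pos hlam
  set F : ℝ → ℝ := fun s => G (lam * x s) + η with hFdef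
  set H : ℝ → ℝ := fun s => G (lam * s) + η with hHdef
  have hHcont : Continuous H :=
    (hGcont.comp (continuous_const.mul continuous_id)).add continuous_const
  have hFmeas : Measurable F :=
    (hGcont.measurable.comp (measurable_const.mul hx)).add measurable_const
  have hFbd : ∀ s, ‖F s‖ ≤ (η + ξ + C₀) + η := by
    intro s
    rw [Real.norm_eq_abs]
    calc |G (lam * x s) + η| ≤ |G (lam * x s)| + |η| := abs_add_le _ _
    _ ≤ (η + ξ + C₀) + η := by
        have := hGbd (lam * x s); rw [abs_of_pos hη]; linarith
  have hFint : IntervalIntegrable F volume (-σ) t := by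
    rw [intervalIntegrable_iff]
    refine Integrable.mono' (g := fun _ => (η + ξ + C₀) + η) ?_
      (hFmeas.aestronglyMeasurable) (ae_of_all _ fun s => hFbd s)
    refine (integrableOn_const_iff).mpr (Or.inr ?_)
    rw [Set.uIoc]
    exact measure_Ioc_lt_top
  have hHintI : IntervalIntegrable H volume (-σ) t := hHcont.intervalIntegrable _ _
  -- integrability of H on half-lines
  have hHdom : ∀ s ∈ Set.Iic (-σ), ‖H s‖ ≤ C₀ * Real.exp (lam * s) := by
    intro s hs
    have hs' : s ≤ -σ := hs
    have h0 : lam * s ≤ 0 := by nlinarith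
    have := hg0 (Real.exp (lam * s)) ⟨Real.exp_pos _, Real.exp_le_one_iff.mpr h0⟩
    simpa [hHdef, hGdef, Real.norm_eq_abs] using this
  have hexpint : IntegrableOn (fun s => C₀ * Real.exp (lam * s)) (Set.Iic (-σ)) :=
    (integrableOn_exp_mul_Iic' (-σ) hlam).const_mul C₀
  have hHintIic : IntegrableOn H (Set.Iic (-σ)) := by
    refine hexpint.mono' hHcont.aestronglyMeasurable ?_
    filter_upwards [ae_restrict_mem measurableSet_Iic] with s hs
    exact hHdom s hs
  have hHintIict : IntegrableOn H (Set.Iic t) := by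
    have hsub : Set.Iic t ⊆ Set.Iic (-σ) ∪ Set.Icc (-σ) t := by
      intro s hs
      by_cases h : s ≤ -σ
      · exact Or.inl h
      · exact Or.inr ⟨le_of_not_ge h, hs⟩
    exact (hHintIic.union (hHcont.continuousOn.integrableOn_Icc)).mono_set hsub
  -- substitution
  have hsub : (∫ s in Set.Iic (lam * t), (g (Real.exp s) + η)) / lam
      = ∫ s in Set.Iic t, H s := by
    rw [div_eq_inv_mul, ← integral_comp_mul_left_Iic' (fun s => g (Real.exp s) + η) t hlam0]
  -- split Iic t
  have hsplit : ∫ s in Set.Iic t, H s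
      = (∫ s in Set.Iic (-σ), H s) + ∫ s in (-σ)..t, H s := by
    have := intervalIntegral.integral_Iic_sub_Iic hHintIic hHintIict
    linarith [this]
  -- rewrite the interval integral of the integrand
  have hFsplit : (∫ s in (-σ)..t, (1 + g (Real.exp (lam * x s))))
      = (1 - η) * (t + σ) + ∫ s in (-σ)..t, F s := by
    have h1 : (∫ s in (-σ)..t, (1 + g (Real.exp (lam * x s))))
        = ∫ s in (-σ)..t, ((1 - η) + F s) := by
      apply intervalIntegral.integral_congr
      intro s _
      simp only [hFdef, hGdef]; ring
    rw [h1, intervalIntegral.integral_add (intervalIntegrable_const) hFint,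
      intervalIntegral.integral_const, smul_eq_mul]
    ring
  -- the key algebraic identity for the difference
  have hdiff : (-d - (1 - η) * σ + ∫ s in (-σ)..t, (1 + g (Real.exp (lam * x s))))
      - (-d + ((1 - η) * (lam * t)
          + ∫ s in Set.Iic (lam * t), (g (Real.exp s) + η)) / lam)
      = (∫ s in (-σ)..t, (F s - H s)) - ∫ s in Set.Iic (-σ), H s := by
    rw [hFsplit, intervalIntegral.integral_sub hFint hHintI]
    have h2 : ((1 - η) * (lam * t) + ∫ s in Set.Iic (lam * t), (g (Real.exp s) + η)) / lam
        = (1 - η) * t + ((∫ s in Set.Iic (-σ), H s) + ∫ s in (-σ)..t, H s) := by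
      rw [add_div, hsub, hsplit]
      congr 1
      field_simp
    rw [h2]
    ring
  rw [hdiff]
  -- bound the two pieces
  have hb1 : |∫ s in (-σ)..t, (F s - H s)|
      ≤ (C₀ / 2 * (lam * (C₁ * Real.exp (-μ * lam)))) * |t - (-σ)| := by
    have := intervalIntegral.norm_integral_le_of_norm_le_const
      (C := C₀ / 2 * (lam * (C₁ * Real.exp (-μ * lam)))) (f := fun s => F s - H s)
      (a := -σ) (b := t) ?_
    · simpa [Real.norm_eq_abs] using this
    · intro s hs
      rw [Set.uIoc_of_le (by linarith : -σ ≤ t)] at hs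
      have hsmem : s ∈ Set.Icc (-σ) σ := ⟨hs.1.le, hs.2.trans ht2⟩
      have h1 : F s - H s = G (lam * x s) - G (lam * s) := by simp [hFdef, hHdef]
      show ‖F s - H s‖ ≤ C₀ / 2 * (lam * (C₁ * Real.exp (-μ * lam)))
      rw [Real.norm_eq_abs, h1]
      calc |G (lam * x s) - G (lam * s)| ≤ C₀ / 2 * |lam * x s - lam * s| := hGlip _ _
      _ = C₀ / 2 * (lam * |x s - s|) := by
          rw [← mul_sub, abs_mul, abs_of_pos hlam0]
      _ ≤ C₀ / 2 * (lam * (C₁ * Real.exp (-μ * lam))) := by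
          have := hxb s hsmem
          have h2 : lam * |x s - s| ≤ lam * (C₁ * Real.exp (-μ * lam)) :=
            mul_le_mul_of_nonneg_left this hlam0.le
          nlinarith [abs_nonneg (x s - s), Real.exp_pos (-μ * lam)]
  have hb2 : |∫ s in Set.Iic (-σ), H s| ≤ C₀ * lam * Real.exp (-μ * lam) := by
    have h1 : ‖∫ s in Set.Iic (-σ), H s‖ ≤ ∫ s in Set.Iic (-σ), C₀ * Real.exp (lam * s) := by
      refine MeasureTheory.norm_integral_le_of_norm_le hexpint ?_
      filter_upwards [ae_restrict_mem measurableSet_Iic] with s hs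
      exact hHdom s hs
    rw [Real.norm_eq_abs] at h1
    have h2 : ∫ s in Set.Iic (-σ), C₀ * Real.exp (lam * s)
        = C₀ * (lam⁻¹ * Real.exp (lam * (-σ))) := by
      rw [MeasureTheory.integral_const_mul, integral_exp_mul_Iic' (-σ) hlam0]
    rw [h2] at h1
    refine h1.trans ?_
    have h3 : Real.exp (lam * (-σ)) ≤ Real.exp (-μ * lam) := by
      apply Real.exp_le_exp.2; nlinarith
    have h4 : lam⁻¹ ≤ 1 := by
      rw [inv_le_one_iff₀]; right; exact hlam
    have key : lam⁻¹ * Real.exp (lam * (-σ)) ≤ lam * Real.exp (-μ * lam) := by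
      have a1 : lam⁻¹ * Real.exp (lam * (-σ)) ≤ 1 * Real.exp (-μ * lam) :=
        mul_le_mul h4 h3 (le_of_lt (Real.exp_pos _)) zero_le_one
      have a2 : (1:ℝ) * Real.exp (-μ * lam) ≤ lam * Real.exp (-μ * lam) := by
        have := Real.exp_pos (-μ * lam); nlinarith
      linarith
    have := mul_le_mul_of_nonneg_left key hC₀.le
    linarith [this]
  calc |(∫ s in (-σ)..t, (F s - H s)) - ∫ s in Set.Iic (-σ), H s|
      ≤ |∫ s in (-σ)..t, (F s - H s)| + |∫ s in Set.Iic (-σ), H s| := abs_sub _ _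
  _ ≤ (C₀ / 2 * (lam * (C₁ * Real.exp (-μ * lam)))) * |t - (-σ)|
      + C₀ * lam * Real.exp (-μ * lam) := add_le_add hb1 hb2
  _ ≤ (σ * C₀ * C₁ + C₀) * lam * Real.exp (-μ * lam) := by
      have habs : |t - (-σ)| ≤ 2 * σ := by
        rw [abs_le]; constructor <;> nlinarith
      have he := Real.exp_pos (-μ * lam)
      have h1 : (C₀ / 2 * (lam * (C₁ * Real.exp (-μ * lam)))) * |t - (-σ)|
          ≤ (C₀ / 2 * (lam * (C₁ * Real.exp (-μ * lam)))) * (2 * σ) := by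
        apply mul_le_mul_of_nonneg_left habs
        positivity
      nlinarith
end

section
/- Let η > 0, ξ > 0, α > 0, d₀ ∈ ℝ, and let g : [0,∞) → ℝ be continuous, differentiable on (0,∞), with C₀ > 0 satisfying |g(u) + η| ≤ C₀·u for u ∈ (0,1], |g(u) − ξ| ≤ C₀/u for u ≥ 1, and |g'(u)| ≤ C₀/(1+u²) for u > 0. Define v₂(τ) = (1+ξ)·τ + ∫_{−∞}^{τ} (g(e^{−α·s + d₀}) − ξ) ds. Let t₁ ∈ ℝ, σ > 0, 0 < μ ≤ min(σ, α·σ), and C₁ > 0. Then there exist constants C₂ > 0 and λ₀ > 0 such that for every λ ≥ λ₀ and every measurable function x : [t₁−σ, t₁+σ] → ℝ with |x(s) − (−α·(s − t₁) + d₀/λ)| ≤ C₁·e^{−μλ} for all s, one has |∫_{t₁−σ}^{t} (1 + g(e^{λ·x(s)})) ds − ((1+ξ)·σ + v₂(λ(t − t₁))/λ)| ≤ C₂·λ·e^{−μλ} for all t ∈ [t₁−σ, t₁+σ]. -/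
open Real MeasureTheory intervalIntegral Set Filter

lemma aux_exp_int_s14 {a : ℝ} (ha : 0 < a) (c : ℝ) :
    IntegrableOn (fun τ : ℝ => Real.exp (a * τ)) (Set.Iic c) := by
  refine integrableOn_Iic_of_intervalIntegral_norm_bounded (Real.exp (a * c) / a) c
    (fun y : ℝ => ?_) tendsto_id ?_
  · exact (Real.continuous_exp.comp (continuous_const.mul continuous_id)).integrableOn_Ioc
  · filter_upwards with y
    simp only [id_eq]
    have h1 : (∫ x in y..c, ‖Real.exp (a * x)‖) = ∫ x in y..c, Real.exp (a * x) := by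
      simp [Real.norm_eq_abs, abs_of_pos (Real.exp_pos _)]
    rw [h1, intervalIntegral.integral_comp_mul_left Real.exp ha.ne', integral_exp,
      smul_eq_mul]
    have h2 : 0 < Real.exp (a * y) := Real.exp_pos _
    rw [inv_mul_eq_div, div_le_div_iff_of_pos_right ha]
    linarith

lemma aux_exp_val {a : ℝ} (ha : 0 < a) (c : ℝ) :
    ∫ τ in Set.Iic c, Real.exp (a * τ) = Real.exp (a * c) / a := by
  have h1 : ∀ x ∈ Set.Iio c, HasDerivAt (fun τ => Real.exp (a * τ) / a)
      (Real.exp (a * x)) x := by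
    intro x _
    have h := ((Real.hasDerivAt_exp (a * x)).comp x
      ((hasDerivAt_id x).const_mul a)).div_const a
    simpa [mul_one, mul_div_assoc, mul_div_cancel_right₀ _ ha.ne'] using h
  have hcont : ContinuousWithinAt (fun τ => Real.exp (a * τ) / a) (Set.Iic c) c :=
    ((Real.continuous_exp.comp (continuous_const.mul continuous_id)).div_const a).continuousWithinAt
  have htend : Tendsto (fun τ => Real.exp (a * τ) / a) atBot (nhds 0) := by
    have h2 : Tendsto (fun τ : ℝ => a * τ) atBot atBot := by
      exact Tendsto.const_mul_atBot ha tendsto_id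
    simpa using (Real.tendsto_exp_atBot.comp h2).div_const a
  have := MeasureTheory.integral_Iic_of_hasDerivAt_of_tendsto hcont h1 (aux_exp_int_s14 ha c) htend
  simpa [sub_zero] using this

lemma aux_ii {f : ℝ → ℝ} (hf : Measurable f) {M : ℝ} (hM : ∀ s, |f s| ≤ M) (a b : ℝ) :
    IntervalIntegrable f volume a b := by
  rw [intervalIntegrable_iff]
  refine Integrable.mono' (g := fun _ : ℝ => M)
    (integrableOn_const measure_Ioc_lt_top.ne) hf.aestronglyMeasurable
    (ae_of_all _ fun s => by simpa [Real.norm_eq_abs] using hM s)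

set_option maxHeartbeats 800000 in
/-- boundary-layer step for `p*_λ` near the decreasing zero crossing `t₁`:
if `x(s) = -α(s-t₁) + d₀/λ + O(e^{-μλ})` on `[t₁-σ, t₁+σ]`, then
`∫_{t₁-σ}^t (1 + g(e^{λx(s)})) ds = (1+ξ)σ + v₂(λ(t-t₁))/λ + O(λe^{-μλ})` uniformly,
where `v₂(τ) = (1+ξ)τ + ∫_{-∞}^τ (g(e^{-αs+d₀})-ξ) ds`. -/
theorem stmt_14 (η ξ α d₀ C₀ : ℝ) (hη : 0 < η) (hξ : 0 < ξ) (hα : 0 < α) (hC₀ : 0 < C₀)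
    (g : ℝ → ℝ) (hgc : ContinuousOn g (Set.Ici 0))
    (hgd : ∀ u : ℝ, 0 < u → DifferentiableAt ℝ g u)
    (hg0 : ∀ u ∈ Set.Ioc (0:ℝ) 1, |g u + η| ≤ C₀ * u)
    (hginf : ∀ u : ℝ, 1 ≤ u → |g u - ξ| ≤ C₀ / u)
    (hg' : ∀ u : ℝ, 0 < u → |deriv g u| ≤ C₀ / (1 + u ^ 2))
    (t₁ σ μ C₁ : ℝ) (hσ : 0 < σ) (hμ : 0 < μ) (hμσ : μ ≤ min σ (α * σ)) (hC₁ : 0 < C₁) :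
    ∃ C₂ > (0:ℝ), ∃ lam₀ > (0:ℝ), ∀ lam : ℝ, lam₀ ≤ lam →
      ∀ x : ℝ → ℝ, Measurable x →
        (∀ s ∈ Set.Icc (t₁ - σ) (t₁ + σ),
          |x s - (-α * (s - t₁) + d₀ / lam)| ≤ C₁ * Real.exp (-μ * lam)) →
        ∀ t ∈ Set.Icc (t₁ - σ) (t₁ + σ),
          |(∫ s in (t₁ - σ)..t, (1 + g (Real.exp (lam * x s))))
              - ((1 + ξ) * σ + ((1 + ξ) * (lam * (t - t₁))
                  + ∫ s in Set.Iic (lam * (t - t₁)),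
                      (g (Real.exp (-α * s + d₀)) - ξ)) / lam)|
            ≤ C₂ * lam * Real.exp (-μ * lam) := by
  -- the composite G = g ∘ exp and its basic properties
  set G : ℝ → ℝ := fun u => g (Real.exp u) with hG
  have hGdiff : Differentiable ℝ G := fun u =>
    DifferentiableAt.comp u (hgd _ (Real.exp_pos u)) (Real.differentiable_exp u)
  have hGlipW : LipschitzWith C₀.toNNReal G := by
    refine lipschitzWith_of_nnnorm_deriv_le hGdiff fun u => ?_
    have h1 : HasDerivAt G (deriv g (Real.exp u) * Real.exp u) u :=
      ((hgd _ (Real.exp_pos u)).hasDerivAt).comp u (Real.hasDerivAt_exp u)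
    rw [h1.deriv, ← NNReal.coe_le_coe]
    have he : (0:ℝ) < Real.exp u := Real.exp_pos u
    have h2 := hg' (Real.exp u) he
    have h3 : (0:ℝ) < 1 + Real.exp u ^ 2 := by positivity
    have h4 : |deriv g (Real.exp u)| * Real.exp u ≤ C₀ := by
      have h5 : |deriv g (Real.exp u)| * Real.exp u ≤ (C₀ / (1 + Real.exp u ^ 2)) * Real.exp u :=
        mul_le_mul_of_nonneg_right h2 he.le
      refine h5.trans ?_
      rw [div_mul_eq_mul_div, div_le_iff₀ h3]
      nlinarith [sq_nonneg (Real.exp u - 1), he.le, hC₀.le]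
    simpa [coe_nnnorm, Real.norm_eq_abs, Real.coe_toNNReal _ hC₀.le] using h4
  have hGlip : ∀ u v : ℝ, |G u - G v| ≤ C₀ * |u - v| := by
    intro u v
    have := hGlipW.dist_le_mul u v
    simpa [Real.dist_eq, Real.coe_toNNReal _ hC₀.le] using this
  set M : ℝ := C₀ + η + ξ with hM
  have hGbd : ∀ u : ℝ, |G u| ≤ M := by
    intro u
    rcases le_or_gt (Real.exp u) 1 with h | h
    · have h1 := hg0 (Real.exp u) ⟨Real.exp_pos u, h⟩
      have h2 : C₀ * Real.exp u ≤ C₀ := by nlinarith [Real.exp_pos u]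
      rw [abs_le] at h1 ⊢
      constructor <;> [skip; skip] <;> simp only [hM, hG] <;> linarith [h1.1, h1.2]
    · have h1 := hginf (Real.exp u) h.le
      have h2 : C₀ / Real.exp u ≤ C₀ := by
        rw [div_le_iff₀ (Real.exp_pos u)]; nlinarith
      rw [abs_le] at h1 ⊢
      constructor <;> [skip; skip] <;> simp only [hM, hG] <;> linarith [h1.1, h1.2]
  -- the boundary-layer integrand
  set h : ℝ → ℝ := fun τ => g (Real.exp (-α * τ + d₀)) - ξ with hh
  have hhcont : Continuous h := by
    have : h = fun τ => G (-α * τ + d₀) - ξ := rfl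
    rw [this]
    exact (hGlipW.continuous.comp (by continuity)).sub continuous_const
  have hhbd : ∀ τ, |h τ| ≤ M + ξ := fun τ =>
    (abs_sub _ _).trans (by
      have := hGbd (-α * τ + d₀)
      rw [abs_of_pos hξ]
      linarith)
  -- pointwise exponential bound on the tail
  have hhtailbd : ∀ τ : ℝ, τ ≤ d₀ / α → |h τ| ≤ C₀ * Real.exp (-d₀) * Real.exp (α * τ) := by
    intro τ hτ
    have h0 : α * τ ≤ d₀ := by
      have := (le_div_iff₀ hα).mp hτ
      linarith [this]
    have h1 : (1:ℝ) ≤ Real.exp (-α * τ + d₀) := Real.one_le_exp (by linarith)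
    have h2 := hginf _ h1
    have h3 : C₀ / Real.exp (-α * τ + d₀) = C₀ * Real.exp (-d₀) * Real.exp (α * τ) := by
      rw [div_eq_mul_inv, ← Real.exp_neg, mul_assoc, ← Real.exp_add]
      congr 2
      ring
    rw [← h3]
    exact h2
  -- integrability of h on every Iic
  have hhint : ∀ c : ℝ, IntegrableOn h (Set.Iic c) := by
    intro c
    set m : ℝ := min c (d₀ / α) with hm
    have hsub : Set.Iic c ⊆ Set.Iic m ∪ Set.Icc m c := by
      intro τ hτ
      rcases le_or_gt τ m with h' | h'
      · exact Or.inl h'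
      · exact Or.inr ⟨h'.le, hτ⟩
    have h1 : IntegrableOn h (Set.Iic m) := by
      refine Integrable.mono' (((aux_exp_int_s14 hα m).const_mul (C₀ * Real.exp (-d₀))))
        hhcont.aestronglyMeasurable.restrict ?_
      filter_upwards [ae_restrict_mem measurableSet_Iic] with τ hτ
      have hτ' : τ ≤ d₀ / α := le_trans hτ (min_le_right _ _)
      have := hhtailbd τ hτ'
      simpa [Real.norm_eq_abs, mul_assoc] using this
    have h2 : IntegrableOn h (Set.Icc m c) := hhcont.integrableOn_Icc
    exact (h1.union h2).mono_set hsub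
  -- tail bound
  have htail : ∀ c : ℝ, c ≤ d₀ / α →
      |∫ τ in Set.Iic c, h τ| ≤ C₀ * Real.exp (-d₀) / α * Real.exp (α * c) := by
    intro c hc
    have hb : ∀ᵐ τ ∂(volume.restrict (Set.Iic c)),
        ‖h τ‖ ≤ C₀ * Real.exp (-d₀) * Real.exp (α * τ) := by
      filter_upwards [ae_restrict_mem measurableSet_Iic] with τ hτ
      simpa [Real.norm_eq_abs] using hhtailbd τ (hτ.trans hc)
    have h1 := norm_integral_le_of_norm_le
      (((aux_exp_int_s14 hα c).const_mul (C₀ * Real.exp (-d₀)))) hb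
    rw [Real.norm_eq_abs] at h1
    calc |∫ τ in Set.Iic c, h τ| ≤ ∫ τ in Set.Iic c, C₀ * Real.exp (-d₀) * Real.exp (α * τ) := h1
      _ = C₀ * Real.exp (-d₀) * (Real.exp (α * c) / α) := by
          rw [MeasureTheory.integral_const_mul, aux_exp_val hα]
      _ = C₀ * Real.exp (-d₀) / α * Real.exp (α * c) := by ring
  -- constants
  set K : ℝ := C₀ * Real.exp (-d₀) / α with hK
  have hKpos : 0 < K := by positivity
  refine ⟨2 * σ * C₀ * C₁ + K + 1, by positivity, max 1 (-d₀ / (α * σ)), lt_of_lt_of_le one_pos (le_max_left _ _), ?_⟩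
  intro lam hlam x hx hxb t ht
  have hlam1 : (1:ℝ) ≤ lam := le_trans (le_max_left _ _) hlam
  have hlam0 : (0:ℝ) < lam := lt_of_lt_of_le one_pos hlam1
  have hlamne : lam ≠ 0 := hlam0.ne'
  have hd : -d₀ / (α * σ) ≤ lam := le_trans (le_max_right _ _) hlam
  have hcrit : -(lam * σ) ≤ d₀ / α := by
    rw [le_div_iff₀ hα]
    have := (div_le_iff₀ (by positivity : (0:ℝ) < α * σ)).mp hd
    nlinarith
  obtain ⟨hta, htb⟩ := ht
  set a : ℝ := t₁ - σ with ha
  set T : ℝ := lam * (t - t₁) with hT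
  set ee : ℝ := Real.exp (-μ * lam) with hee
  have heepos : 0 < ee := Real.exp_pos _
  set L : ℝ → ℝ := fun s => -α * (s - t₁) + d₀ / lam with hL
  have hkey : ∀ s : ℝ, lam * L s = -α * (lam * (s - t₁)) + d₀ := by
    intro s
    rw [hL]
    field_simp
  -- the two integrands
  set f₁ : ℝ → ℝ := fun s => 1 + g (Real.exp (lam * x s)) with hf₁
  set f₂ : ℝ → ℝ := fun s => 1 + g (Real.exp (lam * L s)) with hf₂
  have hf₁m : Measurable f₁ :=
    measurable_const.add (hGlipW.continuous.measurable.comp (measurable_const.mul hx))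
  have hLm : Measurable L := ((measurable_id.sub measurable_const).const_mul (-α)).add measurable_const
  have hf₂m : Measurable f₂ :=
    measurable_const.add (hGlipW.continuous.measurable.comp (measurable_const.mul hLm))
  have hf₁bd : ∀ s, |f₁ s| ≤ 1 + M := fun s =>
    (abs_add_le _ _).trans (by simpa using add_le_add_left (hGbd (lam * x s)) 1)
  have hf₂bd : ∀ s, |f₂ s| ≤ 1 + M := fun s =>
    (abs_add_le _ _).trans (by simpa using add_le_add_left (hGbd (lam * L s)) 1)
  have hI1 : IntervalIntegrable f₁ volume a t := aux_ii hf₁m hf₁bd a t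
  have hI2 : IntervalIntegrable f₂ volume a t := aux_ii hf₂m hf₂bd a t
  -- Step 1 : comparison of f₁ and f₂
  have step1 : |(∫ s in a..t, f₁ s) - ∫ s in a..t, f₂ s| ≤ C₀ * lam * (C₁ * ee) * (2 * σ) := by
    rw [← intervalIntegral.integral_sub hI1 hI2]
    have hb : ∀ s ∈ Set.uIoc a t, ‖f₁ s - f₂ s‖ ≤ C₀ * lam * (C₁ * ee) := by
      intro s hs
      have hs' : s ∈ Set.Icc (t₁ - σ) (t₁ + σ) := by
        rcases Set.uIoc_subset_uIcc hs with h'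
        rw [Set.uIcc_of_le (by linarith : a ≤ t)] at h'
        exact ⟨by simpa [ha] using h'.1.trans_eq' rfl, h'.2.trans htb⟩
      have h1 : |x s - L s| ≤ C₁ * ee := hxb s hs'
      have h2 : f₁ s - f₂ s = G (lam * x s) - G (lam * L s) := by
        simp [hf₁, hf₂, hG]
      rw [Real.norm_eq_abs, h2]
      calc |G (lam * x s) - G (lam * L s)| ≤ C₀ * |lam * x s - lam * L s| := hGlip _ _
        _ = C₀ * lam * |x s - L s| := by
            rw [← mul_sub, abs_mul, abs_of_pos hlam0]; ring
        _ ≤ C₀ * lam * (C₁ * ee) := by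
            have : (0:ℝ) ≤ C₀ * lam := by positivity
            exact mul_le_mul_of_nonneg_left h1 this
    have := intervalIntegral.norm_integral_le_of_norm_le_const hb
    rw [Real.norm_eq_abs] at this
    refine this.trans ?_
    have h3 : |t - a| ≤ 2 * σ := by
      rw [abs_of_nonneg (by linarith)]
      simp only [ha]
      linarith
    exact mul_le_mul_of_nonneg_left h3 (by positivity)
  -- Step 2 : computation of ∫ f₂
  have hcomp : Continuous fun s : ℝ => h (lam * (s - t₁)) :=
    hhcont.comp (continuous_const.mul (continuous_id.sub continuous_const))
  have step2 : (∫ s in a..t, f₂ s) = (1 + ξ) * (t - a) + lam⁻¹ * ∫ τ in (-(lam * σ))..T, h τ := by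
    have he1 : ∀ s : ℝ, f₂ s = (1 + ξ) + h (lam * (s - t₁)) := by
      intro s
      simp only [hf₂, hh]
      rw [hkey s]
      ring
    rw [intervalIntegral.integral_congr (g := fun s => (1 + ξ) + h (lam * (s - t₁)))
      (fun s _ => he1 s)]
    rw [intervalIntegral.integral_add (intervalIntegrable_const) (hcomp.intervalIntegrable a t)]
    rw [intervalIntegral.integral_const, smul_eq_mul]
    have he2 : (fun s : ℝ => h (lam * (s - t₁))) = fun s : ℝ => (fun y => h (y - lam * t₁)) (lam * s) := by
      funext s
      congr 1
      ring
    rw [he2, intervalIntegral.integral_comp_mul_left (fun y => h (y - lam * t₁)) hlamne,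
      intervalIntegral.integral_comp_sub_right _ (lam * t₁), smul_eq_mul]
    have he3 : lam * a - lam * t₁ = -(lam * σ) := by rw [ha]; ring
    have he4 : lam * t - lam * t₁ = T := by rw [hT]; ring
    rw [he3, he4]
    ring
  -- Step 3 : from interval integral to Iic integral
  have step3 : (∫ τ in (-(lam * σ))..T, h τ)
      = (∫ τ in Set.Iic T, h τ) - ∫ τ in Set.Iic (-(lam * σ)), h τ :=
    (integral_Iic_sub_Iic (hhint _) (hhint _)).symm
  -- Step 4 : tail bound
  have step4 : |∫ τ in Set.Iic (-(lam * σ)), h τ| ≤ K * ee := by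
    have h1 := htail _ hcrit
    refine h1.trans ?_
    rw [hK, hee]
    have h2 : α * -(lam * σ) ≤ -μ * lam := by
      have hμ2 : μ ≤ α * σ := le_trans hμσ (min_le_right _ _)
      nlinarith
    have := Real.exp_le_exp.mpr h2
    have h4 : (0:ℝ) ≤ C₀ * Real.exp (-d₀) / α := by positivity
    exact mul_le_mul_of_nonneg_left this h4
  -- assembly
  set I1 : ℝ := ∫ τ in Set.Iic T, h τ with hI1d
  set I2 : ℝ := ∫ τ in Set.Iic (-(lam * σ)), h τ with hI2d
  have hgoal1 : (∫ s in a..t, f₂ s) - ((1 + ξ) * σ + ((1 + ξ) * T + I1) / lam) = -(I2 / lam) := by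
    rw [step2, step3, hT, ha]
    field_simp
    ring
  have expand : (∫ s in a..t, f₁ s) - ((1 + ξ) * σ + ((1 + ξ) * T + I1) / lam)
      = ((∫ s in a..t, f₁ s) - ∫ s in a..t, f₂ s) + (-(I2 / lam)) := by
    rw [← hgoal1]
    ring
  rw [expand]
  have habs : |((∫ s in a..t, f₁ s) - ∫ s in a..t, f₂ s) + (-(I2 / lam))|
      ≤ C₀ * lam * (C₁ * ee) * (2 * σ) + K * ee / lam := by
    refine (abs_add_le _ _).trans ?_
    have h5 : |-(I2 / lam)| ≤ K * ee / lam := by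
      rw [abs_neg, abs_div, abs_of_pos hlam0]
      gcongr
    exact add_le_add step1 h5
  refine habs.trans ?_
  have h8 : (1:ℝ) ≤ lam * lam := by
    have := mul_le_mul hlam1 hlam1 zero_le_one hlam0.le
    simpa using this
  have h6 : K * ee / lam ≤ K * (lam * ee) := by
    rw [div_le_iff₀ hlam0]
    calc K * ee = K * ee * 1 := by ring
      _ ≤ K * ee * (lam * lam) := mul_le_mul_of_nonneg_left h8 (by positivity)
      _ = K * (lam * ee) * lam := by ring
  have h9 : C₀ * lam * (C₁ * ee) * (2 * σ) + K * ee / lam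
      ≤ (2 * σ * C₀ * C₁) * (lam * ee) + K * (lam * ee) := by
    have h10 : C₀ * lam * (C₁ * ee) * (2 * σ) = (2 * σ * C₀ * C₁) * (lam * ee) := by ring
    linarith
  refine h9.trans ?_
  have h11 : (0:ℝ) ≤ lam * ee := by positivity
  calc (2 * σ * C₀ * C₁) * (lam * ee) + K * (lam * ee)
      = (2 * σ * C₀ * C₁ + K) * (lam * ee) := by ring
    _ ≤ (2 * σ * C₀ * C₁ + K + 1) * (lam * ee) := by
        exact mul_le_mul_of_nonneg_right (by linarith) h11
    _ = (2 * σ * C₀ * C₁ + K + 1) * lam * ee := by ring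
end
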